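/- arXiv:2406.17593 — 10 statements merged into one kernel-verified Lean document; each statement's English description precedes it below -/
import Mathlib

section
/- Let B ⊆ ℕ be an infinite set with ∑_{n∈B} 1/n < ∞. Then the set of subsets A of B for which ∑_{n∈A} 1/n is rational is a countable union of nowhere dense sets (i.e., is meagre) in the Cantor space {0,1}^B with the product topology. -/
/-!
The map `A ↦ ∑_{n ∈ A} 1/n` is continuous on the Cantor space, so each of its fibres is closed.
A fibre has empty interior: a basic open set only constrains finitely many coordinates, and
toggling any other coordinate `n ≠ 0` changes the sum by `± 1/n`. Hence the preimage of the
countable set `ℚ` is a countable union of closed nowhere dense sets.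
-/

open Function Set

theorem isMeagre_preimage_of_interior_fiber_eq_empty {X Y : Type*} [TopologicalSpace X]
    [TopologicalSpace Y] [T1Space Y] {f : X → Y} (hf : Continuous f)
    (hfib : ∀ y, interior (f ⁻¹' {y}) = ∅) {s : Set Y} (hs : s.Countable) :
    IsMeagre (f ⁻¹' s) := by
  rw [← biUnion_of_singleton s, preimage_iUnion₂]
  refine isMeagre_biUnion hs fun y _ => IsNowhereDense.isMeagre ?_
  exact ((isClosed_singleton.preimage hf).isNowhereDense_iff).2 (hfib y)

section SubsetSum

variable {ι : Type*} {w : ι → ℝ}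

noncomputable def subsetSum (w : ι → ℝ) (A : ι → Bool) : ℝ :=
  ∑' n, if A n then w n else 0

theorem summable_ite_of_summable (hw : Summable w) (A : ι → Bool) :
    Summable fun n => if A n then w n else 0 :=
  hw.abs.of_norm_bounded fun n => by split_ifs <;> simp

theorem continuous_subsetSum (hw : Summable w) : Continuous (subsetSum w) := by
  refine continuous_tsum (fun n => ?_) hw.abs fun n A => by split_ifs <;> simp
  exact (continuous_of_discreteTopology (f := fun b : Bool => if b then w n else 0)).comp
    (continuous_apply n)

theorem subsetSum_update_not_ne [DecidableEq ι] (hw : Summable w) {i : ι} (hi : w i ≠ 0)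
    (A : ι → Bool) : subsetSum w (update A i (!A i)) ≠ subsetSum w A := by
  have hrest : ∀ n, (if n = i then 0 else if update A i (!A i) n then w n else 0) =
      if n = i then 0 else if A n then w n else 0 := fun n => by
    split_ifs with h <;> simp_all [update_of_ne]
  intro h
  rw [subsetSum, subsetSum, (summable_ite_of_summable hw _).tsum_eq_add_tsum_ite i,
    (summable_ite_of_summable hw _).tsum_eq_add_tsum_ite i, tsum_congr hrest] at h
  rw [update_self, add_left_inj] at h
  cases hAi : A i <;> simp [hAi, hi, hi.symm] at h

theorem interior_subsetSum_preimage_singleton_eq_empty [DecidableEq ι] (hw : Summable w)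
    (hinf : {i | w i ≠ 0}.Infinite) (c : ℝ) : interior (subsetSum w ⁻¹' {c}) = ∅ := by
  refine eq_empty_of_forall_notMem fun A hA => ?_
  obtain ⟨I, u, hu, hIu⟩ := isOpen_pi_iff.mp isOpen_interior A hA
  obtain ⟨i, hwi, hiI⟩ := (hinf.sdiff I.finite_toSet).nonempty
  have hflip : update A i (!A i) ∈ subsetSum w ⁻¹' {c} := by
    refine interior_subset (hIu fun j hj => ?_)
    rw [update_of_ne (by rintro rfl; exact hiI hj)]
    exact (hu j hj).2
  exact subsetSum_update_not_ne hw hwi A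
    (hflip.trans (interior_subset (s := subsetSum w ⁻¹' {c}) hA).symm)

end SubsetSum

open scoped Classical

/-- The set of subsets `A` of `B` for which `∑_{n ∈ A} 1/n` is rational is meagre
in the Cantor space `{0,1}^B`. -/
theorem stmt_0 (B : Set ℕ) (hB : B.Infinite)
    (hsum : Summable fun n : B => (1 : ℝ) / (n : ℕ)) :
    IsMeagre {A : B → Bool |
      ∃ q : ℚ, ∑' n : B, (if A n then (1 : ℝ) / (n : ℕ) else 0) = q} := by
  have hinf : {n : B | (1 : ℝ) / (n : ℕ) ≠ 0}.Infinite := by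
    have : Infinite B := hB.to_subtype
    refine ((subsingleton_singleton (a := (0 : ℕ))).preimage Subtype.val_injective
      ).finite.infinite_compl.mono fun n hn => ?_
    simpa using hn
  have hset : {A : B → Bool | ∃ q : ℚ, ∑' n : B, (if A n then (1 : ℝ) / (n : ℕ) else 0) = q} =
      subsetSum (fun n : B => (1 : ℝ) / (n : ℕ)) ⁻¹' range ((↑) : ℚ → ℝ) := by
    ext A
    exact exists_congr fun _ => eq_comm
  rw [hset]
  exact isMeagre_preimage_of_interior_fiber_eq_empty (continuous_subsetSum hsum)
    (interior_subsetSum_preimage_singleton_eq_empty hsum hinf) (countable_range _)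
end

section
/- Let A, B ⊆ ℕ with B infinite and ∑_{n∈A∪B} 1/n < ∞. Let B' be a random subset of B where each n ∈ B belongs to B' independently with probability 1/2, and let A' = A Δ B' (symmetric difference). Then with probability 1 the sum ∑_{n∈A'} 1/n is irrational. -/
open scoped Classical ENNReal
open MeasureTheory

namespace Stmt2Aux

variable (A B : Set ℕ)

/-- The summand. -/
noncomputable def term (x : B → Bool) (n : ℕ) : ℝ :=
  if ¬((n ∈ A) ↔ ∃ h : n ∈ B, x ⟨n, h⟩ = true) then (1 : ℝ) / n else 0

/-- The random sum. -/
noncomputable def S (x : B → Bool) : ℝ := ∑' n : ℕ, term A B x n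

lemma term_nonneg (x : B → Bool) (n : ℕ) : 0 ≤ term A B x n := by
  unfold term; split <;> positivity

lemma term_le (x : B → Bool) (n : ℕ) :
    term A B x n ≤ Set.indicator (A ∪ B) (fun n => (1 : ℝ) / n) n := by
  unfold term; split
  · rename_i h
    have hn : n ∈ A ∪ B := by
      by_cases hA : n ∈ A
      · exact Or.inl hA
      · have hp : ∃ h : n ∈ B, x ⟨n, h⟩ = true := by tauto
        exact Or.inr hp.1
    rw [Set.indicator_of_mem hn]
  · exact Set.indicator_apply_nonneg (fun _ => by positivity)

variable {A B} in
lemma summable_term (hsum : Summable fun n : (A ∪ B : Set ℕ) => (1 : ℝ) / (n : ℕ))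
    (x : B → Bool) : Summable (term A B x) := by
  have h1 : Summable (Set.indicator (A ∪ B) fun n => (1 : ℝ) / n) :=
    summable_subtype_iff_indicator.mp hsum
  exact Summable.of_nonneg_of_le (term_nonneg A B x) (term_le A B x) h1

lemma measurable_term (n : ℕ) : Measurable fun x : B → Bool => term A B x n := by
  unfold term
  by_cases hn : n ∈ B
  · have he : ∀ x : B → Bool, (∃ h : n ∈ B, x ⟨n, h⟩ = true) ↔ x ⟨n, hn⟩ = true :=
      fun x => ⟨fun ⟨_, hx⟩ => hx, fun h => ⟨hn, h⟩⟩
    simp only [he]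
    by_cases hA : n ∈ A
    · simp only [hA, true_iff]
      have : MeasurableSet {x : B → Bool | ¬ x ⟨n, hn⟩ = true} :=
        by
        have := (measurable_pi_apply (X := fun _ : B => Bool) ⟨n, hn⟩) (MeasurableSet.of_discrete (s := ({false} : Set Bool)))
        convert this using 1; ext x; simp [Bool.not_eq_true]
      exact Measurable.ite this measurable_const measurable_const
    · simp only [hA, false_iff, not_not]
      have : MeasurableSet {x : B → Bool | x ⟨n, hn⟩ = true} := by
        have := (measurable_pi_apply (X := fun _ : B => Bool) ⟨n, hn⟩) (MeasurableSet.of_discrete (s := ({true} : Set Bool)))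
        exact this
      exact Measurable.ite this measurable_const measurable_const
  · have he : ∀ x : B → Bool, (∃ h : n ∈ B, x ⟨n, h⟩ = true) ↔ False :=
      fun x => ⟨fun ⟨h, _⟩ => hn h, False.elim⟩
    simp only [he]
    exact measurable_const.ite (by
      by_cases hA : n ∈ A <;> simp [hA] <;> first | exact MeasurableSet.univ | exact MeasurableSet.empty) measurable_const

variable {A B} in
lemma measurable_S (hsum : Summable fun n : (A ∪ B : Set ℕ) => (1 : ℝ) / (n : ℕ)) :
    Measurable (S A B) := by
  apply measurable_of_tendsto_metrizable
    (f := fun k (x : B → Bool) => ∑ n ∈ Finset.range k, term A B x n)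
    (fun k => Finset.measurable_sum _ fun n _ => measurable_term A B n)
  rw [tendsto_pi_nhds]
  intro x
  exact (summable_term hsum x).hasSum.tendsto_sum_nat



/-- Cylinder sets. -/
def Cyl : Set (Set (B → Bool)) :=
  {C | ∃ (T : Finset B) (ε : B → Bool), C = {x | ∀ n ∈ T, x n = ε n}}

lemma isPiSystem_Cyl : IsPiSystem (Cyl B) := by
  rintro _ ⟨T, ε, rfl⟩ _ ⟨T', ε', rfl⟩ ⟨x₀, hx₀⟩
  obtain ⟨h₁, h₂⟩ := hx₀
  refine ⟨T ∪ T', fun n => if n ∈ T then ε n else ε' n, ?_⟩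
  ext x
  simp only [Set.mem_inter_iff, Set.mem_setOf_eq, Finset.mem_union]
  constructor
  · rintro ⟨hT, hT'⟩ n hn
    by_cases h : n ∈ T
    · simp [h, hT n h]
    · simp [h, hT' n (hn.resolve_left h)]
  · intro h
    constructor
    · intro n hn
      have := h n (Or.inl hn); simpa [hn] using this
    · intro n hn
      have := h n (Or.inr hn)
      by_cases hT : n ∈ T
      · have hx : x n = ε n := by simpa [hT] using this
        rw [hx, ← h₁ n hT, h₂ n hn]
      · simpa [hT] using this

lemma cyl_measurableSet {C : Set (B → Bool)} (hC : C ∈ Cyl B) : MeasurableSet C := by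
  obtain ⟨T, ε, rfl⟩ := hC
  have : {x : B → Bool | ∀ n ∈ T, x n = ε n} = ⋂ n ∈ T, (fun x : B → Bool => x n) ⁻¹' {ε n} := by
    ext x; simp
  rw [this]
  exact MeasurableSet.biInter T.countable_toSet fun n _ =>
    (measurable_pi_apply (X := fun _ : B => Bool) n) MeasurableSet.of_discrete

lemma generateFrom_Cyl :
    (by infer_instance : MeasurableSpace (B → Bool)) = MeasurableSpace.generateFrom (Cyl B) := by
  apply le_antisymm
  · rw [show (inferInstance : MeasurableSpace (B → Bool)) = MeasurableSpace.pi from rfl,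
      MeasurableSpace.pi]
    refine iSup_le fun a => ?_
    rw [← measurable_iff_comap_le]
    intro s _
    have : (fun x : B → Bool => x a) ⁻¹' s = ⋃ b ∈ s, {x : B → Bool | ∀ n ∈ ({a} : Finset B), x n = (fun _ => b) n} := by
      ext x
      simp only [Set.mem_preimage, Set.mem_iUnion, Set.mem_setOf_eq, Finset.mem_singleton,
        exists_prop]
      constructor
      · intro h; exact ⟨x a, h, fun n hn => by subst hn; rfl⟩
      · rintro ⟨b, hb, hx⟩; have := hx a rfl; rwa [this]
    rw [this]
    exact MeasurableSet.biUnion s.to_countable fun b _ =>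
      MeasurableSpace.measurableSet_generateFrom ⟨{a}, fun _ => b, rfl⟩
  · rw [MeasurableSpace.generateFrom_le_iff]
    intro C hC
    exact cyl_measurableSet B hC

/-- Flip the coordinates in `U`. -/
def flip (U : Finset B) (x : B → Bool) : B → Bool := fun n => if n ∈ U then !(x n) else x n

lemma measurable_flip (U : Finset B) : Measurable (flip B U) := by
  rw [measurable_pi_iff]
  intro n
  by_cases h : n ∈ U
  · simp only [flip, h, if_true]
    exact (measurable_of_countable Bool.not).comp (measurable_pi_apply _)
  · simp only [flip, h, if_false]
    exact measurable_pi_apply _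

lemma flip_flip (U : Finset B) (x : B → Bool) : flip B U (flip B U x) = x := by
  funext n; simp only [flip]; by_cases h : n ∈ U <;> simp [h]

lemma flip_preimage_cyl (U T : Finset B) (ε : B → Bool) :
    flip B U ⁻¹' {x | ∀ n ∈ T, x n = ε n}
      = {x | ∀ n ∈ T, x n = (fun n => if n ∈ U then !(ε n) else ε n) n} := by
  ext x
  simp only [Set.mem_preimage, Set.mem_setOf_eq, flip]
  refine forall₂_congr fun n hn => ?_
  by_cases h : n ∈ U
  · simp only [h, if_true]
    cases x n <;> cases ε n <;> simp
  · simp [h]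

variable {B} in
lemma map_flip_eq (μ : Measure (B → Bool)) [IsProbabilityMeasure μ]
    (hμ : ∀ (T : Finset B) (ε : B → Bool),
      μ {x | ∀ n ∈ T, x n = ε n} = (1 / 2 : ℝ≥0∞) ^ T.card) (U : Finset B) :
    μ.map (flip B U) = μ := by
  have : IsProbabilityMeasure (μ.map (flip B U)) :=
    Measure.isProbabilityMeasure_map (measurable_flip B U).aemeasurable
  refine MeasureTheory.ext_of_generate_finite (Cyl B) (generateFrom_Cyl B) (isPiSystem_Cyl B)
    ?_ (by simp)
  rintro _ ⟨T, ε, rfl⟩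
  rw [Measure.map_apply (measurable_flip B U) (cyl_measurableSet B ⟨T, ε, rfl⟩),
    flip_preimage_cyl, hμ, hμ]

variable {B} in
lemma flip_measure_eq (μ : Measure (B → Bool)) [IsProbabilityMeasure μ]
    (hμ : ∀ (T : Finset B) (ε : B → Bool),
      μ {x | ∀ n ∈ T, x n = ε n} = (1 / 2 : ℝ≥0∞) ^ T.card) (U : Finset B)
    {E : Set (B → Bool)} (hE : MeasurableSet E) :
    μ (flip B U ⁻¹' E) = μ E := by
  conv_rhs => rw [← map_flip_eq μ hμ U]
  rw [Measure.map_apply (measurable_flip B U) hE]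

/-! ### The lacunary sequence -/

variable {B} in
noncomputable def lac (hB : B.Infinite) : ℕ → ℕ
  | 0 => (hB.exists_gt 0).choose
  | (i + 1) => (hB.exists_gt (2 * lac hB i)).choose

variable {B} in
lemma lac_mem (hB : B.Infinite) : ∀ i, lac hB i ∈ B
  | 0 => (hB.exists_gt 0).choose_spec.1
  | (i + 1) => (hB.exists_gt (2 * lac hB i)).choose_spec.1

variable {B} in
lemma lac_pos (hB : B.Infinite) : ∀ i, 0 < lac hB i
  | 0 => (hB.exists_gt 0).choose_spec.2
  | (i + 1) => by
      have h := (hB.exists_gt (2 * lac hB i)).choose_spec.2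
      have := lac_pos hB i
      show 0 < (hB.exists_gt (2 * lac hB i)).choose
      omega

variable {B} in
lemma lac_gt (hB : B.Infinite) (i : ℕ) : 2 * lac hB i < lac hB (i + 1) :=
  (hB.exists_gt (2 * lac hB i)).choose_spec.2

variable {B} in
lemma lac_strictMono (hB : B.Infinite) : StrictMono (lac hB) := by
  apply strictMono_nat_of_lt_succ
  intro i
  have h1 := lac_gt hB i
  have h2 := lac_pos hB i
  omega

variable {B} in
lemma lac_tail_sum (hB : B.Infinite) (i k : ℕ) (hik : i ≤ k) :
    ∑ t ∈ Finset.Ico (i + 1) (k + 1), (1 : ℝ) / lac hB t ≤ 1 / lac hB i - 1 / lac hB k := by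
  induction k with
  | zero =>
      interval_cases i
      simp
  | succ k ih =>
      rcases Nat.lt_or_ge i (k + 1) with h | h
      · have hik' : i ≤ k := by omega
        have hposk : (0 : ℝ) < lac hB k := by exact_mod_cast lac_pos hB k
        have hstep : (1 : ℝ) / lac hB (k + 1) ≤ 1 / (2 * lac hB k) := by
          apply one_div_le_one_div_of_le
          · linarith
          · exact_mod_cast (le_of_lt (by exact_mod_cast lac_gt hB k))
        have hsum : ∑ t ∈ Finset.Ico (i + 1) (k + 2), (1 : ℝ) / lac hB t
            = ∑ t ∈ Finset.Ico (i + 1) (k + 1), (1 : ℝ) / lac hB t + 1 / lac hB (k + 1) := by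
          rw [Finset.sum_Ico_succ_top (by omega)]
        rw [hsum]
        have ihk := ih hik'
        have hpos : (0 : ℝ) < lac hB k := by exact_mod_cast lac_pos hB k
        have hpos1 : (0 : ℝ) < lac hB (k + 1) := by exact_mod_cast lac_pos hB (k + 1)
        have h2 : (1 : ℝ) / (2 * lac hB k) = 1 / lac hB k / 2 := by ring
        have h3 : (1 : ℝ) / lac hB (k + 1) ≤ 1 / lac hB k - 1 / lac hB (k + 1) := by
          have := hstep
          rw [h2] at this
          linarith
        linarith
      · have : i = k + 1 := by omega
        subst this
        simp

variable {B} in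
lemma sign_sum_ne_zero (hB : B.Infinite) (k : ℕ) (W : Finset ℕ) (hWne : W.Nonempty)
    (hWk : W ⊆ (Finset.range k).image (lac hB)) (d : ℕ → ℝ)
    (hd : ∀ n ∈ W, d n = 1 / n ∨ d n = -(1 / n)) : ∑ n ∈ W, d n ≠ 0 := by
  have habs : ∀ n ∈ W, |d n| = 1 / n := by
    intro n hn
    rcases hd n hn with h | h <;> rw [h] <;>
      simp [abs_of_nonneg, abs_of_nonpos, one_div_nonneg]
  -- the minimum element
  set n₀ := W.min' hWne with hn₀
  have hn₀W : n₀ ∈ W := W.min'_mem hWne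
  obtain ⟨i, hik, hin₀⟩ := Finset.mem_image.mp (hWk hn₀W)
  rw [Finset.mem_range] at hik
  -- k = k' + 1
  obtain ⟨k', rfl⟩ : ∃ k', k = k' + 1 := ⟨k - 1, by omega⟩
  have hik' : i ≤ k' := by omega
  -- the rest of W is contained in the image of Ico (i+1) (k'+1)
  have hrest : W.erase n₀ ⊆ (Finset.Ico (i + 1) (k' + 1)).image (lac hB) := by
    intro n hn
    obtain ⟨hne, hnW⟩ := Finset.mem_erase.mp hn
    obtain ⟨j, hjk, hjn⟩ := Finset.mem_image.mp (hWk hnW)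
    rw [Finset.mem_range] at hjk
    have hge : n₀ ≤ n := W.min'_le n hnW
    have hgt : n₀ < n := lt_of_le_of_ne hge (Ne.symm hne)
    have hij : i < j := by
      by_contra hc
      push_neg at hc
      have := (lac_strictMono hB).monotone hc
      omega
    exact Finset.mem_image.mpr ⟨j, Finset.mem_Ico.mpr ⟨by omega, by omega⟩, hjn⟩
  have hpos0 : (0 : ℝ) < lac hB i := by exact_mod_cast lac_pos hB i
  have hposk : (0 : ℝ) < lac hB k' := by exact_mod_cast lac_pos hB k'
  -- bound the rest
  have hbound : ∑ n ∈ W.erase n₀, |d n| ≤ 1 / lac hB i - 1 / lac hB k' := by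
    calc ∑ n ∈ W.erase n₀, |d n| = ∑ n ∈ W.erase n₀, (1 : ℝ) / n := by
          exact Finset.sum_congr rfl fun n hn => habs n (Finset.mem_of_mem_erase hn)
      _ ≤ ∑ n ∈ (Finset.Ico (i + 1) (k' + 1)).image (lac hB), (1 : ℝ) / n := by
          apply Finset.sum_le_sum_of_subset_of_nonneg hrest
          intro n _ _
          positivity
      _ = ∑ t ∈ Finset.Ico (i + 1) (k' + 1), (1 : ℝ) / lac hB t := by
          rw [Finset.sum_image]
          intro a _ b _ hab
          exact (lac_strictMono hB).injective hab
      _ ≤ 1 / lac hB i - 1 / lac hB k' := lac_tail_sum hB i k' hik'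
  intro hzero
  have hsplit : d n₀ + ∑ n ∈ W.erase n₀, d n = 0 := by
    rwa [Finset.add_sum_erase _ _ hn₀W]
  have h1 : |d n₀| = 1 / lac hB i := by
    rw [habs n₀ hn₀W, ← hin₀]
  have h2 : |∑ n ∈ W.erase n₀, d n| ≤ ∑ n ∈ W.erase n₀, |d n| :=
    Finset.abs_sum_le_sum_abs _ _
  have h3 : d n₀ = -∑ n ∈ W.erase n₀, d n := by linarith
  have h4 : |d n₀| = |∑ n ∈ W.erase n₀, d n| := by rw [h3, abs_neg]
  have h5 : (0 : ℝ) < 1 / lac hB k' := by positivity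
  rw [h1] at h4
  linarith

lemma term_flip (U : Finset B) (x : B → Bool) (n : ℕ) :
    term A B (flip B U x) n =
      if n ∈ U.image Subtype.val then 1 / n - term A B x n else term A B x n := by
  by_cases hn : n ∈ B
  · set c : B := ⟨n, hn⟩ with hc
    have hex : ∀ y : B → Bool, (∃ h : n ∈ B, y ⟨n, h⟩ = true) ↔ y c = true :=
      fun y => ⟨fun ⟨_, hy⟩ => hy, fun h => ⟨hn, h⟩⟩
    have himg : n ∈ U.image Subtype.val ↔ c ∈ U := by
      simp only [Finset.mem_image]
      constructor
      · rintro ⟨b, hb, hbn⟩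
        have : b = c := Subtype.ext hbn
        rwa [← this]
      · intro h; exact ⟨c, h, rfl⟩
    by_cases hcU : c ∈ U
    · rw [if_pos (himg.mpr hcU)]
      have hflip : flip B U x c = !(x c) := by simp [flip, hcU]
      unfold term
      simp only [hex, hflip]
      rcases Bool.eq_false_or_eq_true (x c) with hx | hx <;>
        by_cases hA : n ∈ A <;>
          simp [hx, hA, hn] <;> ring
    · rw [if_neg (fun h => hcU (himg.mp h))]
      have hflip : flip B U x c = x c := by simp [flip, hcU]
      unfold term
      simp only [hex, hflip]
  · have himg : n ∉ U.image Subtype.val := by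
      simp only [Finset.mem_image]
      rintro ⟨b, _, hbn⟩
      exact hn (hbn ▸ b.2)
    rw [if_neg himg]
    have hex : ∀ y : B → Bool, (∃ h : n ∈ B, y ⟨n, h⟩ = true) ↔ False :=
      fun y => ⟨fun ⟨h, _⟩ => hn h, False.elim⟩
    unfold term
    simp only [hex]

variable {A B} in
lemma S_flip (hsum : Summable fun n : (A ∪ B : Set ℕ) => (1 : ℝ) / (n : ℕ))
    (U : Finset B) (x : B → Bool) :
    S A B (flip B U x) = S A B x
      + ∑ n ∈ U.image Subtype.val, ((1 : ℝ) / n - 2 * term A B x n) := by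
  have hsx := summable_term hsum x
  have hsf := summable_term hsum (flip B U x)
  have hg : ∀ n ∉ U.image Subtype.val,
      term A B (flip B U x) n - term A B x n = 0 := by
    intro n hn
    rw [term_flip A B U x n, if_neg hn, sub_self]
  have hgsum : ∑' n : ℕ, (term A B (flip B U x) n - term A B x n)
      = ∑ n ∈ U.image Subtype.val, ((1 : ℝ) / n - 2 * term A B x n) := by
    rw [tsum_eq_sum hg]
    refine Finset.sum_congr rfl fun n hn => ?_
    rw [term_flip A B U x n, if_pos hn]
    ring
  have key : S A B (flip B U x) - S A B x
      = ∑ n ∈ U.image Subtype.val, ((1 : ℝ) / n - 2 * term A B x n) := by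
    unfold S
    rw [← Summable.tsum_sub hsf hsx, hgsum]
  linarith

variable {A B} in
lemma level_set_null (hB : B.Infinite)
    (hsum : Summable fun n : (A ∪ B : Set ℕ) => (1 : ℝ) / (n : ℕ))
    (μ : Measure (B → Bool)) [IsProbabilityMeasure μ]
    (hμ : ∀ (T : Finset B) (ε : B → Bool),
      μ {x | ∀ n ∈ T, x n = ε n} = (1 / 2 : ℝ≥0∞) ^ T.card) (q : ℝ) :
    μ (S A B ⁻¹' {q}) = 0 := by
  have hSmeas : Measurable (S A B) := measurable_S hsum
  have hEmeas : MeasurableSet (S A B ⁻¹' {q}) := hSmeas (measurableSet_singleton q)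
  have key : ∀ k : ℕ, μ (S A B ⁻¹' {q}) ≤ (1 / 2 : ℝ≥0∞) ^ k := by
    intro k
    set ub : Finset ℕ → Finset B := fun U => U.image fun i => ⟨lac hB i, lac_mem hB i⟩ with hub
    set E : Finset ℕ → Set (B → Bool) := fun U => flip B (ub U) ⁻¹' (S A B ⁻¹' {q}) with hEdef
    have himg : ∀ U : Finset ℕ, (ub U).image Subtype.val = U.image (lac hB) := by
      intro U
      rw [hub]
      simp only [Finset.image_image]
      rfl
    have hEm : ∀ U, MeasurableSet (E U) := fun U => (measurable_flip B (ub U)) hEmeas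
    have hEμ : ∀ U, μ (E U) = μ (S A B ⁻¹' {q}) := fun U => flip_measure_eq μ hμ _ hEmeas
    -- disjointness
    have hdisj : Set.PairwiseDisjoint (↑(Finset.range k).powerset) E := by
      intro U hU V hV hUV
      rw [Finset.mem_coe, Finset.mem_powerset] at hU hV
      show Disjoint (E U) (E V)
      rw [Set.disjoint_left]
      intro x hxU hxV
      rw [hEdef, Set.mem_preimage, Set.mem_preimage, Set.mem_singleton_iff] at hxU hxV
      set c : ℕ → ℝ := fun n => 1 / n - 2 * term A B x n with hc
      have hSU := S_flip hsum (ub U) x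
      have hSV := S_flip hsum (ub V) x
      rw [himg] at hSU hSV
      set U' := U.image (lac hB) with hU'
      set V' := V.image (lac hB) with hV'
      have hsum_eq : ∑ n ∈ U', c n = ∑ n ∈ V', c n := by
        have h1 : S A B x + ∑ n ∈ U', c n = q := by rw [← hSU]; exact hxU
        have h2 : S A B x + ∑ n ∈ V', c n = q := by rw [← hSV]; exact hxV
        linarith
      have hsd1 : ∑ n ∈ U' \ V', c n + ∑ n ∈ U' ∩ V', c n = ∑ n ∈ U', c n := by
        rw [← Finset.sdiff_inter_self_left U' V']
        exact Finset.sum_sdiff Finset.inter_subset_left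
      have hsd2 : ∑ n ∈ V' \ U', c n + ∑ n ∈ U' ∩ V', c n = ∑ n ∈ V', c n := by
        rw [Finset.inter_comm, ← Finset.sdiff_inter_self_left V' U']
        exact Finset.sum_sdiff Finset.inter_subset_left
      have hdiff : ∑ n ∈ U' \ V', c n = ∑ n ∈ V' \ U', c n := by linarith
      set W : Finset ℕ := (U' \ V') ∪ (V' \ U') with hW
      set d : ℕ → ℝ := fun n => if n ∈ U' \ V' then c n else -c n with hd
      have hdisjUV : Disjoint (U' \ V') (V' \ U') := disjoint_sdiff_sdiff
      have hWsum : ∑ n ∈ W, d n = 0 := by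
        rw [hW, Finset.sum_union hdisjUV]
        have e1 : ∑ n ∈ U' \ V', d n = ∑ n ∈ U' \ V', c n :=
          Finset.sum_congr rfl fun n hn => by rw [hd]; simp only [hn, if_pos]
        have e2 : ∑ n ∈ V' \ U', d n = ∑ n ∈ V' \ U', (-c n) :=
          Finset.sum_congr rfl fun n hn => by
            rw [hd]
            have : n ∉ U' \ V' := Finset.disjoint_right.mp hdisjUV hn
            simp only [this, if_neg, if_false]
        rw [e1, e2, Finset.sum_neg_distrib]
        linarith [hdiff]
      have hWne : W.Nonempty := by
        rw [Finset.nonempty_iff_ne_empty]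
        intro hemp
        rw [hW, Finset.union_eq_empty] at hemp
        have h1 := Finset.sdiff_eq_empty_iff_subset.mp hemp.1
        have h2 := Finset.sdiff_eq_empty_iff_subset.mp hemp.2
        have : U' = V' := le_antisymm h1 h2
        exact hUV (Finset.image_injective (lac_strictMono hB).injective this)
      have hWk : W ⊆ (Finset.range k).image (lac hB) := by
        rw [hW]
        apply Finset.union_subset
        · exact le_trans (Finset.sdiff_subset) (Finset.image_subset_image hU)
        · exact le_trans (Finset.sdiff_subset) (Finset.image_subset_image hV)
      have hdval : ∀ n ∈ W, d n = 1 / n ∨ d n = -(1 / n) := by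
        intro n _
        have ht : term A B x n = 0 ∨ term A B x n = 1 / n := by
          unfold term
          split
          · right; rfl
          · left; rfl
        rw [hd, hc]
        rcases ht with h | h <;> by_cases hw : n ∈ U' \ V' <;>
          simp only [h, hw, if_pos, if_neg, if_true, if_false, not_false_iff] <;>
          [left; right; right; left] <;> ring
      exact sign_sum_ne_zero hB k W hWne hWk d hdval hWsum
    have hunion := measure_biUnion_finset (μ := μ) hdisj (fun U _ => hEm U)
    have hsum_eq : ∑ U ∈ (Finset.range k).powerset, μ (E U)
        = (2 ^ k : ℝ≥0∞) * μ (S A B ⁻¹' {q}) := by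
      rw [Finset.sum_congr rfl fun U _ => hEμ U, Finset.sum_const, Finset.card_powerset,
        Finset.card_range, nsmul_eq_mul]
      norm_num
    have hle1 : μ (⋃ U ∈ (Finset.range k).powerset, E U) ≤ 1 := prob_le_one
    rw [hunion, hsum_eq] at hle1
    have : μ (S A B ⁻¹' {q}) ≤ ((2 : ℝ≥0∞) ^ k)⁻¹ := by
      rw [ENNReal.le_inv_iff_mul_le, mul_comm]
      exact hle1
    rw [one_div, ← ENNReal.inv_pow]
    exact this
  have htend : Filter.Tendsto (fun k : ℕ => (1 / 2 : ℝ≥0∞) ^ k) Filter.atTop (nhds 0) :=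
    ENNReal.tendsto_pow_atTop_nhds_zero_of_lt_one (by norm_num)
  exact le_antisymm (ge_of_tendsto' htend key) zero_le

end Stmt2Aux

/-- If `B'` is a uniformly random subset of the infinite set `B` (each `n ∈ B`
belongs to `B'` independently with probability `1/2`), then almost surely
`∑_{n ∈ A Δ B'} 1/n` is irrational. -/
theorem stmt_2 (A B : Set ℕ) (hB : B.Infinite)
    (hsum : Summable fun n : (A ∪ B : Set ℕ) => (1 : ℝ) / (n : ℕ))
    (μ : Measure (B → Bool)) [IsProbabilityMeasure μ]
    (hμ : ∀ (S : Finset B) (ε : B → Bool),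
      μ {x | ∀ n ∈ S, x n = ε n} = (1 / 2 : ℝ≥0∞) ^ S.card) :
    μ {x : B → Bool | Irrational
        (∑' n : ℕ, if ¬((n ∈ A) ↔ ∃ h : n ∈ B, x ⟨n, h⟩ = true)
          then (1 : ℝ) / n else 0)} = 1 := by
  have hset : {x : B → Bool | Irrational
      (∑' n : ℕ, if ¬((n ∈ A) ↔ ∃ h : n ∈ B, x ⟨n, h⟩ = true)
        then (1 : ℝ) / n else 0)} = Stmt2Aux.S A B ⁻¹' {r : ℝ | Irrational r} := rfl
  rw [hset]
  have hSmeas : Measurable (Stmt2Aux.S A B) := Stmt2Aux.measurable_S hsum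
  have hIrrMeas : MeasurableSet {r : ℝ | Irrational r} := by
    have : {r : ℝ | Irrational r} = (Set.range ((↑) : ℚ → ℝ))ᶜ := rfl
    rw [this]
    exact (Set.countable_range _).measurableSet.compl
  have hmeas : MeasurableSet (Stmt2Aux.S A B ⁻¹' {r : ℝ | Irrational r}) := hSmeas hIrrMeas
  rw [← prob_compl_eq_zero_iff hmeas]
  have hcompl : (Stmt2Aux.S A B ⁻¹' {r : ℝ | Irrational r})ᶜ
      = ⋃ q : ℚ, Stmt2Aux.S A B ⁻¹' {((q : ℝ))} := by
    ext x
    simp only [Set.mem_compl_iff, Set.mem_preimage, Set.mem_setOf_eq, Set.mem_iUnion,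
      Set.mem_singleton_iff, Irrational, not_not, Set.mem_range]
    constructor
    · rintro ⟨q, hq⟩; exact ⟨q, hq.symm⟩
    · rintro ⟨q, hq⟩; exact ⟨q, hq.symm⟩
  rw [hcompl]
  exact measure_iUnion_null fun q => Stmt2Aux.level_set_null hB hsum μ hμ _
end

section
/- Let (J_n) be a sequence of non-empty intervals of positive integers such that ∑_n 1/(min J_n) < ∞ and, for all sufficiently large n, ∑_{k>n} (|J_k| − 1)/((min J_k)(max J_k)) ≥ 1/((min J_n)(min J_n + 1)). Then the set { ∑_{n=1}^∞ 1/x_n : x_n ∈ J_n for every n } has non-empty interior in ℝ. In particular there exist x_n ∈ J_n with ∑_n 1/x_n rational. -/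
open scoped Classical
open Filter Topology
noncomputable def tailS (f : ℕ → ℕ) (n : ℕ) : ℝ := ∑' k : ℕ, (1:ℝ) / (f (n + k))

noncomputable def pick (a b : ℕ → ℕ) (r : ℝ) (n : ℕ) : ℕ :=
  Nat.find (⟨max (a n) (b n), le_max_left _ _, Or.inl (le_max_right _ _)⟩ :
    ∃ x : ℕ, a n ≤ x ∧ (b n ≤ x ∨ (1:ℝ)/(x:ℝ) ≤ r - tailS b (n+1)))

lemma pick_spec (a b : ℕ → ℕ) (r : ℝ) (n : ℕ) :
    a n ≤ pick a b r n ∧ (b n ≤ pick a b r n ∨ (1:ℝ)/(pick a b r n:ℝ) ≤ r - tailS b (n+1)) := by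
  unfold pick
  exact Nat.find_spec (p := fun x : ℕ => a n ≤ x ∧ (b n ≤ x ∨ (1:ℝ)/(x:ℝ) ≤ r - tailS b (n+1))) _

lemma pick_le (a b : ℕ → ℕ) {n : ℕ} (hab : a n ≤ b n) (r : ℝ) : pick a b r n ≤ b n := by
  unfold pick; exact Nat.find_le ⟨hab, Or.inl le_rfl⟩

lemma pick_min (a b : ℕ → ℕ) (r : ℝ) (n : ℕ) {m : ℕ} (hm : m < pick a b r n) :
    ¬ (a n ≤ m ∧ (b n ≤ m ∨ (1:ℝ)/(m:ℝ) ≤ r - tailS b (n+1))) := by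
  unfold pick at hm; exact Nat.find_min _ hm

lemma summable_tail {f : ℕ → ℕ} (hf : Summable fun n => (1:ℝ)/f n) (n : ℕ) :
    Summable fun k => (1:ℝ)/(f (n + k)) := by
  have := (summable_nat_add_iff (f := fun n => (1:ℝ)/f n) n).2 hf
  simpa [add_comm] using this

lemma tailS_succ {f : ℕ → ℕ} (hf : Summable fun n => (1:ℝ)/f n) (n : ℕ) :
    tailS f n = 1/(f n) + tailS f (n+1) := by
  have h := summable_tail hf n
  rw [tailS, Summable.tsum_eq_zero_add h]
  simp only [add_zero, tailS]
  congr 1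
  apply tsum_congr; intro k
  have : n + (k+1) = n+1+k := by omega
  rw [this]

lemma tailS_nonneg {f : ℕ → ℕ} (n : ℕ) : 0 ≤ tailS f n :=
  tsum_nonneg fun k => by positivity

lemma tailS_eq (f : ℕ → ℕ) (n : ℕ) : tailS f n = ∑' k : ℕ, (1:ℝ)/(f (k + n)) :=
  tsum_congr fun k => by rw [add_comm]

lemma tailS_tendsto {f : ℕ → ℕ} (hf : Summable fun n => (1:ℝ)/f n) :
    Tendsto (fun n => tailS f n) atTop (nhds 0) := by
  exact Filter.Tendsto.congr (fun n => (tailS_eq f n).symm)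
    (tendsto_sum_nat_add (f := fun n => (1:ℝ)/f n))
noncomputable def rem (a b : ℕ → ℕ) (N : ℕ) (y : ℝ) : ℕ → ℝ
  | 0 => y - ∑ k ∈ Finset.range (N+1), (1:ℝ)/(a k)
  | j+1 => rem a b N y j - 1/((pick a b (rem a b N y j) (N+1+j) : ℕ) : ℝ)

noncomputable def gx (a b : ℕ → ℕ) (N : ℕ) (y : ℝ) (n : ℕ) : ℕ :=
  if n ≤ N then a n else pick a b (rem a b N y (n - (N+1))) n

section Inv
variable {a b : ℕ → ℕ} (hab : ∀ n, 1 ≤ a n ∧ a n ≤ b n)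
  (hsum : Summable fun n => (1 : ℝ) / (a n))
include hab hsum

omit hsum in
lemma apos (n : ℕ) : (0:ℝ) < a n := by
  have := (hab n).1; exact_mod_cast Nat.lt_of_lt_of_le Nat.zero_lt_one this

omit hsum in
lemma bpos (n : ℕ) : (0:ℝ) < b n := by
  have h := (hab n).2
  exact lt_of_lt_of_le (apos hab n) (by exact_mod_cast h)

lemma hsumb : Summable fun n => (1:ℝ)/(b n) :=
  hsum.of_nonneg_of_le (fun n => by positivity)
    (fun n => one_div_le_one_div_of_le (apos hab n) (by exact_mod_cast (hab n).2))

lemma invariant {N : ℕ}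
    (htail' : ∀ n, N ≤ n → (1:ℝ)/((a n)*(a n + 1)) ≤ tailS a (n+1) - tailS b (n+1))
    (y : ℝ) (h0l : tailS b (N+1) ≤ rem a b N y 0) (h0u : rem a b N y 0 ≤ tailS a (N+1)) :
    ∀ j, tailS b (N+1+j) ≤ rem a b N y j ∧ rem a b N y j ≤ tailS a (N+1+j) := by
  intro j
  induction j with
  | zero => exact ⟨h0l, h0u⟩
  | succ j ih =>
    set n := N + 1 + j with hn
    set r := rem a b N y j with hr
    set x := pick a b r n with hx
    have hxa : a n ≤ x := (pick_spec a b r n).1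
    have hxb : x ≤ b n := pick_le a b (hab n).2 r
    have hxpos : (0:ℝ) < x := lt_of_lt_of_le (apos hab n) (by exact_mod_cast hxa)
    have hrem : rem a b N y (j+1) = r - 1/(x:ℝ) := rfl
    have hgoalidx : N + 1 + (j+1) = n + 1 := by omega
    rw [hgoalidx, hrem]
    have htb : tailS b n = 1/(b n) + tailS b (n+1) := tailS_succ (hsumb hab hsum) n
    have hta : tailS a n = 1/(a n) + tailS a (n+1) := tailS_succ hsum n
    constructor
    · -- lower bound
      rcases (pick_spec a b r n).2 with hbx | hle
      · have hxeq : x = b n := le_antisymm hxb hbx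
        have : (1:ℝ)/(x:ℝ) = 1/(b n) := by rw [hxeq]
        rw [this]
        have := ih.1
        rw [htb] at this
        linarith
      · linarith
    · -- upper bound
      by_cases hxe : x = a n
      · have : (1:ℝ)/(x:ℝ) = 1/(a n) := by rw [hxe]
        rw [this]
        have := ih.2
        rw [hta] at this
        linarith
      · have hax : a n < x := lt_of_le_of_ne hxa (Ne.symm hxe)
        have hx1 : a n ≤ x - 1 := by omega
        have hmin := pick_min a b r n (m := x - 1) (by omega)
        push_neg at hmin
        have hlt : r - tailS b (n+1) < 1/((x - 1 : ℕ) : ℝ) := (hmin hx1).2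
        have hcast : ((x - 1 : ℕ) : ℝ) = (x:ℝ) - 1 := by
          have h1 : 1 ≤ x := by omega
          push_cast [h1]
          ring
        rw [hcast] at hlt
        have hx2 : (2:ℝ) ≤ (x:ℝ) := by
          have : 2 ≤ x := by have := (hab n).1; omega
          exact_mod_cast this
        have hkey : (1:ℝ)/((x:ℝ)-1) - 1/(x:ℝ) = 1/(((x:ℝ)-1)*(x:ℝ)) := by
          have h1 : (x:ℝ) - 1 ≠ 0 := by linarith
          have h2 : (x:ℝ) ≠ 0 := by linarith
          field_simp
          ring
        have han1 : (a n : ℝ) + 1 ≤ (x:ℝ) := by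
          have : a n + 1 ≤ x := hax
          exact_mod_cast this
        have han2 : (a n : ℝ) ≤ (x:ℝ) - 1 := by linarith
        have hprodpos : (0:ℝ) < (a n : ℝ) * ((a n : ℝ) + 1) := by
          have := apos hab n; nlinarith
        have hprodle : (a n : ℝ) * ((a n : ℝ) + 1) ≤ ((x:ℝ)-1)*(x:ℝ) := by
          have ha0 : (0:ℝ) ≤ (a n : ℝ) := le_of_lt (apos hab n)
          nlinarith
        have hgap : (1:ℝ)/(((x:ℝ)-1)*(x:ℝ)) ≤ 1/((a n)*((a n:ℝ) + 1)) :=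
          one_div_le_one_div_of_le hprodpos hprodle
        have hht := htail' n (by omega)
        linarith

lemma gx_bounds (N : ℕ) (y : ℝ) (n : ℕ) :
    a n ≤ gx a b N y n ∧ gx a b N y n ≤ b n := by
  unfold gx
  split
  · exact ⟨le_rfl, (hab n).2⟩
  · exact ⟨(pick_spec a b _ n).1, pick_le a b (hab n).2 _⟩

omit hab hsum in
lemma rem_eq (N : ℕ) (y : ℝ) :
    ∀ j, rem a b N y j = y - ∑ k ∈ Finset.range (N+1+j), (1:ℝ)/(gx a b N y k) := by
  intro j
  induction j with
  | zero =>
    show rem a b N y 0 = _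
    rw [show rem a b N y 0 = y - ∑ k ∈ Finset.range (N+1), (1:ℝ)/(a k) from rfl]
    congr 1
    apply Finset.sum_congr rfl
    intro k hk
    have hkN : k ≤ N := by simpa [Nat.lt_succ_iff] using Finset.mem_range.1 hk
    unfold gx
    rw [if_pos hkN]
  | succ j ih =>
    have hgx : gx a b N y (N+1+j) = pick a b (rem a b N y j) (N+1+j) := by
      unfold gx
      rw [if_neg (by omega)]
      congr 2
      omega
    have hrem : rem a b N y (j+1) = rem a b N y j - 1/((pick a b (rem a b N y j) (N+1+j) : ℕ) : ℝ) := rfl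
    rw [hrem, show N+1+(j+1) = (N+1+j)+1 from rfl, Finset.sum_range_succ, hgx, ih]
    ring

lemma hits {N : ℕ}
    (htail' : ∀ n, N ≤ n → (1:ℝ)/((a n)*(a n + 1)) ≤ tailS a (n+1) - tailS b (n+1))
    (y : ℝ)
    (hyl : tailS b (N+1) ≤ y - ∑ k ∈ Finset.range (N+1), (1:ℝ)/(a k))
    (hyu : y - ∑ k ∈ Finset.range (N+1), (1:ℝ)/(a k) ≤ tailS a (N+1)) :
    ∃ x : ℕ → ℕ, (∀ n, a n ≤ x n ∧ x n ≤ b n) ∧ (∑' n : ℕ, (1 : ℝ) / (x n)) = y := by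
  refine ⟨gx a b N y, gx_bounds hab hsum N y, ?_⟩
  have h0 : rem a b N y 0 = y - ∑ k ∈ Finset.range (N+1), (1:ℝ)/(a k) := rfl
  have hinv := invariant hab hsum htail' y (by rw [h0]; exact hyl) (by rw [h0]; exact hyu)
  -- summability of 1/gx
  have hgs : Summable fun n => (1:ℝ)/(gx a b N y n) := by
    apply hsum.of_nonneg_of_le (fun n => by positivity)
    intro n
    apply one_div_le_one_div_of_le (apos hab n)
    exact_mod_cast (gx_bounds hab hsum N y n).1
  -- rem tends to 0
  have htendB : Tendsto (fun j => tailS b (N+1+j)) atTop (nhds 0) :=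
    (tailS_tendsto (hsumb hab hsum)).comp
      (tendsto_atTop_atTop_of_monotone (fun i j hij => by omega) (fun c => ⟨c, by omega⟩))
  have htendA : Tendsto (fun j => tailS a (N+1+j)) atTop (nhds 0) :=
    (tailS_tendsto hsum).comp
      (tendsto_atTop_atTop_of_monotone (fun i j hij => by omega) (fun c => ⟨c, by omega⟩))
  have hrem0 : Tendsto (fun j => rem a b N y j) atTop (nhds 0) :=
    tendsto_of_tendsto_of_tendsto_of_le_of_le htendB htendA
      (fun j => (hinv j).1) (fun j => (hinv j).2)
  -- partial sums tend to y
  have hpart : Tendsto (fun j => ∑ k ∈ Finset.range (N+1+j), (1:ℝ)/(gx a b N y k)) atTop (nhds y) := by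
    have : (fun j => ∑ k ∈ Finset.range (N+1+j), (1:ℝ)/(gx a b N y k))
        = fun j => y - rem a b N y j := by
      funext j; rw [rem_eq N y j]; ring
    rw [this]
    simpa using (tendsto_const_nhds (x := y)).sub hrem0
  -- partial sums tend to tsum
  have hpart2 : Tendsto (fun j => ∑ k ∈ Finset.range (N+1+j), (1:ℝ)/(gx a b N y k)) atTop
      (nhds (∑' n, (1:ℝ)/(gx a b N y n))) := by
    have h1 := hgs.hasSum.tendsto_sum_nat
    exact h1.comp (tendsto_atTop_atTop_of_monotone (fun i j hij => by omega) (fun c => ⟨c, by omega⟩))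
  exact tendsto_nhds_unique hpart2 hpart

end Inv

/-- Main one-dimensional lemma: if `J_n = {a_n, …, b_n}` are nonempty intervals
of positive integers with `∑_n 1/a_n < ∞` and, for all large `n`,
`∑_{k>n} (|J_k|-1)/(a_k b_k) ≥ 1/(a_n (a_n+1))`, then the set of sums
`∑_n 1/x_n` with `x_n ∈ J_n` has nonempty interior; in particular some choice
gives a rational sum. -/
theorem stmt_6 (a b : ℕ → ℕ) (hab : ∀ n, 1 ≤ a n ∧ a n ≤ b n)
    (hsum : Summable fun n => (1 : ℝ) / (a n))
    (htail : ∃ N : ℕ, ∀ n ≥ N,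
      (1 : ℝ) / ((a n) * (a n + 1)) ≤
        ∑' k : ℕ, ((b (n + 1 + k) : ℝ) - a (n + 1 + k)) /
          ((a (n + 1 + k)) * (b (n + 1 + k)))) :
    (interior {y : ℝ | ∃ x : ℕ → ℕ,
        (∀ n, a n ≤ x n ∧ x n ≤ b n) ∧ y = ∑' n : ℕ, (1 : ℝ) / (x n)}).Nonempty ∧
    ∃ x : ℕ → ℕ, (∀ n, a n ≤ x n ∧ x n ≤ b n) ∧
      ∃ q : ℚ, (∑' n : ℕ, (1 : ℝ) / (x n)) = q := by
  obtain ⟨N, htail⟩ := htail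
  have hsb := hsumb hab hsum
  have htail' : ∀ n, N ≤ n → (1:ℝ)/((a n)*(a n + 1)) ≤ tailS a (n+1) - tailS b (n+1) := by
    intro n hn
    have heq : (∑' k : ℕ, ((b (n + 1 + k) : ℝ) - a (n + 1 + k)) /
          ((a (n + 1 + k)) * (b (n + 1 + k)))) = tailS a (n+1) - tailS b (n+1) := by
      rw [tailS, tailS, ← Summable.tsum_sub (summable_tail hsum (n+1)) (summable_tail hsb (n+1))]
      apply tsum_congr
      intro k
      have ha0 : (a (n+1+k):ℝ) ≠ 0 := ne_of_gt (apos hab _)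
      have hb0 : (b (n+1+k):ℝ) ≠ 0 := ne_of_gt (bpos hab _)
      field_simp
    rw [← heq]
    exact htail n hn
  set C := ∑ k ∈ Finset.range (N+1), (1:ℝ)/(a k) with hC
  set L := C + tailS b (N+1) with hL
  set U := C + tailS a (N+1) with hU
  have hLU : L < U := by
    have h := htail' N le_rfl
    have hpos : 0 < (1:ℝ)/((a N : ℝ)*((a N : ℝ)+1)) := by
      have := apos hab N; positivity
    rw [hL, hU]
    linarith
  have hIcc : ∀ y ∈ Set.Icc L U, y ∈ {y : ℝ | ∃ x : ℕ → ℕ,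
      (∀ n, a n ≤ x n ∧ x n ≤ b n) ∧ y = ∑' n : ℕ, (1 : ℝ) / (x n)} := by
    intro y hy
    obtain ⟨x, hx, hxy⟩ := hits hab hsum htail' y
      (by have := hy.1; rw [hL] at this; linarith)
      (by have := hy.2; rw [hU] at this; linarith)
    exact ⟨x, hx, hxy.symm⟩
  constructor
  · refine ⟨(L+U)/2, ?_⟩
    have hsub : Set.Ioo L U ⊆ interior {y : ℝ | ∃ x : ℕ → ℕ,
        (∀ n, a n ≤ x n ∧ x n ≤ b n) ∧ y = ∑' n : ℕ, (1 : ℝ) / (x n)} :=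
      interior_maximal (fun z hz => hIcc z ⟨le_of_lt hz.1, le_of_lt hz.2⟩) isOpen_Ioo
    exact hsub ⟨by linarith, by linarith⟩
  · obtain ⟨q, hq1, hq2⟩ := exists_rat_btwn hLU
    obtain ⟨x, hx, hxy⟩ := hIcc (q:ℝ) ⟨le_of_lt hq1, le_of_lt hq2⟩
    exact ⟨x, hx, q, hxy.symm⟩
end

section
/- Let (a_n) be a strictly increasing sequence of positive integers such that ∑_n 1/a_n converges and lim_{n→∞} a_{n+1}/a_n² = 0. Then there exists a sequence of positive integers (b_n) with lim_{n→∞} b_n/a_n = 1 such that ∑_{n=1}^∞ 1/b_n is a rational number. -/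
open Filter
open scoped Topology

open Finset

private lemma ceil_inv_bounds {v : ℝ} (hv : 0 < v) :
    0 < ⌈v⁻¹⌉₊ ∧ ((⌈v⁻¹⌉₊ : ℝ))⁻¹ ≤ v ∧ v - v ^ 2 ≤ ((⌈v⁻¹⌉₊ : ℝ))⁻¹ := by
  have h0 : (0:ℝ) < v⁻¹ := by positivity
  have hc : 0 < ⌈v⁻¹⌉₊ := Nat.ceil_pos.2 h0
  have hcR : (0:ℝ) < (⌈v⁻¹⌉₊ : ℝ) := by exact_mod_cast hc
  have h1 : v⁻¹ ≤ (⌈v⁻¹⌉₊ : ℝ) := Nat.le_ceil _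
  have h2 : ((⌈v⁻¹⌉₊ : ℝ)) < v⁻¹ + 1 := Nat.ceil_lt_add_one h0.le
  refine ⟨hc, ?_, ?_⟩
  · rw [inv_le_comm₀ hcR hv]
    exact h1
  · have h3 : (v⁻¹ + 1)⁻¹ ≤ ((⌈v⁻¹⌉₊ : ℝ))⁻¹ := by
      gcongr
    refine le_trans ?_ h3
    have hv1 : (0:ℝ) < 1 + v := by linarith
    have he : v⁻¹ + 1 = (1 + v)/v := by field_simp
    rw [he, inv_div, le_div_iff₀ hv1]
    nlinarith

private noncomputable def gseq (T : ℕ → ℝ) (N : ℕ) (q0 : ℚ) : ℕ → ℝ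
  | 0 => (q0 : ℝ)
  | (k+1) => gseq T N q0 k - ((⌈(gseq T N q0 k - T (N + k + 1))⁻¹⌉₊ : ℝ))⁻¹

set_option maxHeartbeats 1000000 in
/-- If `(a_n)` is strictly increasing with `∑ 1/a_n < ∞` and
`a_{n+1}/a_n² → 0`, then some positive integers `b_n` with `b_n/a_n → 1` give a
rational sum `∑ 1/b_n`. -/
theorem stmt_7 (a : ℕ → ℕ) (hmono : StrictMono a) (hpos : ∀ n, 0 < a n)
    (hsum : Summable fun n => (1 : ℝ) / (a n))
    (hgrow : Tendsto (fun n => (a (n + 1) : ℝ) / (a n : ℝ) ^ 2) atTop (𝓝 0)) :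
    ∃ b : ℕ → ℕ, (∀ n, 0 < b n) ∧
      Tendsto (fun n => (b n : ℝ) / (a n : ℝ)) atTop (𝓝 1) ∧
      ∃ q : ℚ, (∑' n : ℕ, (1 : ℝ) / (b n)) = q := by
  have haR : ∀ n, (0:ℝ) < a n := fun n => by exact_mod_cast hpos n
  -- tail sums
  set T : ℕ → ℝ := fun n => ∑' k, (1:ℝ)/a (k + n) with hTdef
  have hsummable_shift : ∀ n, Summable (fun k => (1:ℝ)/a (k + n)) :=
    fun n => (summable_nat_add_iff n).2 hsum
  have hTnonneg : ∀ n, 0 ≤ T n := fun n => tsum_nonneg (fun k => by positivity)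
  have hTrec : ∀ n, T n = 1/a n + T (n+1) := by
    intro n
    have h := Summable.tsum_eq_zero_add (hsummable_shift n)
    simp only [Nat.zero_add] at h
    rw [hTdef]
    simp only
    rw [h]
    congr 1
    apply tsum_congr
    intro k
    rw [show k + 1 + n = k + (n + 1) from by omega]
  have hTlb : ∀ n, 1/(a n : ℝ) ≤ T n := by
    intro n
    rw [hTrec n]
    have := hTnonneg (n+1)
    linarith
  have hTto0 : Tendsto T atTop (𝓝 0) := tendsto_sum_nat_add (fun n => (1:ℝ)/a n)
  -- choose M with growth bounds
  have hev : ∀ᶠ n in atTop, (a (n + 1) : ℝ) / (a n : ℝ) ^ 2 < 1/30 :=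
    hgrow.eventually_lt_const (by norm_num)
  obtain ⟨M0, hM0⟩ := eventually_atTop.1 hev
  set M := max M0 30 with hMdef
  have hM : ∀ n, M ≤ n → (a (n+1) : ℝ) ≤ (a n : ℝ)^2 / 30 ∧ (30:ℝ) ≤ a n := by
    intro n hn
    constructor
    · have h := hM0 n (le_trans (le_max_left _ _) hn)
      rw [div_lt_iff₀ (by exact pow_pos (haR n) 2)] at h
      linarith
    · have h30 : 30 ≤ n := le_trans (le_max_right _ _) hn
      have : n ≤ a n := hmono.le_apply
      exact_mod_cast le_trans h30 this
  set N := M + 1 with hNdef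
  -- choose starting rational
  have hgap : T N < T N + 1/(10 * a N) := by
    have : (0:ℝ) < 1/(10 * a N) := one_div_pos.2 (by nlinarith [haR N])
    linarith
  obtain ⟨q0, hq0l, hq0r⟩ := exists_rat_btwn hgap
  -- recursive construction
  set g : ℕ → ℝ := gseq T N q0 with hgdef
  set b' : ℕ → ℕ := fun k => ⌈(g k - T (N + k + 1))⁻¹⌉₊ with hb'def
  have hgsucc : ∀ k, g (k+1) = g k - ((b' k : ℝ))⁻¹ := fun k => by
    rw [hgdef, hb'def]; simp [gseq]; rfl
  have hg0 : g 0 = (q0 : ℝ) := rfl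
  -- invariant
  have inv : ∀ k, T (N + k) ≤ g k ∧ g k ≤ T (N + k) + 1/(10 * a (N + k)) := by
    intro k
    induction k with
    | zero => exact ⟨by simpa [hg0] using hq0l.le, by simpa [hg0] using hq0r.le⟩
    | succ k ih =>
      obtain ⟨ih1, ih2⟩ := ih
      set n := N + k with hn
      have hMn : M ≤ n := by omega
      obtain ⟨hg1, hg2⟩ := hM n hMn
      have han := haR n
      have han1 := haR (n+1)
      have hvlb : 1/(a n : ℝ) ≤ g k - T (n+1) := by
        rw [hTrec n] at ih1; linarith
      have hvub : g k - T (n+1) ≤ 1/(a n : ℝ) + 1/(10 * a n) := by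
        rw [hTrec n] at ih2; linarith
      have hvpos : 0 < g k - T (n+1) := lt_of_lt_of_le (by positivity) hvlb
      obtain ⟨hbpos, hble, hbge⟩ := ceil_inv_bounds hvpos
      have hb'eq : (b' k : ℝ) = (⌈(g k - T (n+1))⁻¹⌉₊ : ℝ) := rfl
      rw [hgsucc k, hb'eq]
      have hA1 : (0:ℝ) < 1/(a n : ℝ) := by positivity
      have hv2 : g k - T (n+1) ≤ (11/10) * (1/(a n : ℝ)) := by
        have he2 : 1/(10*(a n : ℝ)) = (1/10) * (1/(a n : ℝ)) := by ring
        linarith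
      have hsq : (g k - T (n+1))^2 ≤ 2 / (a n : ℝ)^2 := by
        have he3 : (2:ℝ) / (a n : ℝ)^2 = 2 * (1/(a n : ℝ))^2 := by ring
        nlinarith [hvpos.le, hv2, hA1]
      constructor
      · have : N + (k+1) = n + 1 := by omega
        rw [this]; linarith
      · have : N + (k+1) = n + 1 := by omega
        rw [this]
        have hfin : (2:ℝ) / (a n : ℝ)^2 ≤ 1/(10 * a (n+1)) := by
          rw [div_le_div_iff₀ (by positivity) (by positivity)]
          nlinarith
        linarith
  -- step facts
  have step : ∀ k, 0 < b' k ∧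
      ((b' k : ℝ))⁻¹ ≤ g k - T (N + k + 1) ∧
      (g k - T (N + k + 1)) - (g k - T (N + k + 1))^2 ≤ ((b' k : ℝ))⁻¹ ∧
      1/(a (N + k) : ℝ) ≤ g k - T (N + k + 1) ∧
      (g k - T (N + k + 1))^2 ≤ 2/(a (N + k) : ℝ)^2 ∧
      g (k+1) - T (N + k + 1) ≤ 2/(a (N + k) : ℝ)^2 := by
    intro k
    obtain ⟨ih1, ih2⟩ := inv k
    set n := N + k with hn
    have hMn : M ≤ n := by omega
    obtain ⟨hg1, hg2⟩ := hM n hMn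
    have han := haR n
    have hvlb : 1/(a n : ℝ) ≤ g k - T (n+1) := by
      rw [hTrec n] at ih1; linarith
    have hvub : g k - T (n+1) ≤ 1/(a n : ℝ) + 1/(10 * a n) := by
      rw [hTrec n] at ih2; linarith
    have hvpos : 0 < g k - T (n+1) := lt_of_lt_of_le (by positivity) hvlb
    obtain ⟨hbpos, hble, hbge⟩ := ceil_inv_bounds hvpos
    have hb'eq : (b' k : ℝ) = (⌈(g k - T (n+1))⁻¹⌉₊ : ℝ) := rfl
    have hA1 : (0:ℝ) < 1/(a n : ℝ) := by positivity
    have hv2 : g k - T (n+1) ≤ (11/10) * (1/(a n : ℝ)) := by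
      have he2 : 1/(10*(a n : ℝ)) = (1/10) * (1/(a n : ℝ)) := by ring
      linarith
    have hsq : (g k - T (n+1))^2 ≤ 2 / (a n : ℝ)^2 := by
      have he3 : (2:ℝ) / (a n : ℝ)^2 = 2 * (1/(a n : ℝ))^2 := by ring
      nlinarith [hvpos.le, hv2, hA1]
    refine ⟨hbpos, by rw [hb'eq]; exact hble, by rw [hb'eq]; exact hbge, hvlb, hsq, ?_⟩
    rw [hgsucc k, hb'eq]
    have := hbge
    linarith
  clear_value g b'
  -- the sequence b
  set b : ℕ → ℕ := fun n => if n < N then a n else b' (n - N) with hbdef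
  have hbN : ∀ n, N ≤ n → b n = b' (n - N) := by
    intro n hn; simp only [hbdef]; rw [if_neg (by omega)]
  have hbpos : ∀ n, 0 < b n := by
    intro n
    by_cases h : n < N
    · simp only [hbdef]; rw [if_pos h]; exact hpos n
    · rw [hbN n (by omega)]; exact (step (n - N)).1
  refine ⟨b, hbpos, ?_, ?_⟩
  · -- tendsto b n / a n → 1
    -- key bound for m ≥ N
    have key : ∀ m, N ≤ m →
        1/(a (m+1) : ℝ) - 2/(a m : ℝ)^2 ≤ ((b (m+1) : ℝ))⁻¹ ∧
        ((b (m+1) : ℝ))⁻¹ ≤ 1/(a (m+1) : ℝ) + 2/(a m : ℝ)^2 := by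
      intro m hm
      set k := m - N with hk
      have hmk : m = N + k := by omega
      have hbm : b (m+1) = b' (k+1) := by
        rw [hbN (m+1) (by omega)]; congr 1; omega
      obtain ⟨_, s1, s2, s4, s3, _⟩ := step (k+1)
      obtain ⟨_, _, _, _, _, s5⟩ := step k
      rw [show N + (k+1) = N + k + 1 by omega] at s1 s2 s4 s3
      rw [show N + k + 1 + 1 = N + k + 2 by omega] at s1 s2 s4 s3
      have hrec : T (N + k + 1) = 1/(a (N+k+1) : ℝ) + T (N + k + 2) := hTrec (N+k+1)
      have hmono2 : (a (N+k) : ℝ) ≤ (a (N+k+1) : ℝ) := by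
        exact_mod_cast (hmono (by omega : N+k < N+k+1)).le
      have hposk := haR (N+k)
      have hposk1 := haR (N+k+1)
      have hsqmono : 2/(a (N+k+1) : ℝ)^2 ≤ 2/(a (N+k) : ℝ)^2 := by
        gcongr
      constructor
      · -- lower bound
        rw [hbm, hmk]
        calc 1/(a (N+k+1) : ℝ) - 2/(a (N+k) : ℝ)^2
            ≤ 1/(a (N+k+1) : ℝ) - 2/(a (N+k+1) : ℝ)^2 := by linarith
          _ ≤ (g (k+1) - T (N+k+2)) - (g (k+1) - T (N+k+2))^2 := by
              nlinarith [s4, s3]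
          _ ≤ ((b' (k+1) : ℝ))⁻¹ := s2
      · rw [hbm, hmk]
        calc ((b' (k+1) : ℝ))⁻¹ ≤ g (k+1) - T (N+k+2) := s1
          _ = (g (k+1) - T (N+k+1)) + 1/(a (N+k+1) : ℝ) := by rw [hrec]; ring
          _ ≤ 1/(a (N+k+1) : ℝ) + 2/(a (N+k) : ℝ)^2 := by linarith
    -- squeeze for a(m+1)/b(m+1)
    have H1 : Tendsto (fun m => (a (m+1) : ℝ) * ((b (m+1) : ℝ))⁻¹) atTop (𝓝 1) := by
      have hlo : Tendsto (fun m => 1 - 2 * ((a (m+1) : ℝ)/(a m : ℝ)^2)) atTop (𝓝 1) := by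
        have h0 : Tendsto (fun _ : ℕ => (1:ℝ)) atTop (𝓝 1) := tendsto_const_nhds
        have := h0.sub (hgrow.const_mul 2)
        simpa using this
      have hhi : Tendsto (fun m => 1 + 2 * ((a (m+1) : ℝ)/(a m : ℝ)^2)) atTop (𝓝 1) := by
        have h0 : Tendsto (fun _ : ℕ => (1:ℝ)) atTop (𝓝 1) := tendsto_const_nhds
        have := h0.add (hgrow.const_mul 2)
        simpa using this
      refine tendsto_of_tendsto_of_tendsto_of_le_of_le' hlo hhi ?_ ?_
      · filter_upwards [eventually_ge_atTop N] with m hm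
        obtain ⟨h1, _⟩ := key m hm
        have hA := haR (m+1)
        have hAm := haR m
        have h2 := mul_le_mul_of_nonneg_left h1 hA.le
        calc 1 - 2 * ((a (m+1) : ℝ)/(a m : ℝ)^2)
            = (a (m+1) : ℝ) * (1/(a (m+1) : ℝ) - 2/(a m : ℝ)^2) := by
              field_simp
          _ ≤ (a (m+1) : ℝ) * ((b (m+1) : ℝ))⁻¹ := h2
      · filter_upwards [eventually_ge_atTop N] with m hm
        obtain ⟨_, h1⟩ := key m hm
        have hA := haR (m+1)
        have hAm := haR m
        have h2 := mul_le_mul_of_nonneg_left h1 hA.le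
        calc (a (m+1) : ℝ) * ((b (m+1) : ℝ))⁻¹
            ≤ (a (m+1) : ℝ) * (1/(a (m+1) : ℝ) + 2/(a m : ℝ)^2) := h2
          _ = 1 + 2 * ((a (m+1) : ℝ)/(a m : ℝ)^2) := by field_simp
    have H2 : Tendsto (fun m => (b (m+1) : ℝ) / (a (m+1) : ℝ)) atTop (𝓝 1) := by
      have := H1.inv₀ one_ne_zero
      simp only [mul_inv, inv_inv, inv_one] at this
      have heq : (fun m => ((a (m+1) : ℝ))⁻¹ * (b (m+1) : ℝ)) =
          fun m => (b (m+1) : ℝ) / (a (m+1) : ℝ) := by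
        funext m; rw [div_eq_mul_inv]; ring
      rwa [heq] at this
    exact (tendsto_add_atTop_iff_nat 1).1 H2
  · -- rational sum
    have hpartial : ∀ k, ∑ j ∈ range k, ((b' j : ℝ))⁻¹ = (q0 : ℝ) - g k := by
      intro k
      induction k with
      | zero => simp [hg0]
      | succ k ih => rw [sum_range_succ, ih, hgsucc k]; ring
    -- g → 0
    have TN : Tendsto (fun k => T (N + k)) atTop (𝓝 0) := by
      have := hTto0.comp (tendsto_add_atTop_nat N)
      have heq : (fun k => T (N + k)) = T ∘ (fun k => k + N) := by
        funext k; simp [Nat.add_comm]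
      rwa [heq]
    have inv10 : Tendsto (fun k => 1/(10 * (a (N + k) : ℝ))) atTop (𝓝 0) := by
      have aat : Tendsto (fun k => a (N + k)) atTop atTop :=
        (hmono.comp (fun x y h => Nat.add_lt_add_left h N : StrictMono (fun k => N + k))).tendsto_atTop
      have aatR : Tendsto (fun k => ((a (N + k) : ℕ) : ℝ)) atTop atTop :=
        tendsto_natCast_atTop_atTop.comp aat
      have big : Tendsto (fun k => 10 * (a (N + k) : ℝ)) atTop atTop :=
        aatR.const_mul_atTop (by norm_num)
      refine big.inv_tendsto_atTop.congr (fun k => ?_)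
      simp [Pi.inv_apply, one_div]
    have gto0 : Tendsto g atTop (𝓝 0) := by
      have hub : Tendsto (fun k => T (N + k) + 1/(10 * (a (N + k) : ℝ))) atTop (𝓝 0) := by
        simpa using TN.add inv10
      exact tendsto_of_tendsto_of_tendsto_of_le_of_le TN hub
        (fun k => (inv k).1) (fun k => (inv k).2)
    have hsum' : HasSum (fun k => ((b' k : ℝ))⁻¹) (q0 : ℝ) := by
      rw [hasSum_iff_tendsto_nat_of_nonneg (fun i => by positivity)]
      have : Tendsto (fun k => (q0 : ℝ) - g k) atTop (𝓝 ((q0 : ℝ) - 0)) :=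
        tendsto_const_nhds.sub gto0
      simp only [sub_zero] at this
      exact this.congr (fun k => (hpartial k).symm)
    have hshift : (fun n => (1 : ℝ)/(b (n + N))) = fun n => ((b' n : ℝ))⁻¹ := by
      funext n
      rw [hbN (n + N) (by omega), one_div, show n + N - N = n from by omega]
    have hs2 : HasSum (fun n => (1 : ℝ)/(b (n + N))) (q0 : ℝ) := by rw [hshift]; exact hsum'
    have hs3 := (hasSum_nat_add_iff (f := fun n => (1 : ℝ)/(b n)) N).1 hs2
    have hfin : ∑ i ∈ range N, (1 : ℝ)/(b i) = ((∑ i ∈ range N, (1 : ℚ)/(a i) : ℚ) : ℝ) := by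
      push_cast
      refine Finset.sum_congr rfl (fun i hi => ?_)
      have : b i = a i := by
        simp only [hbdef]; rw [if_pos (mem_range.1 hi)]
      rw [this]
    refine ⟨q0 + ∑ i ∈ range N, (1 : ℚ)/(a i), ?_⟩
    rw [hs3.tsum_eq, hfin]
    push_cast
    ring
end

section
/- Let (a_n) be a strictly increasing sequence of positive integers such that ∑_n 1/a_n converges and liminf_{n→∞} a_n² ∑_{k>n} 1/a_k² > 0. Then there exists a bounded sequence of positive integers (b_n) such that ∑_{n=1}^∞ 1/(a_n + b_n) is a rational number. -/
open Filter
open scoped Topology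

/-- If `(a_n)` is strictly increasing with `∑ 1/a_n < ∞` and
`liminf a_n² ∑_{k>n} 1/a_k² > 0`, then there is a bounded sequence of positive
integers `(b_n)` with `∑ 1/(a_n + b_n)` rational. -/
theorem stmt_8 (a : ℕ → ℕ) (hmono : StrictMono a) (hpos : ∀ n, 0 < a n)
    (hsum : Summable fun n => (1 : ℝ) / (a n))
    (hliminf : ∃ c : ℝ, 0 < c ∧ ∀ᶠ n in atTop,
      c ≤ (a n : ℝ) ^ 2 * ∑' k : ℕ, (1 : ℝ) / (a (n + 1 + k) : ℝ) ^ 2) :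
    ∃ b : ℕ → ℕ, (∀ n, 0 < b n) ∧ (∃ C : ℕ, ∀ n, b n ≤ C) ∧
      ∃ q : ℚ, (∑' n : ℕ, (1 : ℝ) / (a n + b n)) = q := by
  classical
  obtain ⟨c, hc, hev⟩ := hliminf
  rw [eventually_atTop] at hev
  obtain ⟨N₀, hN₀⟩ := hev
  have hA1 : ∀ n, (1 : ℝ) ≤ (a n : ℝ) := fun n => by exact_mod_cast hpos n
  have hA0 : ∀ n, (0 : ℝ) < (a n : ℝ) := fun n => lt_of_lt_of_le one_pos (hA1 n)
  have hsum_shift : ∀ (g : ℕ → ℝ), Summable g → ∀ n, Summable fun k => g (n + k) :=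
    fun g hg n => ((summable_nat_add_iff n).2 hg).congr fun k => by rw [add_comm]
  have hsumc : ∀ d : ℕ, Summable fun n => (1 : ℝ) / ((a n : ℝ) + d) := by
    intro d
    refine hsum.of_nonneg_of_le (fun n => by positivity) fun n => ?_
    apply one_div_le_one_div_of_le (hA0 n)
    have : (0:ℝ) ≤ (d : ℝ) := Nat.cast_nonneg d
    linarith
  have hsumsq : Summable fun n => (1 : ℝ) / (a n : ℝ) ^ 2 := by
    refine hsum.of_nonneg_of_le (fun n => by positivity) fun n => ?_
    apply one_div_le_one_div_of_le (hA0 n)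
    nlinarith [hA1 n]
  -- choose B
  set B : ℕ := ⌈4 / c⌉₊ + 1 with hBdef
  have hceil : 1 ≤ ⌈4 / c⌉₊ := Nat.one_le_ceil_iff.2 (by positivity)
  have hB1 : 1 ≤ B := by omega
  have hB2 : 2 ≤ B := by omega
  have hB1R : (1 : ℝ) ≤ (B : ℝ) := by exact_mod_cast hB1
  have hBc : 4 ≤ c * ((B : ℝ) - 1) := by
    have h1 : 4 / c ≤ (⌈4 / c⌉₊ : ℝ) := Nat.le_ceil _
    have h2 : ((B : ℝ) - 1) = (⌈4 / c⌉₊ : ℝ) := by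
      rw [hBdef]; push_cast; ring
    rw [h2]
    calc (4 : ℝ) = c * (4 / c) := by field_simp
    _ ≤ c * (⌈4 / c⌉₊ : ℝ) := by exact mul_le_mul_of_nonneg_left h1 hc.le
  -- choose N
  set N : ℕ := max N₀ B with hNdef
  have hNB : ∀ n, N ≤ n → (B : ℝ) ≤ (a n : ℝ) := by
    intro n hn
    have h1 : B ≤ n := le_trans (le_max_right _ _) hn
    have h2 : n ≤ a n := hmono.le_apply
    exact_mod_cast le_trans h1 h2
  have hNc : ∀ n, N ≤ n →
      c ≤ (a n : ℝ) ^ 2 * ∑' k : ℕ, (1 : ℝ) / (a (n + 1 + k) : ℝ) ^ 2 := by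
    intro n hn
    exact hN₀ n (le_trans (le_max_left _ _) hn)
  -- tails
  set L : ℕ → ℝ := fun n => ∑' k : ℕ, (1 : ℝ) / ((a (n + k) : ℝ) + B) with hLdef
  set U : ℕ → ℝ := fun n => ∑' k : ℕ, (1 : ℝ) / ((a (n + k) : ℝ) + 1) with hUdef
  have hLS : ∀ n, Summable fun k => (1 : ℝ) / ((a (n + k) : ℝ) + B) :=
    fun n => hsum_shift _ (hsumc B) n
  have hUS : ∀ n, Summable fun k => (1 : ℝ) / ((a (n + k) : ℝ) + 1) := by
    intro n
    have := hsum_shift _ (hsumc 1) n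
    simpa using this
  have hL0 : ∀ n, 0 ≤ L n := by
    intro n; simp only [hLdef]
    exact tsum_nonneg fun k => by positivity
  have hUrec : ∀ n, U n = 1 / ((a n : ℝ) + 1) + U (n + 1) := by
    intro n
    simp only [hUdef]
    have h2 : ∑' k : ℕ, (1 : ℝ) / ((a (n + (k + 1)) : ℝ) + 1)
        = ∑' k : ℕ, (1 : ℝ) / ((a (n + 1 + k) : ℝ) + 1) :=
      tsum_congr fun k => by rw [show n + (k + 1) = n + 1 + k from by omega]
    rw [Summable.tsum_eq_zero_add (hUS n), Nat.add_zero, h2]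
  have hLrec : ∀ n, L n = 1 / ((a n : ℝ) + B) + L (n + 1) := by
    intro n
    simp only [hLdef]
    have h2 : ∑' k : ℕ, (1 : ℝ) / ((a (n + (k + 1)) : ℝ) + (B : ℝ))
        = ∑' k : ℕ, (1 : ℝ) / ((a (n + 1 + k) : ℝ) + (B : ℝ)) :=
      tsum_congr fun k => by rw [show n + (k + 1) = n + 1 + k from by omega]
    rw [Summable.tsum_eq_zero_add (hLS n), Nat.add_zero, h2]
  have hLtend : Tendsto L atTop (𝓝 0) := by
    have := tendsto_sum_nat_add (fun n => (1 : ℝ) / ((a n : ℝ) + B))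
    exact this.congr fun i => tsum_congr fun k => by rw [add_comm k i]
  have hUtend : Tendsto U atTop (𝓝 0) := by
    have := tendsto_sum_nat_add (fun n => (1 : ℝ) / ((a n : ℝ) + 1))
    exact this.congr fun i => tsum_congr fun k => by rw [add_comm k i]
  -- granularity
  have hgran : ∀ n, N ≤ n → 1 / (a n : ℝ) ^ 2 ≤ U (n + 1) - L (n + 1) := by
    intro n hn
    have hT := hNc n hn
    have hTS : Summable fun k => (1 : ℝ) / (a (n + 1 + k) : ℝ) ^ 2 :=
      hsum_shift _ hsumsq (n + 1)
    have hT0 : (0 : ℝ) ≤ ∑' k : ℕ, (1 : ℝ) / (a (n + 1 + k) : ℝ) ^ 2 :=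
      tsum_nonneg fun k => by positivity
    have hsub : U (n + 1) - L (n + 1)
        = ∑' k : ℕ, ((1 : ℝ) / ((a (n + 1 + k) : ℝ) + 1) - 1 / ((a (n + 1 + k) : ℝ) + B)) := by
      simp only [hUdef, hLdef]
      rw [Summable.tsum_sub (hUS (n + 1)) (hLS (n + 1))]
    have hterm : ∀ k : ℕ, ((B : ℝ) - 1) / 4 * ((1 : ℝ) / (a (n + 1 + k) : ℝ) ^ 2)
        ≤ (1 : ℝ) / ((a (n + 1 + k) : ℝ) + 1) - 1 / ((a (n + 1 + k) : ℝ) + B) := by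
      intro k
      set x : ℝ := (a (n + 1 + k) : ℝ) with hx
      have hx1 : (1 : ℝ) ≤ x := hA1 _
      have hxB : (B : ℝ) ≤ x := hNB _ (by omega)
      have h1 : (1 : ℝ) / (x + 1) - 1 / (x + B) = ((B : ℝ) - 1) / ((x + 1) * (x + B)) := by
        rw [div_sub_div _ _ (by positivity) (by positivity)]
        congr 1
        ring
      have h2 : ((B : ℝ) - 1) / 4 * ((1 : ℝ) / x ^ 2) = ((B : ℝ) - 1) / (4 * x ^ 2) := by
        field_simp
      rw [h1, h2]
      apply div_le_div_of_nonneg_left (by linarith) (by positivity)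
      nlinarith
    have hsum1 : Summable fun k => ((B : ℝ) - 1) / 4 * ((1 : ℝ) / (a (n + 1 + k) : ℝ) ^ 2) :=
      hTS.mul_left _
    have hsum2 : Summable fun k =>
        ((1 : ℝ) / ((a (n + 1 + k) : ℝ) + 1) - 1 / ((a (n + 1 + k) : ℝ) + B)) :=
      (hUS (n + 1)).sub (hLS (n + 1))
    have hge : ((B : ℝ) - 1) / 4 * ∑' k : ℕ, (1 : ℝ) / (a (n + 1 + k) : ℝ) ^ 2
        ≤ U (n + 1) - L (n + 1) := by
      rw [hsub, ← tsum_mul_left]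
      exact Summable.tsum_le_tsum hterm hsum1 hsum2
    refine le_trans ?_ hge
    set A : ℝ := (a n : ℝ) with hA
    set T : ℝ := ∑' k : ℕ, (1 : ℝ) / (a (n + 1 + k) : ℝ) ^ 2 with hTdef
    have hApos : (0 : ℝ) < A := hA0 n
    rw [div_le_iff₀ (by positivity)]
    nlinarith [mul_le_mul_of_nonneg_right hT (show (0:ℝ) ≤ (B : ℝ) - 1 by linarith)]
  -- the greedy step
  have hstep : ∀ n, N ≤ n → ∀ r : ℝ, L n ≤ r → r ≤ U n →
      ∃ b : ℕ, (1 ≤ b ∧ b ≤ B) ∧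
        (L (n + 1) ≤ r - 1 / ((a n : ℝ) + b) ∧ r - 1 / ((a n : ℝ) + b) ≤ U (n + 1)) := by
    intro n hn r hLr hrU
    have hApos : (0 : ℝ) < (a n : ℝ) := hA0 n
    have hA1n : (1 : ℝ) ≤ (a n : ℝ) := hA1 n
    set P : ℕ → Prop := fun m => L (n + 1) ≤ r - 1 / ((a n : ℝ) + ((m : ℝ) + 1)) with hPdef
    have hPB : P (B - 1) := by
      simp only [hPdef]
      have hcast : (((B - 1 : ℕ) : ℝ) + 1) = (B : ℝ) := by
        rw [Nat.cast_sub hB1]; ring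
      rw [hcast]
      have := hLrec n
      linarith
    have hex : ∃ m, P m := ⟨B - 1, hPB⟩
    obtain ⟨m, hmspec, hmmin⟩ : ∃ m, P m ∧ ∀ k < m, ¬ P k :=
      ⟨Nat.find hex, Nat.find_spec hex, fun k hk => Nat.find_min hex hk⟩
    have hmle : m ≤ B - 1 := by
      by_contra h
      exact (hmmin (B - 1) (by omega)) hPB
    refine ⟨m + 1, ⟨by omega, by omega⟩, ?_, ?_⟩
    · have : ((m + 1 : ℕ) : ℝ) = (m : ℝ) + 1 := by push_cast; ring
      rw [this]
      exact hmspec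
    · have hcast : ((m + 1 : ℕ) : ℝ) = (m : ℝ) + 1 := by push_cast; ring
      rw [hcast]
      rcases Nat.eq_zero_or_pos m with h0 | hpos'
      · rw [h0]
        have := hUrec n
        push_cast
        linarith
      · obtain ⟨m', rfl⟩ : ∃ m', m = m' + 1 := ⟨m - 1, by omega⟩
        have hnot : ¬ P m' := hmmin m' (by omega)
        simp only [hPdef, not_le] at hnot
        have hg := hgran n hn
        set x : ℝ := (a n : ℝ)
        have hgap : 1 / (x + ((m' : ℝ) + 1)) - 1 / (x + ((m' : ℝ) + 1 + 1))
            ≤ 1 / x ^ 2 := by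
          have hm'0 : (0 : ℝ) ≤ (m' : ℝ) := Nat.cast_nonneg m'
          have heq : 1 / (x + ((m' : ℝ) + 1)) - 1 / (x + ((m' : ℝ) + 1 + 1))
              = 1 / ((x + ((m' : ℝ) + 1)) * (x + ((m' : ℝ) + 1 + 1))) := by
            rw [div_sub_div _ _ (by positivity) (by positivity)]
            congr 1
            ring
          rw [heq]
          apply one_div_le_one_div_of_le (by positivity)
          nlinarith
        push_cast
        push_cast at hnot
        linarith
  -- pick the rational target
  have hLUstrict : L N < U N := by
    simp only [hLdef, hUdef]
    refine Summable.tsum_lt_tsum (f := fun k => (1:ℝ)/((a (N+k):ℝ) + B))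
      (i := 0) (fun k => ?_) ?_ (hLS N) (hUS N)
    · apply one_div_le_one_div_of_le (by positivity)
      linarith [hB1R]
    · apply one_div_lt_one_div_of_lt (by positivity)
      have : (2 : ℝ) ≤ (B : ℝ) := by exact_mod_cast hB2
      linarith
  obtain ⟨q', hq'1, hq'2⟩ := exists_rat_btwn hLUstrict
  -- recursive construction
  choose! bfun hbf using hstep
  set rr : ℕ → ℝ := fun m =>
    Nat.rec (q' : ℝ) (fun m x => x - 1 / ((a (N + m) : ℝ) + (bfun (N + m) x : ℕ))) m with hrrdef
  have hrr0 : rr 0 = (q' : ℝ) := rfl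
  have hrrsucc : ∀ m, rr (m + 1) = rr m - 1 / ((a (N + m) : ℝ) + (bfun (N + m) (rr m) : ℕ)) :=
    fun m => rfl
  have hinv : ∀ m, L (N + m) ≤ rr m ∧ rr m ≤ U (N + m) := by
    intro m
    induction m with
    | zero => exact ⟨by simpa [hrr0] using hq'1.le, by simpa [hrr0] using hq'2.le⟩
    | succ m ih =>
      have hb := hbf (N + m) (Nat.le_add_right _ _) (rr m) ih.1 ih.2
      exact ⟨hb.2.1, hb.2.2⟩
  set bb : ℕ → ℕ := fun n => if n < N then 1 else bfun n (rr (n - N)) with hbbdef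
  have hbbge : ∀ n, N ≤ n → bb n = bfun n (rr (n - N)) := by
    intro n hn; simp only [hbbdef, if_neg (not_lt.2 hn)]
  have hinv' : ∀ n, N ≤ n → L n ≤ rr (n - N) ∧ rr (n - N) ≤ U n := by
    intro n hn
    have := hinv (n - N)
    rwa [show N + (n - N) = n from by omega] at this
  have hbprop : ∀ n, N ≤ n → (1 ≤ bb n ∧ bb n ≤ B) := by
    intro n hn
    rw [hbbge n hn]
    exact (hbf n hn (rr (n - N)) (hinv' n hn).1 (hinv' n hn).2).1
  refine ⟨bb, ?_, ⟨B, ?_⟩, ?_⟩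
  · intro n
    by_cases hn : n < N
    · simp [hbbdef, hn]
    · exact (hbprop n (not_lt.1 hn)).1
  · intro n
    by_cases hn : n < N
    · simp only [hbbdef, if_pos hn]; omega
    · exact (hbprop n (not_lt.1 hn)).2
  -- the sum is rational
  set f : ℕ → ℝ := fun n => (1 : ℝ) / ((a n : ℝ) + (bb n : ℕ)) with hfdef
  have hfS : Summable f := by
    refine hsum.of_nonneg_of_le (fun n => by positivity) fun n => ?_
    apply one_div_le_one_div_of_le (hA0 n)
    have : (0 : ℝ) ≤ ((bb n : ℕ) : ℝ) := Nat.cast_nonneg _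
    linarith
  have htail : ∀ m, ∑ k ∈ Finset.range m, f (N + k) = (q' : ℝ) - rr m := by
    intro m
    induction m with
    | zero => simp [hrr0]
    | succ m ih =>
      rw [Finset.sum_range_succ, ih, hrrsucc m]
      have : f (N + m) = 1 / ((a (N + m) : ℝ) + (bfun (N + m) (rr m) : ℕ)) := by
        simp only [hfdef]
        rw [hbbge (N + m) (Nat.le_add_right _ _), Nat.add_sub_cancel_left]
      rw [this]
      ring
  have hrrtend : Tendsto rr atTop (𝓝 0) := by
    have hmono' : Tendsto (fun m : ℕ => N + m) atTop atTop :=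
      tendsto_atTop_mono (fun m => Nat.le_add_left m N) tendsto_id
    refine tendsto_of_tendsto_of_tendsto_of_le_of_le
      (hLtend.comp hmono') (hUtend.comp hmono') (fun m => (hinv m).1) (fun m => (hinv m).2)
  have hfS' : Summable fun k => f (N + k) := hsum_shift f hfS N
  have htsum_tail : ∑' k : ℕ, f (N + k) = (q' : ℝ) := by
    have h1 : Tendsto (fun m => ∑ k ∈ Finset.range m, f (N + k)) atTop
        (𝓝 (∑' k : ℕ, f (N + k))) := hfS'.hasSum.tendsto_sum_nat
    have h2 : Tendsto (fun m => ∑ k ∈ Finset.range m, f (N + k)) atTop (𝓝 ((q' : ℝ) - 0)) := by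
      simp only [htail]
      exact tendsto_const_nhds.sub hrrtend
    rw [sub_zero] at h2
    exact tendsto_nhds_unique h1 h2
  refine ⟨(∑ n ∈ Finset.range N, (1 / (a n + 1) : ℚ)) + q', ?_⟩
  have hsplit : (∑ i ∈ Finset.range N, f i) + ∑' k : ℕ, f (N + k) = ∑' n : ℕ, f n := by
    have h := Summable.sum_add_tsum_nat_add N hfS
    have h3 : ∑' k : ℕ, f (k + N) = ∑' k : ℕ, f (N + k) := tsum_congr fun k => by rw [add_comm]
    rw [← h3]
    exact h
  have hgoal : (∑' n : ℕ, f n)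
      = (∑ n ∈ Finset.range N, ((1 : ℝ) / ((a n : ℝ) + 1))) + (q' : ℝ) := by
    rw [← hsplit, htsum_tail]
    congr 1
    refine Finset.sum_congr rfl fun n hn => ?_
    have hn' : n < N := Finset.mem_range.1 hn
    have hb1 : bb n = 1 := by simp only [hbbdef]; rw [if_pos hn']
    simp only [hfdef, hb1, Nat.cast_one]
  rw [show (∑' n : ℕ, (1 : ℝ) / ((a n : ℝ) + (bb n : ℕ))) = ∑' n : ℕ, f n from rfl]
  rw [hgoal]
  push_cast
  ring
end

section
/- Let (a_n) be a strictly increasing sequence of positive integers with limsup_{n→∞} a_{n+1}/a_n < ∞ and ∑_n 1/a_n < ∞. Then there exists a bounded sequence of positive integers (b_n) such that ∑_{n=1}^∞ 1/(a_n + b_n) is rational. -/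
/-!
Let `C ≥ 1` bound the ratios `a (n+1) / a n` and take `B` with `4 C² ≤ B - 1`; after discarding
finitely many terms, also `B ≤ a n`. Then changing `b_n` by one moves `1 / (a n + b_n)` by at
most `1 / (a n + 1)²`, which is at most the first term of the gap
`∑_{k>n} 1/(a k + 1) - ∑_{k>n} 1/(a k + B)` between the extreme tails. So a greedy choice of
`b_n ∈ [1, B]` keeps the remaining target between the two tails, which tend to `0`: every value
between `∑ 1/(a n + B)` and `∑ 1/(a n + 1)`, in particular a rational one, is attained.
-/

open Filter Set Topology

theorem exists_mem_Icc_of_step_le {g : ℕ → ℝ} {lo hi : ℝ} {d : ℕ} (h0 : g 0 ≤ hi)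
    (hd : lo ≤ g d) (hstep : ∀ k < d, g (k + 1) ≤ g k + (hi - lo)) :
    ∃ k ≤ d, g k ∈ Icc lo hi := by
  induction d with
  | zero => exact ⟨0, le_rfl, hd, h0⟩
  | succ d ih =>
    by_cases hlo : lo ≤ g d
    · obtain ⟨k, hkd, hk⟩ := ih hlo fun k hk => hstep k (by omega)
      exact ⟨k, by omega, hk⟩
    · exact ⟨d + 1, le_rfl, hd, by linarith [hstep d d.lt_succ_self]⟩

noncomputable def tailSum (u : ℕ → ℝ) (n : ℕ) : ℝ := ∑' k, u (k + n)

theorem tailSum_eq_add {u : ℕ → ℝ} (hu : Summable u) (n : ℕ) :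
    tailSum u n = u n + tailSum u (n + 1) := by
  simp only [tailSum, ((summable_nat_add_iff n).2 hu).tsum_eq_zero_add, zero_add,
    add_right_comm _ 1 n, add_assoc]

theorem tailSum_mono {u v : ℕ → ℝ} (hu : Summable u) (hv : Summable v) (huv : v ≤ u) (n : ℕ) :
    tailSum v n ≤ tailSum u n :=
  ((summable_nat_add_iff n).2 hv).tsum_le_tsum (fun _ => huv _) ((summable_nat_add_iff n).2 hu)

theorem sub_le_tailSum_sub_tailSum {u v : ℕ → ℝ} (hu : Summable u) (hv : Summable v)
    (huv : v ≤ u) (n : ℕ) : u n - v n ≤ tailSum u n - tailSum v n := by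
  rw [tailSum_eq_add hu, tailSum_eq_add hv]
  linarith [tailSum_mono hu hv huv (n + 1)]

theorem tendsto_tailSum (u : ℕ → ℝ) : Tendsto (tailSum u) atTop (𝓝 0) :=
  tendsto_sum_nat_add u

noncomputable def greedyRemainder (f : ℕ → ℕ → ℝ) (c : ℕ → ℝ → ℕ) (t : ℝ) : ℕ → ℝ
  | 0 => t
  | n + 1 => greedyRemainder f c t n - f n (c n (greedyRemainder f c t n))

theorem sum_range_greedyRemainder (f : ℕ → ℕ → ℝ) (c : ℕ → ℝ → ℕ) (t : ℝ) (m : ℕ) :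
    ∑ k ∈ Finset.range m, f k (c k (greedyRemainder f c t k)) = t - greedyRemainder f c t m := by
  induction m with
  | zero => simp [greedyRemainder]
  | succ m ih => rw [Finset.sum_range_succ, ih, greedyRemainder]; ring

section Greedy

variable {f : ℕ → ℕ → ℝ} {B : ℕ}

theorem exists_sub_mem_Icc_tailSum (hB : 1 ≤ B) (h1 : Summable (f · 1)) (hsB : Summable (f · B))
    (hstep : ∀ n b, 1 ≤ b → b < B →
      f n b - f n (b + 1) ≤ tailSum (f · 1) (n + 1) - tailSum (f · B) (n + 1))
    {n : ℕ} {t : ℝ} (ht : t ∈ Icc (tailSum (f · B) n) (tailSum (f · 1) n)) :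
    ∃ b ∈ Icc 1 B, t - f n b ∈ Icc (tailSum (f · B) (n + 1)) (tailSum (f · 1) (n + 1)) := by
  rw [tailSum_eq_add hsB, tailSum_eq_add h1] at ht
  obtain ⟨k, hkB, hk⟩ := exists_mem_Icc_of_step_le (g := fun k => t - f n (k + 1)) (d := B - 1)
    (lo := tailSum (f · B) (n + 1)) (hi := tailSum (f · 1) (n + 1))
    (by linarith [ht.2]) (by rw [Nat.sub_add_cancel hB]; linarith [ht.1])
    fun k hk => by linarith [hstep n (k + 1) (by omega) (by omega)]
  exact ⟨k + 1, ⟨by omega, by omega⟩, hk⟩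

theorem exists_hasSum_of_sub_le_tailSum_sub (hB : 1 ≤ B) (hf : ∀ n b, 0 ≤ f n b)
    (h1 : Summable (f · 1)) (hsB : Summable (f · B))
    (hstep : ∀ n b, 1 ≤ b → b < B →
      f n b - f n (b + 1) ≤ tailSum (f · 1) (n + 1) - tailSum (f · B) (n + 1))
    {t : ℝ} (ht : t ∈ Icc (∑' n, f n B) (∑' n, f n 1)) :
    ∃ b : ℕ → ℕ, (∀ n, b n ∈ Icc 1 B) ∧ HasSum (fun n => f n (b n)) t := by
  have hchoice : ∀ n t, ∃ b ∈ Icc 1 B, t ∈ Icc (tailSum (f · B) n) (tailSum (f · 1) n) →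
      t - f n b ∈ Icc (tailSum (f · B) (n + 1)) (tailSum (f · 1) (n + 1)) := by
    intro n t
    by_cases ht : t ∈ Icc (tailSum (f · B) n) (tailSum (f · 1) n)
    · obtain ⟨b, hb, hbt⟩ := exists_sub_mem_Icc_tailSum hB h1 hsB hstep ht
      exact ⟨b, hb, fun _ => hbt⟩
    · exact ⟨1, ⟨le_rfl, hB⟩, fun h => absurd h ht⟩
  choose c hcB hc using hchoice
  set τ := greedyRemainder f c t
  have hτ : ∀ n, τ n ∈ Icc (tailSum (f · B) n) (tailSum (f · 1) n) := by
    intro n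
    induction n with
    | zero => exact ht
    | succ n ih => exact hc n _ ih
  have hτ0 : Tendsto τ atTop (𝓝 0) :=
    tendsto_of_tendsto_of_tendsto_of_le_of_le (tendsto_tailSum _) (tendsto_tailSum _)
      (fun n => (hτ n).1) (fun n => (hτ n).2)
  refine ⟨fun n => c n (τ n), fun n => hcB n _, ?_⟩
  rw [hasSum_iff_tendsto_nat_of_nonneg (fun n => hf _ _)]
  simpa [τ, sum_range_greedyRemainder] using (tendsto_const_nhds (x := t)).sub hτ0

end Greedy

theorem one_div_sub_one_div_add_one_le {x b : ℝ} (hx : 0 ≤ x) (hb : 1 ≤ b) :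
    1 / (x + b) - 1 / (x + b + 1) ≤ 1 / (x + 1) ^ 2 := by
  rw [div_sub_div _ _ (by positivity) (by positivity),
    div_le_div_iff₀ (by positivity) (by positivity)]
  nlinarith

theorem one_div_sq_le_one_div_sub_one_div {x y B C : ℝ} (hx : 0 ≤ x) (hC : 1 ≤ C) (hy : B ≤ y)
    (hxy : x ≤ C * y) (hBC : 4 * C ^ 2 ≤ B - 1) :
    1 / (y + 1) ^ 2 ≤ 1 / (x + 1) - 1 / (x + B) := by
  have hB : 4 ≤ B - 1 := by nlinarith
  have hy1 : 1 ≤ y := by linarith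
  have hx1 : x + 1 ≤ 2 * C * y := by nlinarith
  have hxB : x + B ≤ 2 * C * y := by nlinarith
  have hprod : (x + 1) * (x + B) ≤ (B - 1) * (y + 1) ^ 2 := by
    calc (x + 1) * (x + B) ≤ (2 * C * y) * (2 * C * y) := by gcongr; linarith
      _ = 4 * C ^ 2 * y ^ 2 := by ring
      _ ≤ (B - 1) * (y + 1) ^ 2 := by gcongr; linarith
  rw [div_sub_div _ _ (by positivity) (by linarith), div_le_div_iff₀ (by positivity) (by nlinarith)]
  nlinarith

theorem summable_one_div_add {u : ℕ → ℝ} (hu : ∀ n, 0 < u n)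
    (hsum : Summable fun n => 1 / u n) {c : ℝ} (hc : 0 ≤ c) :
    Summable fun n => 1 / (u n + c) :=
  hsum.of_nonneg_of_le (fun n => by have := hu n; positivity)
    fun n => one_div_le_one_div_of_le (hu n) (by linarith)

theorem tsum_one_div_add_lt_tsum_one_div_add {u : ℕ → ℝ} (hu : ∀ n, 0 < u n)
    (hsum : Summable fun n => 1 / u n) {c d : ℝ} (hc : 0 ≤ c) (hcd : c < d) :
    ∑' n, 1 / (u n + d) < ∑' n, 1 / (u n + c) :=
  (summable_one_div_add hu hsum (hc.trans hcd.le)).tsum_lt_tsum (i := 0)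
    (fun n => one_div_le_one_div_of_le (by linarith [hu n]) (by linarith))
    (one_div_lt_one_div_of_lt (by linarith [hu 0]) (by linarith)) (summable_one_div_add hu hsum hc)

theorem exists_hasSum_one_div_add (a : ℕ → ℕ) {B : ℕ} {C : ℝ} (hC : 1 ≤ C)
    (hBC : 4 * C ^ 2 ≤ B - 1) (haB : ∀ n, B ≤ a n) (hratio : ∀ n, (a (n + 1) : ℝ) ≤ C * a n)
    (hsum : Summable fun n => (1 : ℝ) / a n) {t : ℝ}
    (ht : t ∈ Icc (∑' n, 1 / ((a n : ℝ) + B)) (∑' n, 1 / ((a n : ℝ) + 1))) :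
    ∃ b : ℕ → ℕ, (∀ n, b n ∈ Icc 1 B) ∧ HasSum (fun n => 1 / ((a n : ℝ) + b n)) t := by
  have hB : (1 : ℝ) ≤ B := by nlinarith
  have ha : ∀ n, (B : ℝ) ≤ a n := fun n => by exact_mod_cast haB n
  have hsummable (b : ℕ) : Summable fun n => 1 / ((a n : ℝ) + b) :=
    summable_one_div_add (fun n => by linarith [ha n]) hsum b.cast_nonneg
  refine exists_hasSum_of_sub_le_tailSum_sub (f := fun n b => 1 / ((a n : ℝ) + b))
    (Nat.one_le_cast.1 hB) (fun n b => by positivity) (by simpa using hsummable 1)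
    (hsummable B) (fun n b hb _ => ?_) (by simpa using ht)
  calc 1 / ((a n : ℝ) + b) - 1 / ((a n : ℝ) + (b + 1 : ℕ)) ≤ 1 / ((a n : ℝ) + 1) ^ 2 := by
        rw [Nat.cast_succ, ← add_assoc]
        exact one_div_sub_one_div_add_one_le (Nat.cast_nonneg _) (Nat.one_le_cast.2 hb)
    _ ≤ 1 / ((a (n + 1) : ℝ) + 1) - 1 / ((a (n + 1) : ℝ) + B) :=
        one_div_sq_le_one_div_sub_one_div (Nat.cast_nonneg _) hC (ha n) (hratio n) hBC
    _ ≤ _ := by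
        simpa using sub_le_tailSum_sub_tailSum (hsummable 1) (hsummable B)
          (fun n => one_div_le_one_div_of_le (by positivity) (by gcongr; linarith)) (n + 1)

theorem hasSum_ite_of_hasSum_nat_add {f : ℕ → ℕ → ℝ} {b : ℕ → ℕ} {c N : ℕ} {t : ℝ}
    (h : HasSum (fun n => f (n + N) (b n)) (t - ∑ i ∈ Finset.range N, f i c)) :
    HasSum (fun n => f n (if n < N then c else b (n - N))) t := by
  have hhead : ∑ i ∈ Finset.range N, f i (if i < N then c else b (i - N)) =
      ∑ i ∈ Finset.range N, f i c :=
    Finset.sum_congr rfl fun i hi => by rw [if_pos (Finset.mem_range.1 hi)]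
  rw [← hasSum_nat_add_iff' N, hhead]
  simpa using h

theorem exists_le_add_and_ratio_le {a : ℕ → ℕ} (hmono : StrictMono a) {C₀ : ℝ}
    (hC₀ : ∀ᶠ n in atTop, (a (n + 1) : ℝ) / a n ≤ C₀) (B : ℕ) :
    ∃ N, ∀ n, B ≤ a (n + N) ∧ (a (n + 1 + N) : ℝ) ≤ max C₀ 1 * a (n + N) := by
  obtain ⟨N, hN⟩ := eventually_atTop.1 <| hC₀.and <|
    (hmono.tendsto_atTop.eventually_ge_atTop B).and (hmono.tendsto_atTop.eventually_gt_atTop 0)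
  refine ⟨N, fun n => ?_⟩
  obtain ⟨hratio, hB, hpos⟩ := hN (n + N) (by omega)
  refine ⟨hB, ?_⟩
  rw [add_right_comm]
  calc (a (n + N + 1) : ℝ) ≤ C₀ * a (n + N) := (div_le_iff₀ (Nat.cast_pos.2 hpos)).1 hratio
    _ ≤ max C₀ 1 * a (n + N) := by gcongr; exact le_max_left C₀ 1

theorem stmt_9_general (a : ℕ → ℕ) (hmono : StrictMono a)
    (hsum : Summable fun n => (1 : ℝ) / (a n))
    (hratio : ∃ C : ℝ, ∀ᶠ n in atTop, (a (n + 1) : ℝ) / (a n : ℝ) ≤ C) :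
    ∃ b : ℕ → ℕ, (∀ n, 0 < b n) ∧ (∃ C : ℕ, ∀ n, b n ≤ C) ∧
      ∃ q : ℚ, (∑' n : ℕ, (1 : ℝ) / (a n + b n)) = q := by
  obtain ⟨C₀, hC₀⟩ := hratio
  set C := max C₀ 1
  set B := ⌈4 * C ^ 2⌉₊ + 2
  have hB2 : 2 ≤ B := Nat.le_add_left 2 _
  have hBC : 4 * C ^ 2 ≤ (B : ℝ) - 1 := by push_cast [B]; linarith [Nat.le_ceil (4 * C ^ 2)]
  obtain ⟨N, hN⟩ := exists_le_add_and_ratio_le hmono hC₀ B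
  have hapos (n : ℕ) : (0 : ℝ) < a (n + N) := by
    exact_mod_cast two_pos.trans_le (hB2.trans (hN n).1)
  have hsum' : Summable fun n => (1 : ℝ) / a (n + N) := (summable_nat_add_iff N).2 hsum
  set s := ∑ i ∈ Finset.range N, (1 : ℝ) / (a i + 1)
  have hB1 : (1 : ℝ) < B := by exact_mod_cast hB2
  obtain ⟨q, hqL, hqU⟩ := exists_rat_btwn
    (add_lt_add_left (tsum_one_div_add_lt_tsum_one_div_add hapos hsum' zero_le_one hB1) s)
  obtain ⟨b, hbB, hb⟩ := exists_hasSum_one_div_add (fun n => a (n + N)) (le_max_right C₀ 1) hBC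
    (fun n => (hN n).1) (fun n => (hN n).2) hsum' (t := q - s) ⟨by linarith, by linarith⟩
  refine ⟨fun n => if n < N then 1 else b (n - N), fun n => ?_, ⟨B, fun n => ?_⟩, q,
    (hasSum_ite_of_hasSum_nat_add (f := fun n c => 1 / ((a n : ℝ) + c)) (c := 1)
      (by simpa [s] using hb)).tsum_eq⟩
  · dsimp only
    split_ifs
    exacts [one_pos, (hbB _).1]
  · dsimp only
    split_ifs
    exacts [by omega, (hbB _).2]

/-- No sequence of at most exponential growth is a Type 3 irrationality
sequence: if `(a_n)` is strictly increasing with `limsup a_{n+1}/a_n < ∞` and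
`∑ 1/a_n < ∞`, then some bounded positive integers `b_n` make
`∑ 1/(a_n + b_n)` rational. -/
theorem stmt_9 (a : ℕ → ℕ) (hmono : StrictMono a) (hpos : ∀ n, 0 < a n)
    (hsum : Summable fun n => (1 : ℝ) / (a n))
    (hratio : ∃ C : ℝ, ∀ᶠ n in atTop, (a (n + 1) : ℝ) / (a n : ℝ) ≤ C) :
    ∃ b : ℕ → ℕ, (∀ n, 0 < b n) ∧ (∃ C : ℕ, ∀ n, b n ≤ C) ∧
      ∃ q : ℚ, (∑' n : ℕ, (1 : ℝ) / (a n + b n)) = q :=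
  stmt_9_general a hmono hsum hratio
end

section
/- There exists a sequence (b_n) of integers with b_n ∈ {1,2,3,4,5} for every n ≥ 4 and b_n = 1 for n = 1,2,3 such that ∑_{n=1}^∞ 1/(2^n + b_n) = 3/4. -/
open Filter Finset Topology

noncomputable section Stmt10Aux

namespace Stmt10Aux

/-- Tail sum `∑_{k≥0} 1/(2^(n+k)+c)`. -/
def T (c : ℝ) (n : ℕ) : ℝ := ∑' k : ℕ, 1 / ((2:ℝ) ^ (n + k) + c)

lemma bound_aux (n k : ℕ) (c : ℝ) (hc : 0 ≤ c) :
    1 / ((2:ℝ) ^ (n + k) + c) ≤ (1/2:ℝ) ^ (n + k) := by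
  have h1 : (0:ℝ) < 2 ^ (n + k) := by positivity
  have e : ((1:ℝ)/2) ^ (n+k) = 1 / 2^(n+k) := by rw [div_pow, one_pow]
  rw [e]
  exact one_div_le_one_div_of_le h1 (by linarith)

lemma summable_geom_shift (n : ℕ) : Summable (fun k : ℕ => ((1:ℝ)/2) ^ (n + k)) := by
  simpa [pow_add] using summable_geometric_two.mul_left (((1:ℝ)/2)^n)

lemma summable_T (n : ℕ) (c : ℝ) (hc : 0 ≤ c) :
    Summable (fun k : ℕ => 1 / ((2:ℝ) ^ (n + k) + c)) := by
  refine Summable.of_nonneg_of_le (fun k => by positivity)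
    (fun k => bound_aux n k c hc) (summable_geom_shift n)

lemma geom_tail (n : ℕ) : (∑' k : ℕ, ((1:ℝ)/2) ^ (n + k)) = 2 * (1/2)^n := by
  simp only [pow_add, tsum_mul_left, tsum_geometric_two]
  ring

lemma T_le (n : ℕ) (c : ℝ) (hc : 0 ≤ c) : T c n ≤ 2 * (1/2)^n := by
  rw [T, ← geom_tail n]
  exact Summable.tsum_le_tsum (fun k => bound_aux n k c hc) (summable_T n c hc) (summable_geom_shift n)

lemma T_nonneg (n : ℕ) (c : ℝ) (hc : 0 ≤ c) : 0 ≤ T c n :=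
  tsum_nonneg (fun k => by positivity)

lemma T_rec (n : ℕ) (c : ℝ) (hc : 0 ≤ c) :
    T c n = 1 / ((2:ℝ)^n + c) + T c (n+1) := by
  rw [T, Summable.tsum_eq_zero_add (summable_T n c hc)]
  have ht : (∑' k : ℕ, 1/((2:ℝ)^(n+(k+1))+c)) = T c (n+1) := by
    rw [T]
    exact tsum_congr fun k => by rw [show n+(k+1) = (n+1)+k from by omega]
  rw [ht]
  norm_num

lemma T_mono (n : ℕ) (c c' : ℝ) (hc : 0 ≤ c) (hcc : c ≤ c') : T c' n ≤ T c n := by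
  refine Summable.tsum_le_tsum (fun k => ?_) (summable_T n c' (le_trans hc hcc)) (summable_T n c hc)
  have h1 : (0:ℝ) < 2 ^ (n + k) + c := by positivity
  exact one_div_le_one_div_of_le h1 (by linarith)

lemma width (n : ℕ) : 1 / (((2:ℝ)^n + 1) * ((2:ℝ)^n + 2)) ≤ T 1 (n+1) - T 5 (n+1) := by
  have hx : (1:ℝ) ≤ 2^n := one_le_pow₀ one_le_two
  have h1 : T 1 (n+1) = 1 / ((2:ℝ)^(n+1) + 1) + T 1 (n+2) := T_rec (n+1) 1 (by norm_num)
  have h5 : T 5 (n+1) = 1 / ((2:ℝ)^(n+1) + 5) + T 5 (n+2) := T_rec (n+1) 5 (by norm_num)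
  have hm : T 5 (n+2) ≤ T 1 (n+2) := T_mono (n+2) 1 5 (by norm_num) (by norm_num)
  have key : 1 / (((2:ℝ)^n + 1) * ((2:ℝ)^n + 2)) ≤ 1 / ((2:ℝ)^(n+1) + 1) - 1 / ((2:ℝ)^(n+1) + 5) := by
    set x := (2:ℝ)^n with hxdef
    have h2x : (2:ℝ)^(n+1) = 2*x := by rw [pow_succ]; ring
    rw [h2x]
    have hp1 : (0:ℝ) < 2*x + 1 := by linarith
    have hp5 : (0:ℝ) < 2*x + 5 := by linarith
    have e : 1/(2*x+1) - 1/(2*x+5) = 4/((2*x+1)*(2*x+5)) := by field_simp; ring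
    rw [e, div_le_div_iff₀ (by nlinarith) (by positivity)]
    nlinarith
  linarith

/-- Gap between consecutive available values. -/
lemma gap_le (x a : ℝ) (hx : 1 ≤ x) (ha : 1 ≤ a) :
    1/(x+a) - 1/(x+a+1) ≤ 1/((x+1)*(x+2)) := by
  have h1 : (0:ℝ) < x + a := by linarith
  have h2 : (0:ℝ) < x + a + 1 := by linarith
  have e : 1/(x+a) - 1/(x+a+1) = 1/((x+a)*(x+a+1)) := by field_simp; ring
  rw [e]
  apply one_div_le_one_div_of_le (by positivity)
  nlinarith

/-- The greedy step: from any remainder in `[T 5 n, T 1 n]` we can subtract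
`1/(2^n + b)` for some `b ∈ {1,…,5}` and land in `[T 5 (n+1), T 1 (n+1)]`. -/
lemma step (n : ℕ) (r : ℝ) (hA : T 5 n ≤ r) (hB : r ≤ T 1 n) :
    ∃ b : ℕ, 1 ≤ b ∧ b ≤ 5 ∧
      T 5 (n+1) ≤ r - 1/((2:ℝ)^n + b) ∧ r - 1/((2:ℝ)^n + b) ≤ T 1 (n+1) := by
  have hx : (1:ℝ) ≤ 2^n := one_le_pow₀ one_le_two
  set x := (2:ℝ)^n with hxdef
  have hw := width n
  have h5 : T 5 n = 1/(x+5) + T 5 (n+1) := T_rec n 5 (by norm_num)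
  have h1 : T 1 n = 1/(x+1) + T 1 (n+1) := T_rec n 1 (by norm_num)
  by_cases c1 : 1/(x+1) ≤ r - T 5 (n+1)
  · exact ⟨1, le_refl 1, by norm_num, by push_cast; linarith, by push_cast; linarith⟩
  by_cases c2 : 1/(x+2) ≤ r - T 5 (n+1)
  · refine ⟨2, by norm_num, by norm_num, by push_cast; linarith, ?_⟩
    have hg : 1/(x+1) - 1/(x+1+1) ≤ 1/((x+1)*(x+2)) := gap_le x 1 hx le_rfl
    push_cast
    have e : x + 1 + 1 = x + 2 := by ring
    rw [e] at hg
    linarith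
  by_cases c3 : 1/(x+3) ≤ r - T 5 (n+1)
  · refine ⟨3, by norm_num, by norm_num, by push_cast; linarith, ?_⟩
    have hg : 1/(x+2) - 1/(x+2+1) ≤ 1/((x+1)*(x+2)) := gap_le x 2 hx (by norm_num)
    push_cast
    have e : x + 2 + 1 = x + 3 := by ring
    rw [e] at hg
    linarith
  by_cases c4 : 1/(x+4) ≤ r - T 5 (n+1)
  · refine ⟨4, by norm_num, by norm_num, by push_cast; linarith, ?_⟩
    have hg : 1/(x+3) - 1/(x+3+1) ≤ 1/((x+1)*(x+2)) := gap_le x 3 hx (by norm_num)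
    push_cast
    have e : x + 3 + 1 = x + 4 := by ring
    rw [e] at hg
    linarith
  · refine ⟨5, by norm_num, by norm_num, by push_cast; linarith, ?_⟩
    have hg : 1/(x+4) - 1/(x+4+1) ≤ 1/((x+1)*(x+2)) := gap_le x 4 hx (by norm_num)
    push_cast
    have e : x + 4 + 1 = x + 5 := by ring
    rw [e] at hg
    linarith

open Classical in
def pick (n : ℕ) (r : ℝ) : ℕ :=
  if h : ∃ b : ℕ, 1 ≤ b ∧ b ≤ 5 ∧
      T 5 (n+1) ≤ r - 1/((2:ℝ)^n + b) ∧ r - 1/((2:ℝ)^n + b) ≤ T 1 (n+1)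
  then h.choose else 1

lemma pick_spec (n : ℕ) (r : ℝ) (hA : T 5 n ≤ r) (hB : r ≤ T 1 n) :
    1 ≤ pick n r ∧ pick n r ≤ 5 ∧
      T 5 (n+1) ≤ r - 1/((2:ℝ)^n + pick n r) ∧
      r - 1/((2:ℝ)^n + pick n r) ≤ T 1 (n+1) := by
  have h := step n r hA hB
  classical
  rw [pick, dif_pos h]
  exact h.choose_spec

/-- remaining target: `S k = 3/4 - ∑_{m=1}^{k+3} 1/(2^m+b_m)`. -/
def S : ℕ → ℝ
  | 0 => 19/180
  | k+1 => S k - 1/((2:ℝ)^(k+4) + pick (k+4) (S k))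

lemma base5 : T 5 4 ≤ 19/180 := by
  have h4 := T_rec 4 5 (by norm_num)
  have h5 := T_rec 5 5 (by norm_num)
  have h6 := T_rec 6 5 (by norm_num)
  have h7 := T_le 7 5 (by norm_num)
  norm_num at h4 h5 h6 h7
  linarith

lemma base1 : (19:ℝ)/180 ≤ T 1 4 := by
  have h4 := T_rec 4 1 (by norm_num)
  have h5 := T_rec 5 1 (by norm_num)
  have h6 := T_rec 6 1 (by norm_num)
  have h7 := T_rec 7 1 (by norm_num)
  have h8 := T_nonneg 8 1 (by norm_num)
  norm_num at h4 h5 h6 h7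
  linarith

lemma inv (k : ℕ) : T 5 (k+4) ≤ S k ∧ S k ≤ T 1 (k+4) := by
  induction k with
  | zero => exact ⟨base5, base1⟩
  | succ k ih =>
      have h := pick_spec (k+4) (S k) ih.1 ih.2
      exact ⟨h.2.2.1, h.2.2.2⟩

def bseq (n : ℕ) : ℕ := if n < 4 then 1 else pick n (S (n - 4))

lemma bseq_bounds (n : ℕ) (hn : 4 ≤ n) : 1 ≤ bseq n ∧ bseq n ≤ 5 := by
  have hk : n - 4 + 4 = n := by omega
  have h := inv (n - 4)
  rw [hk] at h
  have hs := pick_spec n (S (n-4)) h.1 h.2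
  rw [bseq, if_neg (by omega)]
  exact ⟨hs.1, hs.2.1⟩

def f (n : ℕ) : ℝ := 1 / (2 ^ (n + 1) + (bseq (n + 1) : ℝ))

lemma psum (N : ℕ) : ∑ n ∈ Finset.range (N + 3), f n = 3/4 - S N := by
  induction N with
  | zero =>
      norm_num [Finset.sum_range_succ, f, bseq, S]
  | succ N ih =>
      have e1 : N + 1 + 3 = (N + 3) + 1 := by omega
      rw [e1, Finset.sum_range_succ, ih]
      simp only [f]
      have e2 : N + 3 + 1 = N + 4 := by omega
      rw [e2]
      have hb : bseq (N + 4) = pick (N + 4) (S N) := by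
        rw [bseq, if_neg (by omega), Nat.add_sub_cancel]
      rw [hb]
      have hS : S (N + 1) = S N - 1/((2:ℝ)^(N+4) + pick (N+4) (S N)) := rfl
      rw [hS]
      ring

lemma S_nonneg (k : ℕ) : 0 ≤ S k := le_trans (T_nonneg (k+4) 5 (by norm_num)) (inv k).1

lemma S_le (k : ℕ) : S k ≤ (1/2:ℝ)^k := by
  have h := le_trans (inv k).2 (T_le (k+4) 1 (by norm_num))
  have e : 2 * ((1:ℝ)/2)^(k+4) = (1/2)^k * (1/8) := by
    rw [pow_add]; norm_num; ring
  have hp : (0:ℝ) < (1/2:ℝ)^k := by positivity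
  nlinarith

lemma summable_f : Summable f := by
  refine Summable.of_nonneg_of_le (fun n => ?_) (fun n => ?_) summable_geometric_two
  · rw [f]; positivity
  · rw [f]
    have h1 : (0:ℝ) < 2 ^ (n+1) := by positivity
    have e : ((1:ℝ)/2) ^ n = 1 / 2^n := by rw [div_pow, one_pow]
    rw [e]
    apply one_div_le_one_div_of_le (by positivity)
    have : (2:ℝ)^n ≤ 2^(n+1) := by
      rw [pow_succ]; nlinarith [pow_pos (by norm_num : (0:ℝ) < 2) n]
    have hb : (0:ℝ) ≤ (bseq (n+1) : ℝ) := Nat.cast_nonneg _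
    linarith

lemma tsum_f : (∑' n : ℕ, f n) = 3/4 := by
  have hS0 : Tendsto S atTop (𝓝 0) := by
    refine squeeze_zero S_nonneg S_le ?_
    exact tendsto_pow_atTop_nhds_zero_of_lt_one (by norm_num) (by norm_num)
  have h34 : Tendsto (fun N => ∑ n ∈ Finset.range (N + 3), f n) atTop (𝓝 (3/4)) := by
    simp only [psum]
    have := tendsto_const_nhds (x := (3/4:ℝ)) (f := atTop (α := ℕ)) |>.sub hS0
    simpa using this
  have hfull : Tendsto (fun N => ∑ n ∈ Finset.range N, f n) atTop (𝓝 (∑' n, f n)) :=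
    summable_f.hasSum.tendsto_sum_nat
  have hsub : Tendsto (fun N => ∑ n ∈ Finset.range (N + 3), f n) atTop (𝓝 (∑' n, f n)) :=
    hfull.comp (tendsto_add_atTop_nat 3)
  exact tendsto_nhds_unique hsub h34

end Stmt10Aux

end Stmt10Aux

/-- There is a sequence `(b_n)` with `b_1 = b_2 = b_3 = 1` and
`b_n ∈ {1,…,5}` for `n ≥ 4` such that `∑_{n≥1} 1/(2^n + b_n) = 3/4`. -/
theorem stmt_10 :
    ∃ b : ℕ → ℕ, b 1 = 1 ∧ b 2 = 1 ∧ b 3 = 1 ∧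
      (∀ n, 4 ≤ n → 1 ≤ b n ∧ b n ≤ 5) ∧
      (∑' n : ℕ, (1 : ℝ) / (2 ^ (n + 1) + b (n + 1))) = 3 / 4 := by
  refine ⟨Stmt10Aux.bseq, by norm_num [Stmt10Aux.bseq], by norm_num [Stmt10Aux.bseq],
    by norm_num [Stmt10Aux.bseq], fun n hn => Stmt10Aux.bseq_bounds n hn, ?_⟩
  have h := Stmt10Aux.tsum_f
  simp only [Stmt10Aux.f] at h
  exact h
end

section
/- Let F : ℕ → (0,∞) satisfy lim_{n→∞} F(n+1)/F(n) = ∞. Then there exists a Type 3 irrationality sequence (a_n): a strictly increasing sequence of positive integers with a_n/F(n) → 1 such that ∑_{n=1}^∞ 1/(a_n + b_n) is irrational for every bounded integer sequence (b_n) with b_n ≠ 0 and a_n + b_n ≠ 0 for all n. -/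
open Filter Finset Function
open scoped Topology Classical

namespace S11

/-- If ratios tend to infinity, the sequence tends to infinity. -/
lemma aux_tendsto (H : ℕ → ℝ) (hpos : ∀ n, 0 < H n)
    (h : Tendsto (fun n => H (n + 1) / H n) atTop atTop) : Tendsto H atTop atTop := by
  obtain ⟨N, hN⟩ := eventually_atTop.mp (h.eventually_ge_atTop 2)
  have hc : 0 < H N / 2 ^ N := div_pos (hpos N) (by positivity)
  have key : ∀ n, N ≤ n → (H N / 2 ^ N) * 2 ^ n ≤ H n := by
    intro n hn
    induction n, hn using Nat.le_induction with
    | base => rw [div_mul_cancel₀]; positivity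
    | succ n hn ih =>
        have h2 : 2 ≤ H (n + 1) / H n := hN n hn
        have : 2 * H n ≤ H (n + 1) := by
          rw [le_div_iff₀ (hpos n)] at h2; linarith
        calc (H N / 2 ^ N) * 2 ^ (n + 1) = 2 * ((H N / 2 ^ N) * 2 ^ n) := by ring
        _ ≤ 2 * H n := by nlinarith
        _ ≤ H (n + 1) := this
  refine tendsto_atTop_mono' atTop (eventually_atTop.mpr ⟨N, key⟩) ?_
  exact (tendsto_pow_atTop_atTop_of_one_lt (by norm_num : (1:ℝ) < 2)).const_mul_atTop hc

/-- state of the recursive construction -/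
structure St where
  k : ℕ
  act : Bool
  G : Finset ℝ
  ap : ℕ → ℕ

section Main

variable (F : ℕ → ℝ)

lemma tendsto_F (hFpos : ∀ n, 0 < F n)
    (hgrow : Tendsto (fun n => F (n + 1) / F n) atTop atTop) :
    Tendsto F atTop atTop := aux_tendsto F hFpos hgrow

lemma tendsto_F_div (hFpos : ∀ n, 0 < F n)
    (hgrow : Tendsto (fun n => F (n + 1) / F n) atTop atTop) :
    Tendsto (fun n => F n / (n + 1)) atTop atTop := by
  apply aux_tendsto _ (fun n => div_pos (hFpos n) (by positivity))
  have heq : ∀ n : ℕ, (F (n+1) / ((n:ℝ) + 1 + 1)) / (F n / ((n:ℝ) + 1))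
      = (F (n+1) / F n) * (((n:ℝ) + 1) / ((n:ℝ) + 1 + 1)) := by
    intro n
    have h1 : F n ≠ 0 := ne_of_gt (hFpos n)
    have h2 : ((n:ℝ) + 1) ≠ 0 := by positivity
    have h3 : ((n:ℝ) + 2) ≠ 0 := by positivity
    rw [div_div_div_comm, div_div_eq_mul_div, mul_div_assoc]
  have hge : ∀ n : ℕ,
      (F (n+1) / F n) * (1/2) ≤ (F (n+1) / ((n:ℝ) + 1 + 1)) / (F n / ((n:ℝ) + 1)) := by
    intro n
    rw [heq n]
    apply mul_le_mul_of_nonneg_left _ (le_of_lt (div_pos (hFpos (n+1)) (hFpos n)))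
    rw [div_le_div_iff₀ (by norm_num) (by positivity)]
    have h0 : (0:ℝ) ≤ (n:ℝ) := Nat.cast_nonneg n
    nlinarith
  refine tendsto_atTop_mono' atTop ?_ (hgrow.atTop_mul_const (show (0:ℝ) < 1/2 by norm_num))
  refine eventually_atTop.mpr ⟨0, fun n _ => ?_⟩
  show F (n+1) / F n * (1/2) ≤ F (n+1) / (((n+1 : ℕ):ℝ) + 1) / (F n / ((n:ℝ)+1))
  push_cast
  exact hge n

lemma tendsto_sigma (hFpos : ∀ n, 0 < F n)
    (hgrow : Tendsto (fun n => F (n + 1) / F n) atTop atTop) :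
    Tendsto (fun n => Real.sqrt (F n / F (n+1)) + 1/((n:ℝ)+1)) atTop (𝓝 0) := by
  have h1 : Tendsto (fun n => F n / F (n+1)) atTop (𝓝 0) := by
    have := hgrow.inv_tendsto_atTop
    refine this.congr (fun n => ?_)
    simp [Pi.inv_apply, inv_div]
  have h2 : Tendsto (fun n => Real.sqrt (F n / F (n+1))) atTop (𝓝 0) := by
    have := (Real.continuous_sqrt.tendsto 0).comp h1
    simpa [Function.comp_def] using this
  have h3 : Tendsto (fun n : ℕ => 1/((n:ℝ)+1)) atTop (𝓝 0) :=
    tendsto_one_div_add_atTop_nhds_zero_nat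
  simpa using h2.add h3

/-- all the numeric conditions needed at index `n` when the active pair has bound `C`. -/
def GoodCond (C : ℕ) (n : ℕ) : Prop :=
  100 * F n ≤ F (n+1) ∧
  (288*(2*(C:ℝ)+1))^2 * F n ≤ F (n+1) ∧
  4*(C:ℝ) + 4 ≤ F n ∧
  4*(2*(C:ℝ)+1)*((n:ℝ)+1) ≤ F n ∧
  (16:ℝ) ≤ F n ∧
  Real.sqrt (F n / F (n+1)) + 1/((n:ℝ)+1) ≤ 1/2

lemma eventually_good (hFpos : ∀ n, 0 < F n)
    (hgrow : Tendsto (fun n => F (n + 1) / F n) atTop atTop) (C : ℕ) :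
    ∃ T : ℕ, ∀ n, T ≤ n → GoodCond F C n := by
  have hF := tendsto_F F hFpos hgrow
  have hFd := tendsto_F_div F hFpos hgrow
  have hs := tendsto_sigma F hFpos hgrow
  have e1 : ∀ᶠ n : ℕ in atTop, 100 * F n ≤ F (n+1) := by
    filter_upwards [hgrow.eventually_ge_atTop 100] with n hn
    rw [le_div_iff₀ (hFpos n)] at hn; linarith
  have e2 : ∀ᶠ n : ℕ in atTop, (288*(2*(C:ℝ)+1))^2 * F n ≤ F (n+1) := by
    filter_upwards [hgrow.eventually_ge_atTop ((288*(2*(C:ℝ)+1))^2)] with n hn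
    rw [le_div_iff₀ (hFpos n)] at hn; linarith
  have e3 : ∀ᶠ n : ℕ in atTop, 4*(C:ℝ) + 4 ≤ F n := hF.eventually_ge_atTop _
  have e4 : ∀ᶠ n : ℕ in atTop, 4*(2*(C:ℝ)+1)*((n:ℝ)+1) ≤ F n := by
    filter_upwards [hFd.eventually_ge_atTop (4*(2*(C:ℝ)+1))] with n hn
    rw [le_div_iff₀ (by positivity : (0:ℝ) < (n:ℝ)+1)] at hn; linarith
  have e5 : ∀ᶠ n : ℕ in atTop, (16:ℝ) ≤ F n := hF.eventually_ge_atTop _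
  have e6 : ∀ᶠ n : ℕ in atTop, Real.sqrt (F n / F (n+1)) + 1/((n:ℝ)+1) ≤ 1/2 := by
    filter_upwards [hs.eventually (eventually_le_nhds (by norm_num : (0:ℝ) < 1/2))] with n hn
    exact hn
  obtain ⟨T, hT⟩ := eventually_atTop.mp (((((e1.and e2).and e3).and e4).and e5).and e6)
  exact ⟨T, fun n hn => by
    obtain ⟨⟨⟨⟨⟨h1, h2⟩, h3⟩, h4⟩, h5⟩, h6⟩ := hT n hn
    exact ⟨h1, h2, h3, h4, h5, h6⟩⟩


/-- allowed perturbation digits. -/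
noncomputable def digits (C : ℕ) : Finset ℤ := Finset.Icc (-(C:ℤ)) C

lemma digits_card (C : ℕ) : (digits C).card = 2*C+1 := by
  rw [digits, Int.card_Icc]
  push_cast
  omega

/-- the badness window at level `n`. -/
noncomputable def wB (n : ℕ) : ℝ := 8 / F (n+1)

/-- width of the interval of allowed choices for `a n`. -/
noncomputable def mwid (n : ℕ) : ℕ :=
  ⌈F n * (Real.sqrt (F n / F (n+1)) + 1/((n:ℝ)+1))⌉₊

/-- partial sum `s` is dangerously close (below) to `ρ`. -/
def badP (ρ : ℚ) (wv : ℝ) (s : ℝ) : Prop := 0 ≤ (ρ:ℝ) - s ∧ (ρ:ℝ) - s ≤ wv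

/-- surviving (still dangerous) partial sums at level `n`, given those at level `n-1`. -/
noncomputable def nextG (ρ : ℚ) (C : ℕ) (G : Finset ℝ) (av : ℕ) (n : ℕ) : Finset ℝ :=
  ((G ×ˢ digits C).image (fun p => p.1 + 1/((av:ℝ) + (p.2:ℝ)))).filter (badP ρ (wB F n))

/-- all possible partial sums of `∑ 1/(a i + b i)`, `i ≤ n`, `|b i| ≤ C`. -/
noncomputable def allS (ap : ℕ → ℕ) (C : ℕ) : ℕ → Finset ℝ
  | 0 => (digits C).image (fun d : ℤ => 1/((ap 0 : ℝ) + (d:ℝ)))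
  | n+1 => ((allS ap C n) ×ˢ digits C).image
      (fun p : ℝ × ℤ => p.1 + 1/((ap (n+1) : ℝ) + (p.2:ℝ)))

noncomputable def initG (ρ : ℚ) (C : ℕ) (ap : ℕ → ℕ) (n : ℕ) : Finset ℝ :=
  (allS ap C n).filter (badP ρ (wB F n))

/-- Counting: in an integer interval, few choices `av` make `s + 1/(av+d)` bad. -/
lemma count_bad (ρ : ℚ) (s wv : ℝ) (hw : 0 < wv) (d : ℤ) (L M : ℕ) (Cb : ℝ)
    (hd : ∀ av : ℕ, av ∈ Finset.Icc L (L+M) → 0 < (av:ℝ) + (d:ℝ) ∧ (av:ℝ) + (d:ℝ) ≤ Cb) :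
    ((Finset.Icc L (L+M)).filter (fun (av : ℕ) => badP ρ wv (s + 1/((av:ℝ)+(d:ℝ))))).card
      ≤ ⌊wv * Cb^2⌋₊ + 1 := by
  classical
  set E := ((Finset.Icc L (L+M)).filter
    (fun (av : ℕ) => badP ρ wv (s + 1/((av:ℝ)+(d:ℝ))))) with hEdef
  rcases E.eq_empty_or_nonempty with h | h
  · simp [h]
  · have hu : E.min' h ∈ E := E.min'_mem h
    have hv : E.max' h ∈ E := E.max'_mem h
    set u := E.min' h
    set v := E.max' h
    have huv : u ≤ v := E.min'_le v hv
    have hsub : E ⊆ Finset.Icc u v :=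
      fun x hx => Finset.mem_Icc.mpr ⟨E.min'_le x hx, E.le_max' x hx⟩
    have hcard : E.card ≤ v - u + 1 := by
      have h1 := Finset.card_le_card hsub
      rw [Nat.card_Icc] at h1
      omega
    obtain ⟨huI, hub⟩ := Finset.mem_filter.mp hu
    obtain ⟨hvI, hvb⟩ := Finset.mem_filter.mp hv
    obtain ⟨hupos, hule⟩ := hd u huI
    obtain ⟨hvpos, hvle⟩ := hd v hvI
    have h1 : 1/((u:ℝ)+(d:ℝ)) - 1/((v:ℝ)+(d:ℝ)) ≤ wv := by
      rcases hub with ⟨hub1, hub2⟩; rcases hvb with ⟨hvb1, hvb2⟩; linarith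
    have h2 : ((v:ℝ) - (u:ℝ))
        = ((u:ℝ)+(d:ℝ)) * ((v:ℝ)+(d:ℝ)) * (1/((u:ℝ)+(d:ℝ)) - 1/((v:ℝ)+(d:ℝ))) := by
      field_simp
      ring
    have hdiff0 : 0 ≤ 1/((u:ℝ)+(d:ℝ)) - 1/((v:ℝ)+(d:ℝ)) := by
      have hc : (u:ℝ)+(d:ℝ) ≤ (v:ℝ)+(d:ℝ) := by
        have : (u:ℝ) ≤ (v:ℝ) := Nat.cast_le.mpr huv
        linarith
      have := one_div_le_one_div_of_le hupos hc
      linarith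
    have h3 : ((v:ℝ) - (u:ℝ)) ≤ wv * Cb^2 := by
      have hprod0 : 0 ≤ ((u:ℝ)+(d:ℝ)) * ((v:ℝ)+(d:ℝ)) :=
        mul_nonneg (le_of_lt hupos) (le_of_lt hvpos)
      have hprodCb : ((u:ℝ)+(d:ℝ)) * ((v:ℝ)+(d:ℝ)) ≤ Cb^2 := by nlinarith
      rw [h2]
      calc ((u:ℝ)+(d:ℝ)) * ((v:ℝ)+(d:ℝ)) * (1/((u:ℝ)+(d:ℝ)) - 1/((v:ℝ)+(d:ℝ)))
          ≤ ((u:ℝ)+(d:ℝ)) * ((v:ℝ)+(d:ℝ)) * wv := by nlinarith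
        _ ≤ Cb^2 * wv := by nlinarith
        _ = wv * Cb^2 := by ring
    have h4 : v - u ≤ ⌊wv * Cb^2⌋₊ := by
      apply Nat.le_floor
      rw [Nat.cast_sub huv]
      exact h3
    omega

lemma mwid_ge_one (hFpos : ∀ n, 0 < F n) (n : ℕ) : 1 ≤ mwid F n := by
  rw [mwid]
  refine Nat.ceil_pos.mpr ?_
  have h1 : (0:ℝ) < 1/((n:ℝ)+1) := by positivity
  have h2 : (0:ℝ) ≤ Real.sqrt (F n / F (n+1)) := Real.sqrt_nonneg _
  have := hFpos n
  nlinarith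

set_option maxHeartbeats 1600000 in
/-- The halving lemma: some choice of `a n` at least halves the surviving set. -/
lemma halving (hFpos : ∀ n, 0 < F n) (ρ : ℚ) (C : ℕ) (G : Finset ℝ) (n : ℕ)
    (hg : GoodCond F C n) (prev : ℕ) (hprev : (prev:ℝ) < F n) :
    ∃ av ∈ Finset.Icc (max ⌈F n⌉₊ (prev+1)) (max ⌈F n⌉₊ (prev+1) + mwid F n),
      2 * (nextG F ρ C G av n).card ≤ G.card := by
  classical
  obtain ⟨g1, g2, g3, g4, g5, g6⟩ := hg
  have hF0 := hFpos n
  have hF1 := hFpos (n+1)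
  set L := max ⌈F n⌉₊ (prev+1) with hL
  set M := mwid F n with hM
  set J := Finset.Icc L (L+M) with hJ
  have hLceil : L = ⌈F n⌉₊ := by
    have h1 : (prev:ℝ) < (⌈F n⌉₊:ℝ) := lt_of_lt_of_le hprev (Nat.le_ceil _)
    have h2 : prev < ⌈F n⌉₊ := by exact_mod_cast h1
    rw [hL]
    omega
  have hJne : J.Nonempty := ⟨L, Finset.mem_Icc.mpr ⟨le_rfl, Nat.le_add_right _ _⟩⟩
  have hJcard : J.card = M + 1 := by rw [hJ, Nat.card_Icc]; omega
  -- real bounds on L and M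
  set t := Real.sqrt (F n / F (n+1)) with ht
  have ht0 : 0 ≤ t := Real.sqrt_nonneg _
  have ht2 : t^2 = F n / F (n+1) := Real.sq_sqrt (by positivity)
  have hC1 : (0:ℝ) < 2*(C:ℝ)+1 := by positivity
  have htub : t ≤ 1/(288*(2*(C:ℝ)+1)) := by
    have hq : F n / F (n+1) ≤ (1/(288*(2*(C:ℝ)+1)))^2 := by
      rw [div_le_iff₀ hF1]
      rw [div_pow]
      rw [div_mul_eq_mul_div, le_div_iff₀ (by positivity)]
      calc F n * (288*(2*(C:ℝ)+1))^2 = (288*(2*(C:ℝ)+1))^2 * F n := by ring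
        _ ≤ F (n+1) := g2
        _ = 1^2 * F (n+1) := by ring
    calc t ≤ Real.sqrt ((1/(288*(2*(C:ℝ)+1)))^2) := Real.sqrt_le_sqrt hq
      _ = 1/(288*(2*(C:ℝ)+1)) := Real.sqrt_sq (by positivity)
  have hMlb1 : F n * t ≤ (M:ℝ) := by
    calc F n * t ≤ F n * (t + 1/((n:ℝ)+1)) := by
          apply mul_le_mul_of_nonneg_left _ (le_of_lt hF0)
          have : (0:ℝ) < 1/((n:ℝ)+1) := by positivity
          linarith
      _ ≤ (M:ℝ) := by rw [hM, mwid]; exact Nat.le_ceil _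
  have hMlb2 : F n / ((n:ℝ)+1) ≤ (M:ℝ) := by
    calc F n / ((n:ℝ)+1) = F n * (1/((n:ℝ)+1)) := by ring
      _ ≤ F n * (t + 1/((n:ℝ)+1)) := by
          apply mul_le_mul_of_nonneg_left _ (le_of_lt hF0)
          linarith
      _ ≤ (M:ℝ) := by rw [hM, mwid]; exact Nat.le_ceil _
  have hMub : (M:ℝ) ≤ F n / 2 + 1 := by
    rw [hM, mwid]
    have h1 : F n * (t + 1/((n:ℝ)+1)) ≤ F n / 2 := by
      calc F n * (t + 1/((n:ℝ)+1)) ≤ F n * (1/2) := by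
            apply mul_le_mul_of_nonneg_left g6 (le_of_lt hF0)
        _ = F n / 2 := by ring
    calc ((⌈F n * (t + 1/((n:ℝ)+1))⌉₊:ℝ))
        ≤ F n * (t + 1/((n:ℝ)+1)) + 1 := le_of_lt (Nat.ceil_lt_add_one (by positivity))
      _ ≤ F n / 2 + 1 := by linarith
  have hLub : (L:ℝ) ≤ F n + 1 := by
    rw [hLceil]
    exact le_of_lt (Nat.ceil_lt_add_one (le_of_lt hF0))
  have hLlb : F n ≤ (L:ℝ) := by rw [hLceil]; exact Nat.le_ceil _
  have hCub : (C:ℝ) ≤ F n/4 - 1 := by linarith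
  -- bounds for all av ∈ J and digits d
  have havbd : ∀ d ∈ digits C, ∀ av ∈ J, 0 < (av:ℝ) + (d:ℝ) ∧ (av:ℝ) + (d:ℝ) ≤ 3*F n := by
    intro d hd av hav
    obtain ⟨h1, h2⟩ := Finset.mem_Icc.mp hav
    have hdm := hd
    simp only [digits, Finset.mem_Icc] at hdm
    obtain ⟨hdi1, hdi2⟩ := hdm
    have hd1' : -(C:ℝ) ≤ (d:ℝ) := by exact_mod_cast hdi1
    have hd2' : (d:ℝ) ≤ (C:ℝ) := by exact_mod_cast hdi2
    have hav1 : (L:ℝ) ≤ (av:ℝ) := Nat.cast_le.mpr h1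
    have hav2 : (av:ℝ) ≤ (L:ℝ) + (M:ℝ) := by
      have h2' : ((av:ℕ):ℝ) ≤ ((L + M : ℕ):ℝ) := Nat.cast_le.mpr h2
      push_cast at h2'
      linarith
    constructor
    · nlinarith
    · nlinarith
  -- per-pair counting
  set K := ⌊(wB F n) * (3*F n)^2⌋₊ + 1 with hK
  have hw0 : 0 < wB F n := by simp only [wB]; positivity
  have hcount : ∀ p ∈ G ×ˢ digits C,
      (J.filter (fun (av : ℕ) => badP ρ (wB F n) (p.1 + 1/((av:ℝ)+(p.2:ℝ))))).card ≤ K := by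
    intro p hp
    obtain ⟨hp1, hp2⟩ := Finset.mem_product.mp hp
    exact count_bad ρ p.1 (wB F n) hw0 p.2 L M (3*F n) (havbd p.2 hp2)
  -- sum bound
  have hsum : ∑ av ∈ J, (nextG F ρ C G av n).card ≤ G.card * ((2*C+1) * K) := by
    calc ∑ av ∈ J, (nextG F ρ C G av n).card
        ≤ ∑ av ∈ J, ((G ×ˢ digits C).filter
            (fun p => badP ρ (wB F n) (p.1 + 1/((av:ℝ)+(p.2:ℝ))))).card := by
          apply Finset.sum_le_sum
          intro av _
          rw [nextG, Finset.filter_image]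
          exact Finset.card_image_le
      _ = ∑ p ∈ G ×ˢ digits C,
            (J.filter (fun (av : ℕ) => badP ρ (wB F n) (p.1 + 1/((av:ℝ)+(p.2:ℝ))))).card := by
          simp_rw [Finset.card_filter]
          exact Finset.sum_comm
      _ ≤ ∑ _p ∈ G ×ˢ digits C, K := Finset.sum_le_sum hcount
      _ = (G ×ˢ digits C).card * K := by rw [Finset.sum_const, smul_eq_mul]
      _ = G.card * ((2*C+1) * K) := by
          rw [Finset.card_product, digits_card, mul_assoc]
  -- numeric halving condition : 2 * ((2C+1)*K) ≤ M+1
  have hnum : 2 * ((2*C+1) * K) ≤ M + 1 := by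
    have hKreal : (K:ℝ) ≤ (wB F n) * (3*F n)^2 + 1 := by
      rw [hK]
      push_cast
      have := Nat.floor_le (le_of_lt (mul_pos hw0 (show (0:ℝ) < (3*F n)^2 by positivity)))
      linarith
    have hwB72 : (wB F n) * (3*F n)^2 = 72 * (F n * (F n / F (n+1))) := by
      simp only [wB]; field_simp; ring
    have hreal : 2 * ((2*(C:ℝ)+1) * ((wB F n) * (3*F n)^2 + 1)) ≤ (M:ℝ) + 1 := by
      rw [hwB72, ← ht2]
      -- 144 (2C+1) F n t^2 ≤ F n * t * (144 (2C+1) t) ≤ (1/2) F n t ≤ (1/2) M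
      have h288 : 288*(2*(C:ℝ)+1) * t ≤ 1 := by
        have hmul := mul_le_mul_of_nonneg_left htub
          (le_of_lt (show (0:ℝ) < 288*(2*(C:ℝ)+1) by positivity))
        rwa [mul_one_div, div_self (ne_of_gt (show (0:ℝ) < 288*(2*(C:ℝ)+1) by positivity))]
          at hmul
      have e1 : 144 * (2*(C:ℝ)+1) * (F n * t^2) ≤ (1/2) * (F n * t) := by
        have key : 0 ≤ (F n * t) * (1 - 288*(2*(C:ℝ)+1)*t) :=
          mul_nonneg (mul_nonneg hF0.le ht0) (by linarith)
        linarith [key]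
      have e2 : 2 * (2*(C:ℝ)+1) ≤ (1/2) * (F n / ((n:ℝ)+1)) := by
        have h4' : 4*(2*(C:ℝ)+1) ≤ F n/((n:ℝ)+1) := by
          rw [le_div_iff₀ (show (0:ℝ) < (n:ℝ)+1 by positivity)]
          linarith [g4]
        linarith
      have expand : 2 * ((2*(C:ℝ)+1) * (72 * (F n * t^2) + 1))
          = 144 * (2*(C:ℝ)+1) * (F n * t^2) + 2 * (2*(C:ℝ)+1) := by ring
      rw [expand]
      linarith [e1, e2, hMlb1, hMlb2]
    have hKfl : ((⌊wB F n * (3*F n)^2⌋₊:ℕ) : ℝ) ≤ wB F n * (3*F n)^2 :=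
      Nat.floor_le (le_of_lt (mul_pos hw0 (show (0:ℝ) < (3*F n)^2 by positivity)))
    have hstep : (2*(C:ℝ)+1) * (((⌊wB F n * (3*F n)^2⌋₊:ℕ):ℝ) + 1)
        ≤ (2*(C:ℝ)+1) * (wB F n * (3*F n)^2 + 1) :=
      mul_le_mul_of_nonneg_left (by linarith [hKfl]) (le_of_lt hC1)
    have hfinal : ((2 * ((2*C+1) * K) : ℕ) : ℝ) ≤ ((M + 1 : ℕ) : ℝ) := by
      rw [hK]
      push_cast
      linarith [hreal, hstep]
    exact_mod_cast hfinal
  -- argmin choice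
  obtain ⟨av, havJ, hminav⟩ :=
    Finset.exists_min_image J (fun x => (nextG F ρ C G x n).card) hJne
  refine ⟨av, havJ, ?_⟩
  have hmin2 : (M+1) * (nextG F ρ C G av n).card ≤ G.card * ((2*C+1) * K) := by
    calc (M+1) * (nextG F ρ C G av n).card
        = J.card • (nextG F ρ C G av n).card := by rw [hJcard, smul_eq_mul]
      _ ≤ ∑ x ∈ J, (nextG F ρ C G x n).card :=
          Finset.card_nsmul_le_sum J _ _ (fun x hx => hminav x hx)
      _ ≤ G.card * ((2*C+1) * K) := hsum
  have hKpos : 0 < (2*C+1) * K := by positivity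
  have hfin : ((2*C+1) * K) * (2 * (nextG F ρ C G av n).card)
      ≤ ((2*C+1) * K) * G.card := by
    calc ((2*C+1) * K) * (2 * (nextG F ρ C G av n).card)
        = (2 * ((2*C+1) * K)) * (nextG F ρ C G av n).card := by ring
      _ ≤ (M+1) * (nextG F ρ C G av n).card := Nat.mul_le_mul_right _ hnum
      _ ≤ G.card * ((2*C+1) * K) := hmin2
      _ = ((2*C+1) * K) * G.card := by ring
  exact Nat.le_of_mul_le_mul_left hfin hKpos


variable (e : ℕ → ℚ × ℕ) (Tf : ℕ → ℕ)

/-- choice of `a (n+1)` given the current state. -/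
noncomputable def pickA (n : ℕ) (s : St) : ℕ :=
  if s.act then
    Classical.choose (Finset.exists_min_image
      (Finset.Icc (max ⌈F (n+1)⌉₊ (s.ap n + 1)) (max ⌈F (n+1)⌉₊ (s.ap n + 1) + mwid F (n+1)))
      (fun x => (nextG F (e s.k).1 (e s.k).2 s.G x (n+1)).card)
      ⟨max ⌈F (n+1)⌉₊ (s.ap n + 1), Finset.mem_Icc.mpr ⟨le_rfl, Nat.le_add_right _ _⟩⟩)
  else max ⌈F (n+1)⌉₊ (s.ap n + 1)

/-- the transition of states. -/
noncomputable def nextSt (n : ℕ) (s : St) : St :=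
  if s.act then
    if (nextG F (e s.k).1 (e s.k).2 s.G (pickA F e n s) (n+1)).card = 0 then
      ⟨s.k + 1, false, ∅, Function.update s.ap (n+1) (pickA F e n s)⟩
    else
      ⟨s.k, true, nextG F (e s.k).1 (e s.k).2 s.G (pickA F e n s) (n+1),
        Function.update s.ap (n+1) (pickA F e n s)⟩
  else
    if Tf s.k ≤ n + 1 then
      ⟨s.k, true,
        initG F (e s.k).1 (e s.k).2 (Function.update s.ap (n+1) (pickA F e n s)) (n+1),
        Function.update s.ap (n+1) (pickA F e n s)⟩
    else
      ⟨s.k, false, ∅, Function.update s.ap (n+1) (pickA F e n s)⟩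

noncomputable def proc : ℕ → St
  | 0 => ⟨0, false, ∅, fun _ => ⌈F 0⌉₊⟩
  | n+1 => nextSt F e Tf n (proc n)

/-- the sequence `a`. -/
noncomputable def aseq (n : ℕ) : ℕ := (proc F e Tf n).ap n

lemma proc_succ (n : ℕ) : proc F e Tf (n+1) = nextSt F e Tf n (proc F e Tf n) := rfl

lemma nextSt_ap (n : ℕ) (s : St) :
    (nextSt F e Tf n s).ap = Function.update s.ap (n+1) (pickA F e n s) := by
  unfold nextSt
  split_ifs <;> rfl

lemma aseq_succ (n : ℕ) :
    aseq F e Tf (n+1) = pickA F e n (proc F e Tf n) := by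
  show (proc F e Tf (n+1)).ap (n+1) = _
  rw [proc_succ, nextSt_ap, Function.update_self]

lemma proc_ap_eq : ∀ n m, m ≤ n → (proc F e Tf n).ap m = aseq F e Tf m := by
  intro n
  induction n with
  | zero =>
      intro m hm
      have : m = 0 := Nat.le_zero.mp hm
      subst this
      rfl
  | succ n ih =>
      intro m hm
      rcases Nat.eq_or_lt_of_le hm with h | h
      · subst h; rfl
      · have hm' : m ≤ n := Nat.lt_succ_iff.mp h
        rw [proc_succ, nextSt_ap, Function.update_of_ne (by omega)]
        exact ih m hm'

lemma pickA_mem (n : ℕ) (s : St) :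
    pickA F e n s ∈ Finset.Icc (max ⌈F (n+1)⌉₊ (s.ap n + 1))
      (max ⌈F (n+1)⌉₊ (s.ap n + 1) + mwid F (n+1)) := by
  unfold pickA
  split_ifs with h
  · exact (Classical.choose_spec (Finset.exists_min_image
      (Finset.Icc (max ⌈F (n+1)⌉₊ (s.ap n + 1)) (max ⌈F (n+1)⌉₊ (s.ap n + 1) + mwid F (n+1)))
      (fun x => (nextG F (e s.k).1 (e s.k).2 s.G x (n+1)).card)
      ⟨max ⌈F (n+1)⌉₊ (s.ap n + 1), Finset.mem_Icc.mpr ⟨le_rfl, Nat.le_add_right _ _⟩⟩)).1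
  · exact Finset.mem_Icc.mpr ⟨le_rfl, Nat.le_add_right _ _⟩

lemma pickA_min (n : ℕ) (s : St) (hact : s.act = true) :
    ∀ x ∈ Finset.Icc (max ⌈F (n+1)⌉₊ (s.ap n + 1))
      (max ⌈F (n+1)⌉₊ (s.ap n + 1) + mwid F (n+1)),
      (nextG F (e s.k).1 (e s.k).2 s.G (pickA F e n s) (n+1)).card
        ≤ (nextG F (e s.k).1 (e s.k).2 s.G x (n+1)).card := by
  intro x hx
  have h := (Classical.choose_spec (Finset.exists_min_image
      (Finset.Icc (max ⌈F (n+1)⌉₊ (s.ap n + 1)) (max ⌈F (n+1)⌉₊ (s.ap n + 1) + mwid F (n+1)))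
      (fun x => (nextG F (e s.k).1 (e s.k).2 s.G x (n+1)).card)
      ⟨max ⌈F (n+1)⌉₊ (s.ap n + 1), Finset.mem_Icc.mpr ⟨le_rfl, Nat.le_add_right _ _⟩⟩)).2
  have hpick : pickA F e n s = Classical.choose (Finset.exists_min_image
      (Finset.Icc (max ⌈F (n+1)⌉₊ (s.ap n + 1)) (max ⌈F (n+1)⌉₊ (s.ap n + 1) + mwid F (n+1)))
      (fun x => (nextG F (e s.k).1 (e s.k).2 s.G x (n+1)).card)
      ⟨max ⌈F (n+1)⌉₊ (s.ap n + 1), Finset.mem_Icc.mpr ⟨le_rfl, Nat.le_add_right _ _⟩⟩) := by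
    unfold pickA
    rw [if_pos hact]
  rw [hpick]
  exact h x hx

/-- the four possible transitions. -/
lemma nextSt_cases (n : ℕ) (s : St) :
    (s.act = true ∧ (nextG F (e s.k).1 (e s.k).2 s.G (pickA F e n s) (n+1)).card = 0 ∧
      (nextSt F e Tf n s).k = s.k + 1 ∧ (nextSt F e Tf n s).act = false) ∨
    (s.act = true ∧
      (nextSt F e Tf n s).k = s.k ∧ (nextSt F e Tf n s).act = true ∧
      (nextSt F e Tf n s).G = nextG F (e s.k).1 (e s.k).2 s.G (pickA F e n s) (n+1) ∧
      (nextSt F e Tf n s).G.card ≠ 0) ∨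
    (s.act = false ∧ Tf s.k ≤ n + 1 ∧
      (nextSt F e Tf n s).k = s.k ∧ (nextSt F e Tf n s).act = true ∧
      (nextSt F e Tf n s).G
        = initG F (e s.k).1 (e s.k).2 (Function.update s.ap (n+1) (pickA F e n s)) (n+1)) ∨
    (s.act = false ∧ ¬ Tf s.k ≤ n + 1 ∧
      (nextSt F e Tf n s).k = s.k ∧ (nextSt F e Tf n s).act = false) := by
  by_cases hb : s.act = true
  · by_cases hc : (nextG F (e s.k).1 (e s.k).2 s.G (pickA F e n s) (n+1)).card = 0
    · refine Or.inl ⟨hb, hc, ?_, ?_⟩ <;>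
        simp only [nextSt, if_pos hb, if_pos hc]
    · refine Or.inr (Or.inl ⟨hb, ?_, ?_, ?_, ?_⟩) <;>
        simp only [nextSt, if_pos hb, if_neg hc]
      exact hc
  · have hbf : s.act = false := Bool.not_eq_true _ |>.mp hb
    by_cases ht : Tf s.k ≤ n + 1
    · refine Or.inr (Or.inr (Or.inl ⟨hbf, ht, ?_, ?_, ?_⟩)) <;>
        simp only [nextSt, if_neg hb, if_pos ht]
    · refine Or.inr (Or.inr (Or.inr ⟨hbf, ht, ?_, ?_⟩)) <;>
        simp only [nextSt, if_neg hb, if_neg ht]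

lemma k_mono_succ (n : ℕ) :
    (proc F e Tf n).k ≤ (proc F e Tf (n+1)).k ∧
      (proc F e Tf (n+1)).k ≤ (proc F e Tf n).k + 1 := by
  rw [proc_succ]
  rcases nextSt_cases F e Tf n (proc F e Tf n) with ⟨_, _, hk, _⟩ | ⟨_, hk, _⟩ |
    ⟨_, _, hk, _⟩ | ⟨_, _, hk, _⟩ <;> omega

lemma k_mono : ∀ m n, m ≤ n → (proc F e Tf m).k ≤ (proc F e Tf n).k := by
  intro m n hmn
  induction n with
  | zero => cases Nat.le_zero.mp hmn; exact le_rfl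
  | succ n ih =>
      rcases Nat.eq_or_lt_of_le hmn with h | h
      · subst h; exact le_rfl
      · exact le_trans (ih (Nat.lt_succ_iff.mp h)) (k_mono_succ F e Tf n).1

/-- while active, the threshold has been passed. -/
lemma act_thresh : ∀ n, (proc F e Tf n).act = true → Tf (proc F e Tf n).k ≤ n := by
  intro n
  induction n with
  | zero => intro h; exact absurd h (by simp [proc])
  | succ n ih =>
      intro h
      rcases nextSt_cases F e Tf n (proc F e Tf n) with ⟨_, _, hk, ha⟩ | ⟨hact, hk, ha, _⟩ |
        ⟨_, ht, hk, ha, _⟩ | ⟨_, _, hk, ha⟩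
      · rw [proc_succ] at h; rw [ha] at h; exact absurd h (by simp)
      · rw [proc_succ, hk]
        exact le_trans (ih hact) (Nat.le_succ n)
      · rw [proc_succ, hk]
        exact ht
      · rw [proc_succ] at h; rw [ha] at h; exact absurd h (by simp)


lemma aseq_ge (n : ℕ) : F n ≤ (aseq F e Tf n : ℝ) := by
  cases n with
  | zero => exact Nat.le_ceil _
  | succ n =>
      have h := (Finset.mem_Icc.mp (pickA_mem F e n (proc F e Tf n))).1
      have h2 : ⌈F (n+1)⌉₊ ≤ aseq F e Tf (n+1) := by
        rw [aseq_succ]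
        exact le_trans (le_max_left _ _) h
      calc F (n+1) ≤ (⌈F (n+1)⌉₊ : ℝ) := Nat.le_ceil _
        _ ≤ (aseq F e Tf (n+1) : ℝ) := Nat.cast_le.mpr h2

lemma aseq_smono : StrictMono (aseq F e Tf) := by
  apply strictMono_nat_of_lt_succ
  intro n
  have h := (Finset.mem_Icc.mp (pickA_mem F e n (proc F e Tf n))).1
  have h2 : (proc F e Tf n).ap n + 1 ≤ aseq F e Tf (n+1) := by
    rw [aseq_succ]
    exact le_trans (le_max_right _ _) h
  have h3 : (proc F e Tf n).ap n = aseq F e Tf n := rfl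
  omega

lemma aseq_pos (hFpos : ∀ n, 0 < F n) (n : ℕ) : 0 < aseq F e Tf n := by
  have h0 : 0 < aseq F e Tf 0 := Nat.ceil_pos.mpr (hFpos 0)
  cases n with
  | zero => exact h0
  | succ n => exact lt_of_lt_of_le h0 (le_of_lt (aseq_smono F e Tf (Nat.succ_pos n)))

lemma aseq_ub (hFpos : ∀ n, 0 < F n)
    (hgrow : Tendsto (fun n => F (n + 1) / F n) atTop atTop) :
    ∃ N2, ∀ n, N2 ≤ n → (aseq F e Tf n : ℝ) ≤ 4 * F n := by
  have hF := tendsto_F F hFpos hgrow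
  have hs := tendsto_sigma F hFpos hgrow
  have e1 : ∀ᶠ n : ℕ in atTop, 100 * F n ≤ F (n+1) := by
    filter_upwards [hgrow.eventually_ge_atTop 100] with n hn
    rw [le_div_iff₀ (hFpos n)] at hn; linarith
  have e5 : ∀ᶠ n : ℕ in atTop, (16:ℝ) ≤ F n := hF.eventually_ge_atTop _
  have e6 : ∀ᶠ n : ℕ in atTop,
      Real.sqrt (F n / F (n+1)) + 1/((n:ℝ)+1) ≤ 1/2 := by
    filter_upwards [hs.eventually (eventually_le_nhds (by norm_num : (0:ℝ) < 1/2))] with n hn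
    exact hn
  obtain ⟨n0, hn0⟩ := eventually_atTop.mp ((e1.and e5).and e6)
  set P : ℝ := (aseq F e Tf n0 : ℝ) with hP
  have hP0 : 0 ≤ P := Nat.cast_nonneg _
  -- step bound
  have hstep : ∀ n, n0 ≤ n → (aseq F e Tf n : ℝ) ≤ P + 3 * F n := by
    intro n hn
    induction n, hn using Nat.le_induction with
    | base =>
        have := hFpos n0
        nlinarith
    | succ n hn ih =>
        obtain ⟨⟨h1, h5⟩, h6⟩ := hn0 (n+1) (by omega)
        have h1' : 100 * F n ≤ F (n+1) := (hn0 n hn).1.1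
        have h3 : (proc F e Tf n).ap n = aseq F e Tf n := rfl
        have hub : aseq F e Tf (n+1)
            ≤ max ⌈F (n+1)⌉₊ (aseq F e Tf n + 1) + mwid F (n+1) := by
          rw [aseq_succ]
          have h2 := (Finset.mem_Icc.mp (pickA_mem F e n (proc F e Tf n))).2
          rwa [h3] at h2
        have hcast : (aseq F e Tf (n+1) : ℝ)
            ≤ max ((⌈F (n+1)⌉₊:ℕ):ℝ) ((aseq F e Tf n : ℝ) + 1) + (mwid F (n+1) : ℝ) := by
          exact_mod_cast hub
        have hceil : ((⌈F (n+1)⌉₊:ℕ) : ℝ) ≤ F (n+1) + 1 :=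
          le_of_lt (Nat.ceil_lt_add_one (le_of_lt (hFpos (n+1))))
        have hm1 : (mwid F (n+1) : ℝ) ≤ F (n+1)/2 + 1 := by
          have hc1 : (mwid F (n+1) : ℝ)
              ≤ F (n+1) * (Real.sqrt (F (n+1) / F (n+1+1)) + 1/((↑(n+1):ℝ)+1)) + 1 := by
            simp only [mwid]
            exact le_of_lt (Nat.ceil_lt_add_one (by positivity))
          have hc2 := mul_le_mul_of_nonneg_left h6 (le_of_lt (hFpos (n+1)))
          push_cast at hc1 hc2
          linarith
        have hmaxle : max ((⌈F (n+1)⌉₊:ℕ):ℝ) ((aseq F e Tf n:ℝ)+1) ≤ P + F (n+1) + 1 := by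
          apply max_le
          · linarith
          · have hFn := hFpos n
            linarith [ih]
        linarith
  obtain ⟨n1, hn1⟩ := eventually_atTop.mp (hF.eventually_ge_atTop P)
  refine ⟨max n0 n1, fun n hn => ?_⟩
  have h1 := hstep n (le_trans (le_max_left _ _) hn)
  have h2 := hn1 n (le_trans (le_max_right _ _) hn)
  linarith


lemma aseq_ratio (hFpos : ∀ n, 0 < F n)
    (hgrow : Tendsto (fun n => F (n + 1) / F n) atTop atTop) :
    Tendsto (fun n => (aseq F e Tf n : ℝ) / F n) atTop (𝓝 1) := by
  obtain ⟨N2, hN2⟩ := aseq_ub F e Tf hFpos hgrow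
  have e1 : ∀ᶠ n : ℕ in atTop, 100 * F n ≤ F (n+1) := by
    filter_upwards [hgrow.eventually_ge_atTop 100] with n hn
    rw [le_div_iff₀ (hFpos n)] at hn; linarith
  obtain ⟨n0, hn0⟩ := eventually_atTop.mp e1
  have hupper : ∀ᶠ n : ℕ in atTop, (aseq F e Tf n : ℝ)/F n
      ≤ 1 + ((Real.sqrt (F n / F (n+1)) + 1/((n:ℝ)+1)) + 2/F n) := by
    refine eventually_atTop.mpr ⟨max N2 n0 + 1, fun n hn => ?_⟩
    obtain ⟨m, rfl⟩ : ∃ m, n = m + 1 := ⟨n - 1, by omega⟩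
    have hub4 := hN2 m (by omega)
    have h100 := hn0 m (by omega)
    have h3 : (proc F e Tf m).ap m = aseq F e Tf m := rfl
    have hub : aseq F e Tf (m+1)
        ≤ max ⌈F (m+1)⌉₊ (aseq F e Tf m + 1) + mwid F (m+1) := by
      rw [aseq_succ]
      have h2 := (Finset.mem_Icc.mp (pickA_mem F e m (proc F e Tf m))).2
      rwa [h3] at h2
    have hcast : (aseq F e Tf (m+1) : ℝ)
        ≤ max ((⌈F (m+1)⌉₊:ℕ):ℝ) ((aseq F e Tf m : ℝ) + 1) + (mwid F (m+1) : ℝ) := by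
      exact_mod_cast hub
    have hceil : ((⌈F (m+1)⌉₊:ℕ) : ℝ) ≤ F (m+1) + 1 :=
      le_of_lt (Nat.ceil_lt_add_one (le_of_lt (hFpos (m+1))))
    have hFm := hFpos m
    have hmax2 : max ((⌈F (m+1)⌉₊:ℕ):ℝ) ((aseq F e Tf m:ℝ)+1) ≤ F (m+1) + 1 := by
      apply max_le hceil
      linarith
    have hm1 : (mwid F (m+1) : ℝ)
        ≤ F (m+1) * (Real.sqrt (F (m+1) / F (m+1+1)) + 1/((↑(m+1):ℝ)+1)) + 1 := by
      simp only [mwid]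
      exact le_of_lt (Nat.ceil_lt_add_one
        (mul_nonneg (hFpos (m+1)).le (by positivity)))
    rw [div_le_iff₀ (hFpos (m+1))]
    have hne : F (m+1) ≠ 0 := ne_of_gt (hFpos (m+1))
    have hrw : (1 + ((Real.sqrt (F (m+1) / F (m+1+1)) + 1/((↑(m+1):ℝ)+1)) + 2/F (m+1)))
          * F (m+1)
        = F (m+1) * (Real.sqrt (F (m+1) / F (m+1+1)) + 1/((↑(m+1):ℝ)+1)) + F (m+1) + 2 := by
      rw [show (1 + ((Real.sqrt (F (m+1) / F (m+1+1)) + 1/((↑(m+1):ℝ)+1)) + 2/F (m+1)))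
            * F (m+1)
          = F (m+1) * (Real.sqrt (F (m+1) / F (m+1+1)) + 1/((↑(m+1):ℝ)+1)) + F (m+1)
            + (2/F (m+1)) * F (m+1) by ring, div_mul_cancel₀ _ hne]
    push_cast at hrw hcast hm1 hmax2 ⊢
    linarith
  have hlower : ∀ᶠ n : ℕ in atTop, 1 ≤ (aseq F e Tf n : ℝ)/F n := by
    filter_upwards [] with n
    rw [le_div_iff₀ (hFpos n), one_mul]
    exact aseq_ge F e Tf n
  have h2F : Tendsto (fun n => 2/F n) atTop (𝓝 0) := by
    have h1 := (tendsto_F F hFpos hgrow).inv_tendsto_atTop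
    have h2 := h1.const_mul (2:ℝ)
    simp only [mul_zero] at h2
    refine h2.congr (fun n => ?_)
    simp [Pi.inv_apply, div_eq_mul_inv]
  have hσ := tendsto_sigma F hFpos hgrow
  have htend : Tendsto (fun n : ℕ =>
      1 + ((Real.sqrt (F n / F (n+1)) + 1/((n:ℝ)+1)) + 2/F n)) atTop (𝓝 1) := by
    have hz := hσ.add h2F
    simp only [add_zero] at hz
    have := (tendsto_const_nhds (x := (1:ℝ)) (f := atTop (α := ℕ))).add hz
    simpa using this
  exact tendsto_of_tendsto_of_tendsto_of_le_of_le' tendsto_const_nhds htend hlower hupper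


lemma step_halve (hFpos : ∀ n, 0 < F n) (n : ℕ)
    (hact : (proc F e Tf n).act = true)
    (hGood : GoodCond F (e (proc F e Tf n).k).2 (n+1))
    (hprev : ((proc F e Tf n).ap n : ℝ) < F (n+1)) :
    (proc F e Tf (n+1)).k = (proc F e Tf n).k + 1 ∨
      ((proc F e Tf (n+1)).act = true ∧ (proc F e Tf (n+1)).k = (proc F e Tf n).k ∧
        2 * (proc F e Tf (n+1)).G.card ≤ (proc F e Tf n).G.card) := by
  set s := proc F e Tf n with hs
  rcases nextSt_cases F e Tf n s with ⟨_, _, hk, _⟩ | ⟨_, hk, ha, hG, _⟩ |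
    ⟨hb, _, _, _, _⟩ | ⟨hb, _, _, _⟩
  · left; rw [proc_succ]; exact hk
  · right
    refine ⟨by rw [proc_succ]; exact ha, by rw [proc_succ]; exact hk, ?_⟩
    obtain ⟨av, havJ, hhalf⟩ := halving F hFpos (e s.k).1 (e s.k).2 s.G (n+1) hGood
      (s.ap n) hprev
    have hmin := pickA_min F e n s hact av havJ
    rw [proc_succ, hG]
    omega
  · rw [hb] at hact; exact absurd hact (by simp)
  · rw [hb] at hact; exact absurd hact (by simp)

lemma nextG_of_empty (ρ : ℚ) (C : ℕ) (av n : ℕ) :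
    (nextG F ρ C (∅ : Finset ℝ) av n).card = 0 := by
  rw [nextG]
  simp

lemma advance_core (hFpos : ∀ n, 0 < F n)
    (hgrow : Tendsto (fun n => F (n + 1) / F n) atTop atTop)
    (k n0 : ℕ) (h0 : k ≤ (proc F e Tf n0).k) : ∃ n, k < (proc F e Tf n).k := by
  by_contra hstuck
  push_neg at hstuck
  have hkconst : ∀ n, n0 ≤ n → (proc F e Tf n).k = k := fun n hn =>
    le_antisymm (hstuck n) (le_trans h0 (k_mono F e Tf n0 n hn))
  have e1 : ∀ᶠ n : ℕ in atTop, 100 * F n ≤ F (n+1) := by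
    filter_upwards [hgrow.eventually_ge_atTop 100] with n hn
    rw [le_div_iff₀ (hFpos n)] at hn; linarith
  obtain ⟨N3, hN3⟩ : ∃ N3, ∀ n, N3 ≤ n → GoodCond F (e k).2 n ∧
      ((aseq F e Tf n : ℝ) ≤ 4*F n) ∧ 100 * F n ≤ F (n+1) := by
    obtain ⟨T1, hT1⟩ := eventually_good F hFpos hgrow (e k).2
    obtain ⟨N2, hN2⟩ := aseq_ub F e Tf hFpos hgrow
    obtain ⟨m1, hm1⟩ := eventually_atTop.mp e1
    exact ⟨max (max T1 N2) m1, fun n hn => ⟨hT1 n (by omega), hN2 n (by omega),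
      hm1 n (by omega)⟩⟩
  set Nb := max (max n0 N3) (Tf k) with hNb
  have hNb0 : n0 ≤ Nb := by omega
  have hNb3 : N3 ≤ Nb := by omega
  have hNbT : Tf k ≤ Nb := by omega
  have hact1 : ∃ m, Nb ≤ m ∧ (proc F e Tf m).act = true := by
    by_cases h : (proc F e Tf Nb).act = true
    · exact ⟨Nb, le_rfl, h⟩
    · have hbf : (proc F e Tf Nb).act = false := by
        rcases Bool.eq_false_or_eq_true (proc F e Tf Nb).act with hh | hh
        · exact absurd hh h
        · exact hh
      rcases nextSt_cases F e Tf Nb (proc F e Tf Nb) with ⟨ha, _⟩ | ⟨ha, _⟩ |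
        ⟨_, _, _, ha, _⟩ | ⟨_, hT, _, _⟩
      · rw [hbf] at ha; exact absurd ha (by simp)
      · rw [hbf] at ha; exact absurd ha (by simp)
      · exact ⟨Nb+1, by omega, by rw [proc_succ]; exact ha⟩
      · exfalso
        apply hT
        rw [hkconst Nb hNb0]
        omega
  obtain ⟨m0, hm0, hactm0⟩ := hact1
  have main : ∀ c m, Nb ≤ m → (proc F e Tf m).act = true →
      (proc F e Tf m).G.card ≤ c → False := by
    intro c
    induction c with
    | zero =>
        intro m hm hact hc
        have hG : (proc F e Tf m).G = ∅ := Finset.card_eq_zero.mp (Nat.le_zero.mp hc)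
        rcases nextSt_cases F e Tf m (proc F e Tf m) with ⟨_, _, hk, _⟩ |
          ⟨_, _, _, hGn, hcne⟩ | ⟨hb, _⟩ | ⟨hb, _⟩
        · have h1 := hstuck (m+1)
          have h2 : (proc F e Tf m).k = k := hkconst m (by omega)
          rw [proc_succ] at h1
          omega
        · apply hcne
          rw [hGn, hG]
          exact nextG_of_empty F _ _ _ _
        · rw [hb] at hact; exact absurd hact (by simp)
        · rw [hb] at hact; exact absurd hact (by simp)
    | succ c ihc =>
        intro m hm hact hc
        have hkm : (proc F e Tf m).k = k := hkconst m (by omega)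
        have hGood : GoodCond F (e (proc F e Tf m).k).2 (m+1) := by
          rw [hkm]; exact (hN3 (m+1) (by omega)).1
        have hprev : ((proc F e Tf m).ap m : ℝ) < F (m+1) := by
          have h1 : ((aseq F e Tf m : ℕ):ℝ) ≤ 4 * F m := (hN3 m (by omega)).2.1
          have h2 : 100 * F m ≤ F (m+1) := (hN3 m (by omega)).2.2
          have h3 : (proc F e Tf m).ap m = aseq F e Tf m := rfl
          have h4 := hFpos m
          rw [h3]
          linarith
        rcases step_halve F e Tf hFpos m hact hGood hprev with h | ⟨ha', hk', hhalf⟩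
        · have h1 := hstuck (m+1)
          rw [h, hkm] at h1
          omega
        · exact ihc (m+1) (by omega) ha' (by omega)
  exact main ((proc F e Tf m0).G.card) m0 hm0 hactm0 le_rfl

lemma pair_advances (hFpos : ∀ n, 0 < F n)
    (hgrow : Tendsto (fun n => F (n + 1) / F n) atTop atTop) :
    ∀ k, ∃ n, k < (proc F e Tf n).k := by
  intro k
  induction k with
  | zero => exact advance_core F e Tf hFpos hgrow 0 0 (Nat.zero_le _)
  | succ k ihk =>
      obtain ⟨n, hn⟩ := ihk
      exact advance_core F e Tf hFpos hgrow (k+1) n hn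

lemma attain (hFpos : ∀ n, 0 < F n)
    (hgrow : Tendsto (fun n => F (n + 1) / F n) atTop atTop) (k : ℕ) :
    ∃ n, (proc F e Tf n).k = k ∧ (proc F e Tf n).act = true ∧
      (nextG F (e k).1 (e k).2 (proc F e Tf n).G
        (pickA F e n (proc F e Tf n)) (n+1)).card = 0 := by
  obtain ⟨N, hN⟩ := pair_advances F e Tf hFpos hgrow k
  classical
  have hex : ∃ n, k < (proc F e Tf n).k := ⟨N, hN⟩
  have hP1 : k < (proc F e Tf (Nat.find hex)).k := Nat.find_spec hex
  have hn1pos : Nat.find hex ≠ 0 := by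
    intro h
    have h2 : (proc F e Tf 0).k = 0 := rfl
    rw [h, h2] at hP1
    omega
  obtain ⟨m, hm⟩ : ∃ m, Nat.find hex = m + 1 := ⟨Nat.find hex - 1, by omega⟩
  have hm1 : ¬ k < (proc F e Tf m).k := Nat.find_min hex (by omega)
  have hmono := (k_mono_succ F e Tf m).2
  have hP1' : k < (proc F e Tf (m+1)).k := by rw [← hm]; exact hP1
  have hkm : (proc F e Tf m).k = k := by omega
  have hkm1 : (proc F e Tf (m+1)).k = k + 1 := by omega
  rcases nextSt_cases F e Tf m (proc F e Tf m) with ⟨hact, hc, hk, _⟩ |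
    ⟨_, hk, _⟩ | ⟨_, _, hk, _⟩ | ⟨_, _, hk, _⟩
  · refine ⟨m, hkm, hact, ?_⟩
    rw [← hkm]
    exact hc
  · rw [proc_succ, hk, hkm] at hkm1; omega
  · rw [proc_succ, hk, hkm] at hkm1; omega
  · rw [proc_succ, hk, hkm] at hkm1; omega


lemma mem_allS (b : ℕ → ℤ) (C : ℕ) (hb : ∀ n, b n ∈ digits C) (ap : ℕ → ℕ) :
    ∀ N, (∑ i ∈ Finset.range (N+1), (1:ℝ)/((ap i : ℝ) + (b i : ℝ))) ∈ allS ap C N := by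
  intro N
  induction N with
  | zero =>
      rw [Finset.sum_range_one]
      simp only [allS]
      exact Finset.mem_image_of_mem (fun d : ℤ => 1/((ap 0 : ℝ) + (d:ℝ))) (hb 0)
  | succ N ih =>
      rw [Finset.sum_range_succ]
      simp only [allS]
      exact Finset.mem_image.mpr
        ⟨(∑ i ∈ Finset.range (N+1), (1:ℝ)/((ap i : ℝ) + (b i : ℝ)), b (N+1)),
         Finset.mem_product.mpr ⟨ih, hb (N+1)⟩, rfl⟩

/-- membership invariant: if all partial sums up to now are dangerous, the current
partial sum survives in the state's finite set. -/
lemma inv_mem (b : ℕ → ℤ) (C : ℕ) (hb : ∀ n, b n ∈ digits C) (k : ℕ)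
    (hkC : (e k).2 = C) (ρ : ℚ) (hkρ : (e k).1 = ρ)
    (hbad : ∀ l, Tf k ≤ l → badP ρ (wB F l)
      (∑ i ∈ Finset.range (l+1), (1:ℝ)/((aseq F e Tf i:ℝ)+(b i:ℝ)))) :
    ∀ n, (proc F e Tf n).act = true → (proc F e Tf n).k = k →
      (∑ i ∈ Finset.range (n+1), (1:ℝ)/((aseq F e Tf i:ℝ)+(b i:ℝ))) ∈ (proc F e Tf n).G := by
  intro n
  induction n with
  | zero =>
      intro hact _
      exact absurd hact (by simp [proc])
  | succ n ih =>
      intro hact hk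
      rcases nextSt_cases F e Tf n (proc F e Tf n) with ⟨_, _, _, ha⟩ |
        ⟨hactn, hkeq, _, hG, _⟩ | ⟨hbf, hT, hkeq, _, hG⟩ | ⟨_, _, _, ha⟩
      · rw [proc_succ, ha] at hact
        exact absurd hact (by simp)
      · -- continuing active step
        have hkn : (proc F e Tf n).k = k := by
          rw [proc_succ, hkeq] at hk
          exact hk
        have hmem := ih hactn hkn
        have hTn : Tf k ≤ n := by
          have := act_thresh F e Tf n hactn
          rwa [hkn] at this
        have hbadn := hbad (n+1) (by omega)
        rw [proc_succ, hG, hkn, hkρ, hkC]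
        rw [nextG]
        apply Finset.mem_filter.mpr
        constructor
        · rw [Finset.sum_range_succ, aseq_succ]
          exact Finset.mem_image.mpr
            ⟨(∑ i ∈ Finset.range (n+1), (1:ℝ)/((aseq F e Tf i:ℝ)+(b i:ℝ)), b (n+1)),
             Finset.mem_product.mpr ⟨hmem, hb (n+1)⟩, rfl⟩
        · exact hbadn
      · -- activation step
        have hkn : (proc F e Tf n).k = k := by
          rw [proc_succ, hkeq] at hk
          exact hk
        have hbadn := hbad (n+1) (by rw [hkn] at hT; omega)
        rw [proc_succ, hG, hkn, hkρ, hkC]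
        rw [initG]
        apply Finset.mem_filter.mpr
        constructor
        · have hASm := mem_allS b C hb
            (Function.update (proc F e Tf n).ap (n+1) (pickA F e n (proc F e Tf n))) (n+1)
          have hsame : ∀ i ∈ Finset.range (n+2),
              (1:ℝ)/(((Function.update (proc F e Tf n).ap (n+1)
                  (pickA F e n (proc F e Tf n))) i : ℝ) + (b i : ℝ))
                = (1:ℝ)/((aseq F e Tf i:ℝ)+(b i:ℝ)) := by
            intro i hi
            have hi' : i ≤ n + 1 := by
              have := Finset.mem_range.mp hi
              omega
            rcases Nat.eq_or_lt_of_le hi' with h | h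
            · subst h
              rw [Function.update_self, ← aseq_succ]
            · have hne : i ≠ n + 1 := by omega
              rw [Function.update_of_ne hne, proc_ap_eq F e Tf n i (by omega)]
          rw [← Finset.sum_congr rfl hsame]
          exact hASm
        · exact hbadn
      · rw [proc_succ, ha] at hact
        exact absurd hact (by simp)

/-- the analytic fact: if the sum equals `ρ`, all late partial sums are dangerous. -/
lemma analytic_bad (hFpos : ∀ n, 0 < F n) (b : ℕ → ℤ) (C : ℕ)
    (hb : ∀ n, b n ∈ digits C) (ρ : ℚ) (T0 : ℕ)
    (hGood : ∀ n, T0 ≤ n → GoodCond F C n)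
    (hsum : (ρ:ℝ) = ∑' n, (1:ℝ)/((aseq F e Tf n:ℝ) + (b n:ℝ))) :
    ∀ N, T0 ≤ N → badP ρ (wB F N)
      (∑ i ∈ Finset.range (N+1), (1:ℝ)/((aseq F e Tf i:ℝ)+(b i:ℝ))) := by
  intro N hN
  set f : ℕ → ℝ := fun n => (1:ℝ)/((aseq F e Tf n:ℝ) + (b n:ℝ)) with hf
  -- term bounds beyond T0
  have hterm : ∀ n, T0 ≤ n → 0 < (aseq F e Tf n:ℝ) + (b n:ℝ) ∧ f n ≤ 2 / F n ∧ 0 ≤ f n := by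
    intro n hn
    obtain ⟨_, _, g3, _, _, _⟩ := hGood n hn
    have h1 : F n ≤ (aseq F e Tf n : ℝ) := aseq_ge F e Tf n
    have hbn := hb n
    simp only [digits, Finset.mem_Icc] at hbn
    have hb1 : -(C:ℝ) ≤ (b n:ℝ) := by exact_mod_cast hbn.1
    have hb2 : (b n:ℝ) ≤ (C:ℝ) := by exact_mod_cast hbn.2
    have hden : F n / 2 ≤ (aseq F e Tf n:ℝ) + (b n:ℝ) := by linarith
    have hpos : 0 < (aseq F e Tf n:ℝ) + (b n:ℝ) := by linarith [hFpos n]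
    refine ⟨hpos, ?_, le_of_lt (by positivity)⟩
    rw [hf]
    rw [div_le_div_iff₀ hpos (hFpos n)]
    linarith [hFpos n]
  -- geometric growth of F beyond N+1
  have hgeo : ∀ j : ℕ, 100^j * F (N+1) ≤ F (N+1+j) := by
    intro j
    induction j with
    | zero => simp
    | succ j ihj =>
        obtain ⟨g1, _⟩ := hGood (N+1+j) (by omega)
        have h100 : (0:ℝ) < 100 := by norm_num
        calc 100^(j+1) * F (N+1) = 100 * (100^j * F (N+1)) := by ring
          _ ≤ 100 * F (N+1+j) := by nlinarith [pow_pos h100 j, hFpos (N+1)]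
          _ ≤ F (N+1+j+1) := g1
          _ = F (N+1+(j+1)) := by ring_nf
  have hFN1 := hFpos (N+1)
  have hcomp : ∀ j : ℕ, f (j + (N+1)) ≤ (2 / F (N+1)) * (1/100)^j := by
    intro j
    have h1 : f (j + (N+1)) ≤ 2 / F (j + (N+1)) := (hterm (j + (N+1)) (by omega)).2.1
    have h2 : 100^j * F (N+1) ≤ F (N+1+j) := hgeo j
    have h3 : F (N+1+j) = F (j + (N+1)) := by ring_nf
    have hp : (0:ℝ) < 100^j := by positivity
    have h4 : (2 / F (N+1)) * (1/100)^j = 2 / (100^j * F (N+1)) := by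
      rw [div_pow, one_pow]
      field_simp
    rw [h4]
    refine le_trans h1 ?_
    apply div_le_div_of_nonneg_left (by norm_num) (by positivity) ?_
    rw [← h3]
    exact h2
  have hgeosum : Summable (fun j : ℕ => (2 / F (N+1)) * (1/100)^j) :=
    (summable_geometric_of_lt_one (by norm_num) (by norm_num)).mul_left _
  have hnn : ∀ j : ℕ, 0 ≤ f (j + (N+1)) := fun j => (hterm (j + (N+1)) (by omega)).2.2
  have htailsum : Summable (fun j : ℕ => f (j + (N+1))) :=
    Summable.of_nonneg_of_le hnn hcomp hgeosum
  have hsummable : Summable f := (summable_nat_add_iff (N+1)).mp htailsum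
  have hsplit := Summable.sum_add_tsum_nat_add (f := f) (N+1) hsummable
  -- tail bounds
  have htail_nonneg : 0 ≤ ∑' j, f (j + (N+1)) := tsum_nonneg hnn
  have htail_ub : ∑' j, f (j + (N+1)) ≤ 4 / F (N+1) := by
    have h1 : ∑' j, f (j + (N+1)) ≤ ∑' j : ℕ, (2 / F (N+1)) * (1/100)^j :=
      htailsum.tsum_le_tsum hcomp hgeosum
    have h2 : ∑' j : ℕ, (2 / F (N+1)) * (1/100)^j = (2 / F (N+1)) * (1 - 1/100)⁻¹ := by
      rw [tsum_mul_left, tsum_geometric_of_lt_one (by norm_num) (by norm_num)]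
    rw [h2] at h1
    have h3 : (2 / F (N+1)) * (1 - (1:ℝ)/100)⁻¹ ≤ 4 / F (N+1) := by
      rw [div_mul_eq_mul_div, div_le_div_iff₀ hFN1 hFN1]
      norm_num
      nlinarith [hFN1]
    linarith
  constructor
  · have : (ρ:ℝ) - ∑ i ∈ Finset.range (N+1), f i = ∑' j, f (j + (N+1)) := by
      rw [hsum, ← hsplit]
      ring
    rw [this]
    exact htail_nonneg
  · have : (ρ:ℝ) - ∑ i ∈ Finset.range (N+1), f i = ∑' j, f (j + (N+1)) := by
      rw [hsum, ← hsplit]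
      ring
    rw [this, wB]
    have h48 : (4:ℝ) / F (N+1) ≤ 8 / F (N+1) := by
      rw [div_le_div_iff₀ hFN1 hFN1]
      nlinarith [hFN1]
    linarith [htail_ub]

end Main
end S11

/-- If `F(n+1)/F(n) → ∞`, then there is a Type 3 irrationality sequence
`(a_n)` with `a_n/F(n) → 1`. -/
theorem stmt_11 (F : ℕ → ℝ) (hFpos : ∀ n, 0 < F n)
    (hgrow : Tendsto (fun n => F (n + 1) / F n) atTop atTop) :
    ∃ a : ℕ → ℕ, StrictMono a ∧ (∀ n, 0 < a n) ∧
      Tendsto (fun n => (a n : ℝ) / F n) atTop (𝓝 1) ∧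
      ∀ b : ℕ → ℤ, (∃ C : ℤ, ∀ n, |b n| ≤ C) → (∀ n, b n ≠ 0) →
        (∀ n, (a n : ℤ) + b n ≠ 0) →
        Irrational (∑' n : ℕ, (1 : ℝ) / ((a n : ℝ) + (b n : ℝ))) := by
  classical
  obtain ⟨e, he⟩ := exists_surjective_nat (ℚ × ℕ)
  set Tf : ℕ → ℕ := fun k => Classical.choose (S11.eventually_good F hFpos hgrow (e k).2)
    with hTfdef
  have hTfspec : ∀ k n, Tf k ≤ n → S11.GoodCond F (e k).2 n := fun k =>
    Classical.choose_spec (S11.eventually_good F hFpos hgrow (e k).2)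
  refine ⟨S11.aseq F e Tf, S11.aseq_smono F e Tf, S11.aseq_pos F e Tf hFpos,
    S11.aseq_ratio F e Tf hFpos hgrow, ?_⟩
  rintro b ⟨C0, hC0⟩ hb0 _ ⟨ρ, hρ⟩
  set C : ℕ := C0.toNat with hCdef
  have hbC : ∀ n, b n ∈ S11.digits C := by
    intro n
    have h1 := abs_le.mp (hC0 n)
    have h3 : C0 ≤ (C:ℤ) := Int.self_le_toNat C0
    simp only [S11.digits, Finset.mem_Icc]
    omega
  obtain ⟨k, hk⟩ := he (ρ, C)
  have hk1 : (e k).1 = ρ := by rw [hk]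
  have hk2 : (e k).2 = C := by rw [hk]
  have hGoodC : ∀ n, Tf k ≤ n → S11.GoodCond F C n := by
    intro n hn
    have := hTfspec k n hn
    rwa [hk2] at this
  have hbad := S11.analytic_bad F e Tf hFpos b C hbC ρ (Tf k) hGoodC hρ
  obtain ⟨n, hkn, hact, hc0⟩ := S11.attain F e Tf hFpos hgrow k
  have hmem := S11.inv_mem F e Tf b C hbC k hk2 ρ hk1 hbad n hact hkn
  have hTn : Tf k ≤ n := by
    have := S11.act_thresh F e Tf n hact
    rwa [hkn] at this
  have hbadn := hbad (n+1) (by omega)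
  have hfin : (∑ i ∈ Finset.range (n+2), (1:ℝ)/((S11.aseq F e Tf i:ℝ)+(b i:ℝ)))
      ∈ S11.nextG F (e k).1 (e k).2 (S11.proc F e Tf n).G
        (S11.pickA F e n (S11.proc F e Tf n)) (n+1) := by
    rw [S11.nextG]
    apply Finset.mem_filter.mpr
    constructor
    · rw [Finset.sum_range_succ, S11.aseq_succ]
      rw [hk2]
      exact Finset.mem_image.mpr
        ⟨(∑ i ∈ Finset.range (n+1), (1:ℝ)/((S11.aseq F e Tf i:ℝ)+(b i:ℝ)), b (n+1)),
         Finset.mem_product.mpr ⟨hmem, hbC (n+1)⟩, rfl⟩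
    · rw [hk1]
      exact hbadn
  rw [Finset.card_eq_zero] at hc0
  rw [hc0] at hfin
  exact absurd hfin (Finset.notMem_empty _)
end

section
/- Let d ∈ ℕ and let V : ℝ^d → ℝ^d be the linear map with matrix (j^{−i−1})_{1≤i,j≤d}, and let v_d = ∏_{1≤i<j≤d} (j − i). Then V is invertible and the image V(ℤ^d) contains the lattice v_d ℤ^d. -/
/-!
With `D = diag((j + 1)^(d + 1))`, the matrix `V * D` has entries `(j + 1)^(d - 1 - i)`: it is the
transposed Vandermonde matrix of the integer nodes `1, …, d` with its rows reversed, so it is an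
integer matrix `M` with `det M = ±v_d ≠ 0`. Cramer's rule over `ℤ` solves `M z = v_d y`, and then
`x = D z` is an integer vector with `V x = v_d y`.
-/

open Matrix Finset

namespace Matrix

variable {n R : Type*} [Fintype n] [DecidableEq n] [CommRing R]

theorem exists_mulVec_eq_smul_of_det_dvd (M : Matrix n n R) {c : R} (hc : M.det ∣ c)
    (y : n → R) : ∃ z, M *ᵥ z = c • y := by
  obtain ⟨k, rfl⟩ := hc
  exact ⟨cramer M (k • y), by rw [mulVec_cramer, smul_smul]⟩

variable {V : Matrix n n R} {M : Matrix n n ℤ} {D : n → ℤ}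

theorem det_ne_zero_of_mul_diagonal_eq_map [CharZero R]
    (hVD : V * diagonal (fun j => (D j : R)) = M.map (↑)) (hM : M.det ≠ 0) : V.det ≠ 0 := by
  intro hV
  have : ((M.det : ℤ) : R) = 0 := by
    simpa [← hVD, hV] using (Int.castRingHom R).map_det M
  exact hM (by exact_mod_cast this)

theorem exists_int_mulVec_eq_of_mul_diagonal_eq_map
    (hVD : V * diagonal (fun j => (D j : R)) = M.map (↑)) {c : ℤ} (hc : M.det ∣ c)
    (y : n → ℤ) : ∃ x : n → ℤ, V *ᵥ (fun k => (x k : R)) = fun k => ((c * y k : ℤ) : R) := by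
  obtain ⟨z, hz⟩ := M.exists_mulVec_eq_smul_of_det_dvd hc y
  refine ⟨fun k => D k * z k, ?_⟩
  have hx : (fun k => ((D k * z k : ℤ) : R)) = diagonal (fun j => (D j : R)) *ᵥ (Int.cast ∘ z) := by
    ext k
    simp [mulVec_diagonal]
  ext k
  rw [hx, mulVec_mulVec, hVD]
  simpa [hz] using ((Int.castRingHom R).map_mulVec M z k).symm

theorem det_vandermonde_eq_prod_filter_lt {d : ℕ} (v : Fin d → R) :
    (vandermonde v).det =
      ∏ p ∈ univ.filter (fun p : Fin d × Fin d => p.1 < p.2), (v p.2 - v p.1) := by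
  rw [det_vandermonde, prod_filter, ← univ_product_univ, prod_product]
  refine prod_congr rfl fun i _ => ?_
  rw [← prod_filter]
  congr 1
  ext j
  simp

theorem mul_diagonal_pow_eq_map_vandermonde {K : Type*} [Field K] [CharZero K] {d : ℕ}
    (a : Fin d → ℤ) (ha : ∀ j, a j ≠ 0) {V : Matrix (Fin d) (Fin d) K}
    (hV : ∀ i j, V i j = ((a j : K))⁻¹ ^ ((i : ℕ) + 2)) :
    V * diagonal (fun j => ((a j ^ (d + 1) : ℤ) : K)) =
      ((vandermonde a)ᵀ.submatrix Fin.revPerm id).map (↑) := by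
  ext i j
  have hexp : d + 1 = ((i : ℕ) + 2) + (d - (i + 1)) := by omega
  rw [mul_diagonal, hV, Int.cast_pow, hexp, pow_add _ ((i : ℕ) + 2), inv_pow,
    inv_mul_cancel_left₀ (pow_ne_zero _ (Int.cast_ne_zero.2 (ha j)))]
  simp [vandermonde_apply, Fin.val_rev]

end Matrix

/-- The Vandermonde-type matrix `V = (j^{-i-1})_{1 ≤ i,j ≤ d}` is invertible,
and `V(ℤ^d)` contains `v_d ℤ^d` with `v_d = ∏_{i<j} (j - i)`. -/
theorem stmt_14 (d : ℕ) (V : Matrix (Fin d) (Fin d) ℝ)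
    (hV : ∀ i j, V i j = (((j : ℕ) + 1 : ℝ))⁻¹ ^ ((i : ℕ) + 2)) :
    V.det ≠ 0 ∧
    ∀ y : Fin d → ℤ, ∃ x : Fin d → ℤ,
      V.mulVec (fun k => (x k : ℝ)) =
        fun k => (((∏ p ∈ Finset.univ.filter
            (fun p : Fin d × Fin d => p.1 < p.2),
            ((p.2 : ℕ) - (p.1 : ℕ) : ℤ)) * y k : ℤ) : ℝ) := by
  rw [← det_vandermonde_eq_prod_filter_lt fun j : Fin d => ((j : ℕ) : ℤ)]
  set a : Fin d → ℤ := fun j => (j : ℕ) + 1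
  have hV' : ∀ i j, V i j = ((a j : ℝ))⁻¹ ^ ((i : ℕ) + 2) := fun i j => by
    rw [hV]; push_cast [a]; rfl
  have hVD := mul_diagonal_pow_eq_map_vandermonde a (fun j => by positivity) hV'
  have hdet : ((vandermonde a)ᵀ.submatrix Fin.revPerm id).det =
      Equiv.Perm.sign (Fin.revPerm (n := d)) * (vandermonde fun j : Fin d => ((j : ℕ) : ℤ)).det := by
    rw [det_permute, det_transpose, det_vandermonde_add, Int.cast_id]
  have hc : (vandermonde fun j : Fin d => ((j : ℕ) : ℤ)).det ≠ 0 :=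
    det_vandermonde_ne_zero_iff.2 fun i j h => Fin.ext (by exact_mod_cast h)
  refine ⟨det_ne_zero_of_mul_diagonal_eq_map hVD ?_,
    exists_int_mulVec_eq_of_mul_diagonal_eq_map hVD ?_⟩
  · rw [hdet]
    exact mul_ne_zero (Units.ne_zero _) hc
  · rw [hdet]
    exact Units.mul_left_dvd.2 dvd_rfl
end

section
/- Let (x_n) be a nonincreasing sequence of positive reals with ∑_n x_n < ∞, and suppose ∑_{k>n} x_k ≥ x_n for every n ≥ 1. Then the set { ∑_n ε_n x_n : (ε_n) ∈ {0,1}^ℕ } equals the closed interval [0, ∑_n x_n]. -/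
/-!
Given `y ∈ [0, ∑ x_n]`, run the greedy algorithm: take `x_n` whenever it does not overshoot
`y`. The partial sums `s_n` stay below `y`, and the tail condition keeps
`y ≤ s_n + ∑_{k ≥ n} x_k`: a skipped term satisfies `y < s_n + x_n ≤ s_n + ∑_{k > n} x_k`.
Since the tails tend to `0`, `s_n → y`.
-/

open Filter Topology

lemma tsum_ite_mem_Icc {ι : Type*} {x : ι → ℝ} (hx : ∀ i, 0 ≤ x i) (hsum : Summable x)
    (ε : ι → Bool) : ∑' i, (if ε i then x i else 0) ∈ Set.Icc 0 (∑' i, x i) := by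
  have hle : ∀ i, (if ε i then x i else 0) ≤ x i := fun i => by split <;> simp [hx i]
  have hnonneg : ∀ i, 0 ≤ (if ε i then x i else 0) := fun i => by split <;> simp [hx i]
  exact ⟨tsum_nonneg hnonneg,
    (hsum.of_nonneg_of_le hnonneg hle).tsum_le_tsum hle hsum⟩

noncomputable def greedySum (x : ℕ → ℝ) (y : ℝ) : ℕ → ℝ
  | 0 => 0
  | n + 1 => greedySum x y n + if greedySum x y n + x n ≤ y then x n else 0

noncomputable def greedyChoice (x : ℕ → ℝ) (y : ℝ) (n : ℕ) : Bool :=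
  decide (greedySum x y n + x n ≤ y)

section Greedy

variable {x : ℕ → ℝ} {y : ℝ}

lemma greedySum_succ (n : ℕ) :
    greedySum x y (n + 1) = greedySum x y n + if greedyChoice x y n then x n else 0 := by
  simp [greedySum, greedyChoice]

lemma sum_range_greedyChoice (n : ℕ) :
    ∑ k ∈ Finset.range n, (if greedyChoice x y k then x k else 0) = greedySum x y n := by
  induction n with
  | zero => rfl
  | succ n ih => rw [Finset.sum_range_succ, ih, greedySum_succ]

lemma greedySum_le (hy : 0 ≤ y) (n : ℕ) : greedySum x y n ≤ y := by
  induction n with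
  | zero => exact hy
  | succ n ih =>
    rw [greedySum_succ]
    by_cases h : greedySum x y n + x n ≤ y
    · simp [greedyChoice, h]
    · simpa [greedyChoice, h] using ih

lemma le_greedySum_add_tsum (hsum : Summable x) (htail : ∀ n, x n ≤ ∑' k, x (n + 1 + k))
    (hy : y ≤ ∑' n, x n) (n : ℕ) : y ≤ greedySum x y n + ∑' k, x (k + n) := by
  induction n with
  | zero => simpa [greedySum] using hy
  | succ n ih =>
    have hsplit : ∑' k, x (k + n) = x n + ∑' k, x (k + (n + 1)) := by
      rw [((summable_nat_add_iff n).2 hsum).tsum_eq_zero_add, zero_add]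
      simp only [add_right_comm _ 1 n, add_assoc]
    have htail' : x n ≤ ∑' k, x (k + (n + 1)) := by
      simpa only [add_comm (n + 1)] using htail n
    rw [greedySum_succ]
    by_cases h : greedyChoice x y n
    · simp only [h, if_true]
      linarith
    · have h' : y < greedySum x y n + x n := by simpa [greedyChoice] using h
      simp only [h, Bool.false_eq_true, if_false]
      linarith

lemma tendsto_greedySum (hsum : Summable x) (htail : ∀ n, x n ≤ ∑' k, x (n + 1 + k))
    (hy : y ∈ Set.Icc 0 (∑' n, x n)) : Tendsto (greedySum x y) atTop (𝓝 y) := by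
  have hlower : Tendsto (fun n => y - ∑' k, x (k + n)) atTop (𝓝 y) := by
    simpa using tendsto_const_nhds.sub (tendsto_sum_nat_add x)
  exact tendsto_of_tendsto_of_tendsto_of_le_of_le hlower tendsto_const_nhds
    (fun n => by linarith [le_greedySum_add_tsum hsum htail hy.2 n]) (greedySum_le hy.1)

lemma hasSum_greedyChoice (hx : ∀ n, 0 ≤ x n) (hsum : Summable x)
    (htail : ∀ n, x n ≤ ∑' k, x (n + 1 + k)) (hy : y ∈ Set.Icc 0 (∑' n, x n)) :
    HasSum (fun n => if greedyChoice x y n then x n else 0) y := by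
  rw [hasSum_iff_tendsto_nat_of_nonneg (fun n => by split <;> simp [hx n])]
  simpa only [sum_range_greedyChoice] using tendsto_greedySum hsum htail hy

end Greedy

theorem stmt_19_general (x : ℕ → ℝ) (hpos : ∀ n, 0 < x n)
    (hsum : Summable x)
    (htail : ∀ n, x n ≤ ∑' k : ℕ, x (n + 1 + k)) :
    {y : ℝ | ∃ ε : ℕ → Bool, y = ∑' n : ℕ, (if ε n then x n else 0)}
      = Set.Icc 0 (∑' n : ℕ, x n) := by
  have hx : ∀ n, 0 ≤ x n := fun n => (hpos n).le
  ext y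
  constructor
  · rintro ⟨ε, rfl⟩
    exact tsum_ite_mem_Icc hx hsum ε
  · intro hy
    exact ⟨greedyChoice x y, (hasSum_greedyChoice hx hsum htail hy).tsum_eq.symm⟩

/-- Kakeya's criterion: if `(x_n)` is nonincreasing, positive, summable and
`∑_{k>n} x_k ≥ x_n` for every `n`, then the achievement set of subseries sums
is the full interval `[0, ∑_n x_n]`. -/
theorem stmt_19 (x : ℕ → ℝ) (hpos : ∀ n, 0 < x n)
    (hmono : ∀ n, x (n + 1) ≤ x n) (hsum : Summable x)
    (htail : ∀ n, x n ≤ ∑' k : ℕ, x (n + 1 + k)) :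
    {y : ℝ | ∃ ε : ℕ → Bool, y = ∑' n : ℕ, (if ε n then x n else 0)}
      = Set.Icc 0 (∑' n : ℕ, x n) :=
  stmt_19_general x hpos hsum htail
end
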